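/- arXiv:2308.16653 — 6 statements merged into one kernel-verified Lean document; each statement's English description precedes it below -/
import Mathlib

section
/- The number of regions of the type D Coxeter arrangement in R^n (hyperplanes x_i = x_j and x_i = -x_j for 1 ≤ i < j ≤ n, with n ≥ 2) is 2^{n-1} · n!. -/
open Set

namespace TypeDProof

variable {n : ℕ}

/-- The complement of the type D arrangement. -/
def S (n : ℕ) : Set (Fin n → ℝ) :=
  {y | ∀ i j : Fin n, i < j → y i ≠ y j ∧ y i ≠ - y j}

/-- The open chamber (sign cell) determined by a point `x`. -/
def Cell (x : Fin n → ℝ) : Set (Fin n → ℝ) :=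
  {y | ∀ i j : Fin n, i < j →
    0 < (x i - x j) * (y i - y j) ∧ 0 < (x i + x j) * (y i + y j)}

lemma mem_S_iff_sq {y : Fin n → ℝ} :
    y ∈ S n ↔ ∀ i j : Fin n, i ≠ j → (y i) ^ 2 ≠ (y j) ^ 2 := by
  constructor
  · intro h i j hij hsq
    rcases hij.lt_or_gt with hlt | hlt
    · obtain ⟨h1, h2⟩ := h i j hlt
      rcases mul_self_eq_mul_self_iff.mp (by nlinarith : y i * y i = y j * y j) with h3 | h3
      exacts [h1 h3, h2 h3]
    · obtain ⟨h1, h2⟩ := h j i hlt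
      rcases mul_self_eq_mul_self_iff.mp (by nlinarith : y j * y j = y i * y i) with h3 | h3
      exacts [h1 h3, h2 h3]
  · intro h i j hij
    refine ⟨fun he => h i j (ne_of_lt hij) (by rw [he]), fun he => h i j (ne_of_lt hij) ?_⟩
    rw [he]; ring

lemma cell_subset (x : Fin n → ℝ) : Cell x ⊆ S n := by
  intro y hy i j hij
  obtain ⟨h1, h2⟩ := hy i j hij
  constructor
  · intro he; rw [he, sub_self, mul_zero] at h1; exact lt_irrefl 0 h1
  · intro he; rw [he, neg_add_cancel, mul_zero] at h2; exact lt_irrefl 0 h2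

lemma mem_cell_self {x : Fin n → ℝ} (hx : x ∈ S n) : x ∈ Cell x := by
  intro i j hij
  obtain ⟨h1, h2⟩ := hx i j hij
  refine ⟨mul_self_pos.mpr (sub_ne_zero.mpr h1), mul_self_pos.mpr fun h => h2 ?_⟩
  linarith [h]

lemma cell_open (x : Fin n → ℝ) : IsOpen (Cell x) := by
  have hEq : Cell x = ⋂ (i : Fin n), ⋂ (j : Fin n),
      {y : Fin n → ℝ | i < j →
        0 < (x i - x j) * (y i - y j) ∧ 0 < (x i + x j) * (y i + y j)} := by
    ext y; simp [Cell, Set.mem_iInter]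
  rw [hEq]
  refine isOpen_iInter_of_finite fun i => isOpen_iInter_of_finite fun j => ?_
  by_cases h : i < j
  · simp only [h, true_implies]
    have h1 : IsOpen {y : Fin n → ℝ | 0 < (x i - x j) * (y i - y j)} :=
      isOpen_lt continuous_const
        (continuous_const.mul ((continuous_apply i).sub (continuous_apply j)))
    have h2 : IsOpen {y : Fin n → ℝ | 0 < (x i + x j) * (y i + y j)} :=
      isOpen_lt continuous_const
        (continuous_const.mul ((continuous_apply i).add (continuous_apply j)))
    exact h1.inter h2
  · simp only [h, false_implies, setOf_true]
    exact isOpen_univ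

lemma pos_combo {a b P Q : ℝ} (ha : 0 ≤ a) (hb : 0 ≤ b) (hab : a + b = 1)
    (hP : 0 < P) (hQ : 0 < Q) : 0 < a * P + b * Q := by
  rcases eq_or_lt_of_le ha with h | h
  · have hb1 : b = 1 := by linarith
    rw [← h, hb1]; simpa using hQ
  · nlinarith [mul_nonneg hb hQ.le]

lemma cell_convex (x : Fin n → ℝ) : Convex ℝ (Cell x) := by
  intro y hy z hz a b ha hb hab
  intro i j hij
  obtain ⟨hy1, hy2⟩ := hy i j hij
  obtain ⟨hz1, hz2⟩ := hz i j hij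
  constructor
  · have h := pos_combo ha hb hab hy1 hz1
    have e : (x i - x j) * ((a • y + b • z) i - (a • y + b • z) j)
        = a * ((x i - x j) * (y i - y j)) + b * ((x i - x j) * (z i - z j)) := by
      simp only [Pi.add_apply, Pi.smul_apply, smul_eq_mul]; ring
    linarith [e ▸ h]
  · have h := pos_combo ha hb hab hy2 hz2
    have e : (x i + x j) * ((a • y + b • z) i + (a • y + b • z) j)
        = a * ((x i + x j) * (y i + y j)) + b * ((x i + x j) * (z i + z j)) := by
      simp only [Pi.add_apply, Pi.smul_apply, smul_eq_mul]; ring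
    linarith [e ▸ h]

lemma sign_trans {p q r s : ℝ} (h1 : 0 < p * r) (h2 : 0 < q * r) (h3 : 0 < p * s) :
    0 < q * s := by
  nlinarith [mul_pos (mul_pos h1 h2) h3, sq_nonneg (p * r), sq_nonneg p, sq_nonneg r]

lemma cell_eq_of_mem {x y z : Fin n → ℝ} (hzx : z ∈ Cell x) (hzy : z ∈ Cell y) :
    Cell x = Cell y := by
  ext w
  constructor <;> intro hw i j hij
  · obtain ⟨a1, a2⟩ := hzx i j hij
    obtain ⟨b1, b2⟩ := hzy i j hij
    obtain ⟨c1, c2⟩ := hw i j hij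
    exact ⟨sign_trans a1 b1 c1, sign_trans a2 b2 c2⟩
  · obtain ⟨a1, a2⟩ := hzx i j hij
    obtain ⟨b1, b2⟩ := hzy i j hij
    obtain ⟨c1, c2⟩ := hw i j hij
    exact ⟨sign_trans b1 a1 c1, sign_trans b2 a2 c2⟩

lemma component_eq_cell {x : Fin n → ℝ} (hx : x ∈ S n) :
    connectedComponentIn (S n) x = Cell x := by
  apply Subset.antisymm
  · have hK : IsPreconnected (connectedComponentIn (S n) x) := isPreconnected_connectedComponentIn
    set U : Set (Fin n → ℝ) := ⋃ y ∈ S n \ Cell x, Cell y with hU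
    have hUopen : IsOpen U := isOpen_biUnion fun y _ => cell_open y
    have hdisj : Disjoint (Cell x) U := by
      rw [Set.disjoint_left]
      intro z hz hzU
      simp only [hU, mem_iUnion, exists_prop] at hzU
      obtain ⟨y, hy, hzy⟩ := hzU
      exact hy.2 (by rw [cell_eq_of_mem hz hzy]; exact mem_cell_self hy.1)
    have hsub : connectedComponentIn (S n) x ⊆ Cell x ∪ U := by
      intro z hz
      have hzS := connectedComponentIn_subset (S n) x hz
      by_cases h : z ∈ Cell x
      · exact Or.inl h
      · exact Or.inr (mem_biUnion ⟨hzS, h⟩ (mem_cell_self hzS))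
    exact hK.subset_left_of_subset_union (cell_open x) hUopen hdisj hsub
      ⟨x, mem_connectedComponentIn hx, mem_cell_self hx⟩
  · exact (cell_convex x).isPreconnected.subset_connectedComponentIn (mem_cell_self hx)
      (cell_subset x)

variable [NeZero n]

/-- Canonical point of a chamber indexed by a signed permutation. -/
noncomputable def q (σ : Equiv.Perm (Fin n)) (ε : {i : Fin n // i ≠ 0} → Bool) :
    Fin n → ℝ :=
  fun i => if h : σ.symm i = 0 then 0
    else (if ε ⟨σ.symm i, h⟩ then 1 else -1) * ((σ.symm i : ℕ) : ℝ)

lemma q_sq (σ : Equiv.Perm (Fin n)) (ε : {i : Fin n // i ≠ 0} → Bool) (i : Fin n) :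
    (q σ ε i) ^ 2 = ((σ.symm i : ℕ) : ℝ) ^ 2 := by
  unfold q
  by_cases h : σ.symm i = 0
  · simp [h]
  · rw [dif_neg h]
    split_ifs <;> ring

lemma q_pos_iff (σ : Equiv.Perm (Fin n)) (ε : {i : Fin n // i ≠ 0} → Bool) (i : Fin n)
    (h : σ.symm i ≠ 0) : (0 < q σ ε i ↔ ε ⟨σ.symm i, h⟩ = true) := by
  have hpos : (0 : ℝ) < ((σ.symm i : ℕ) : ℝ) := by
    have h0 : (σ.symm i : ℕ) ≠ 0 := by
      intro hh
      exact h (by ext; simpa using hh)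
    exact_mod_cast Nat.pos_of_ne_zero h0
  unfold q
  rw [dif_neg h]
  cases hε : ε ⟨σ.symm i, h⟩
  · rw [if_neg Bool.false_ne_true]
    constructor
    · intro hc; exfalso; nlinarith
    · intro hc; exact absurd hc Bool.false_ne_true
  · rw [if_pos rfl, one_mul]
    exact iff_of_true hpos rfl

lemma q_zero (σ : Equiv.Perm (Fin n)) (ε : {i : Fin n // i ≠ 0} → Bool) :
    q σ ε (σ 0) = 0 := by
  unfold q
  simp

lemma q_mem_S (σ : Equiv.Perm (Fin n)) (ε : {i : Fin n // i ≠ 0} → Bool) :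
    q σ ε ∈ S n := by
  rw [mem_S_iff_sq]
  intro i j hij hsq
  rw [q_sq, q_sq] at hsq
  have h1 : ((σ.symm i : ℕ) ^ 2 : ℕ) = (σ.symm j : ℕ) ^ 2 := by exact_mod_cast hsq
  have h2 : (σ.symm i : ℕ) = (σ.symm j : ℕ) :=
    Nat.pow_left_injective (by norm_num) h1
  exact hij (by simpa using σ.symm.injective (Fin.ext h2))

lemma cross_pos {a b a' b' : ℝ} (h : a ^ 2 < b ^ 2) (h' : a' ^ 2 < b' ^ 2)
    (hb : 0 < b ↔ 0 < b') :
    0 < (a - b) * (a' - b') ∧ 0 < (a + b) * (a' + b') := by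
  rcases lt_trichotomy 0 b with hbpos | hbzero | hbneg
  · have hb' : 0 < b' := hb.mp hbpos
    have h1 : a - b < 0 := by nlinarith
    have h2 : 0 < a + b := by nlinarith
    have h1' : a' - b' < 0 := by nlinarith
    have h2' : 0 < a' + b' := by nlinarith
    exact ⟨mul_pos_of_neg_of_neg h1 h1', mul_pos h2 h2'⟩
  · exfalso; nlinarith [sq_nonneg a]
  · have hb' : b' < 0 := by
      rcases lt_trichotomy 0 b' with h0 | h0 | h0
      · exact absurd (hb.mpr h0) (by linarith)
      · exfalso; nlinarith [sq_nonneg a']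
      · exact h0
    have h1 : 0 < a - b := by nlinarith
    have h2 : a + b < 0 := by nlinarith
    have h1' : 0 < a' - b' := by nlinarith
    have h2' : a' + b' < 0 := by nlinarith
    exact ⟨mul_pos h1 h1', mul_pos_of_neg_of_neg h2 h2'⟩

lemma mem_cell_of_compat {x p : Fin n → ℝ} (hx : x ∈ S n)
    (hc : ∀ i j : Fin n, (x i) ^ 2 < (x j) ^ 2 →
      (p i) ^ 2 < (p j) ^ 2 ∧ (0 < x j ↔ 0 < p j)) :
    p ∈ Cell x := by
  intro i j hij
  have hne : (x i) ^ 2 ≠ (x j) ^ 2 := mem_S_iff_sq.mp hx i j (ne_of_lt hij)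
  rcases hne.lt_or_gt with h | h
  · obtain ⟨h1, h2⟩ := hc i j h
    exact cross_pos h h1 h2
  · obtain ⟨h1, h2⟩ := hc j i h
    obtain ⟨c1, c2⟩ := cross_pos h h1 h2
    constructor
    · nlinarith [c1]
    · nlinarith [c2]

lemma exists_canonical {x : Fin n → ℝ} (hx : x ∈ S n) :
    ∃ (σ : Equiv.Perm (Fin n)) (ε : {i : Fin n // i ≠ 0} → Bool),
      Cell x = Cell (q σ ε) := by
  classical
  set g : Fin n → ℝ := fun i => (x i) ^ 2 with hg
  set σ := Tuple.sort g with hσ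
  have hginj : Function.Injective g := by
    intro i j h
    by_contra hne
    exact mem_S_iff_sq.mp hx i j hne h
  have hmono : StrictMono (g ∘ σ) :=
    (Tuple.monotone_sort g).strictMono_of_injective (hginj.comp σ.injective)
  have horder : ∀ i j : Fin n, g i < g j ↔ σ.symm i < σ.symm j := by
    intro i j
    have h2 := hmono.lt_iff_lt (a := σ.symm i) (b := σ.symm j)
    simpa [Function.comp] using h2
  set ε : {i : Fin n // i ≠ 0} → Bool := fun k => decide (0 < x (σ k.1)) with hε
  refine ⟨σ, ε, ?_⟩
  have hqS : q σ ε ∈ S n := q_mem_S σ ε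
  have hmem : q σ ε ∈ Cell x := by
    apply mem_cell_of_compat hx
    intro i j hlt
    have hij : σ.symm i < σ.symm j := (horder i j).mp hlt
    have hjne : σ.symm j ≠ 0 := by
      intro h0
      rw [h0] at hij
      simp [Fin.lt_def] at hij
    constructor
    · rw [q_sq, q_sq]
      have hnat : (σ.symm i : ℕ) < (σ.symm j : ℕ) := hij
      have hcast : ((σ.symm i : ℕ) : ℝ) < ((σ.symm j : ℕ) : ℝ) := by exact_mod_cast hnat
      exact pow_lt_pow_left₀ hcast (Nat.cast_nonneg _) (by norm_num)
    · rw [q_pos_iff σ ε j hjne]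
      simp [hε, σ.apply_symm_apply]
  exact cell_eq_of_mem hmem (mem_cell_self hqS)

lemma rank_lt_iff {a b a' b' : ℝ} (ha : 0 ≤ a) (hb : 0 ≤ b) (ha' : 0 ≤ a') (hb' : 0 ≤ b')
    (h : 0 < (a ^ 2 - b ^ 2) * (a' ^ 2 - b' ^ 2)) : (a < b ↔ a' < b') := by
  have key : ∀ u v u' v' : ℝ, 0 ≤ u → 0 ≤ v → 0 ≤ u' → 0 ≤ v' →
      0 < (u ^ 2 - v ^ 2) * (u' ^ 2 - v' ^ 2) → u < v → u' < v' := by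
    intro u v u' v' hu hv hu' hv' hh hlt
    have h1 : u ^ 2 < v ^ 2 := by nlinarith
    have h2 : u' ^ 2 < v' ^ 2 := by nlinarith
    nlinarith
  exact ⟨key a b a' b' ha hb ha' hb' h,
    key a' b' a b ha' hb' ha hb (by nlinarith) ⟩

lemma canonical_inj {σ σ' : Equiv.Perm (Fin n)} {ε ε' : {i : Fin n // i ≠ 0} → Bool}
    (h : Cell (q σ ε) = Cell (q σ' ε')) : σ = σ' ∧ ε = ε' := by
  set p := q σ ε with hp
  set p' := q σ' ε' with hp'
  have hmem : p' ∈ Cell p := h ▸ mem_cell_self (q_mem_S σ' ε')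
  have hsq : ∀ i j : Fin n, i ≠ j →
      0 < ((p i) ^ 2 - (p j) ^ 2) * ((p' i) ^ 2 - (p' j) ^ 2) := by
    intro i j hij
    rcases hij.lt_or_gt with hlt | hlt
    · obtain ⟨c1, c2⟩ := hmem i j hlt
      nlinarith [mul_pos c1 c2]
    · obtain ⟨c1, c2⟩ := hmem j i hlt
      nlinarith [mul_pos c1 c2]
  have hord : ∀ i j : Fin n, σ.symm i < σ.symm j ↔ σ'.symm i < σ'.symm j := by
    intro i j
    rcases eq_or_ne i j with rfl | hij
    · simp
    · have h1 := hsq i j hij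
      rw [q_sq, q_sq, q_sq, q_sq] at h1
      have h2 := rank_lt_iff (Nat.cast_nonneg _) (Nat.cast_nonneg _)
        (Nat.cast_nonneg _) (Nat.cast_nonneg _) h1
      constructor
      · intro hlt
        have : ((σ.symm i : ℕ) : ℝ) < ((σ.symm j : ℕ) : ℝ) := by exact_mod_cast hlt
        have := h2.mp this
        exact_mod_cast this
      · intro hlt
        have : ((σ'.symm i : ℕ) : ℝ) < ((σ'.symm j : ℕ) : ℝ) := by exact_mod_cast hlt
        have := h2.mpr this
        exact_mod_cast this
  have hw : StrictMono (fun k => σ'.symm (σ k)) := by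
    intro k l hkl
    have h5 : σ.symm (σ k) < σ.symm (σ l) := by simpa using hkl
    exact (hord (σ k) (σ l)).mp h5
  haveI : WellFoundedLT (Fin n) := inferInstance
  have hri := StrictMono.range_inj (β := Fin n) (γ := Fin n)
    (f := fun k => σ'.symm (σ k)) (g := id) hw strictMono_id
  have hid : (fun k => σ'.symm (σ k)) = id := by
    apply hri.mp
    rw [Set.range_id]
    exact Set.range_eq_univ.mpr (σ'.symm.surjective.comp σ.surjective)
  have hsymm : ∀ i, σ.symm i = σ'.symm i := by
    intro i
    have h6 := congrFun hid (σ.symm i)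
    simpa using h6.symm
  have hσ : σ = σ' := by
    ext i
    have h3 : σ' (σ.symm (σ i)) = σ' (σ'.symm (σ i)) := by rw [hsymm (σ i)]
    have h4 : σ i = σ' i := by simpa using h3.symm
    exact congrArg Fin.val h4
  refine ⟨hσ, ?_⟩
  subst hσ
  funext k
  obtain ⟨kv, hk⟩ := k
  set i := σ kv with hi
  have hii : σ.symm i = kv := σ.symm_apply_apply kv
  have hne : i ≠ σ 0 := fun hc => hk (σ.injective hc)
  have hprod : 0 < p i * p' i := by
    rcases hne.lt_or_gt with hlt | hlt
    · have := (hmem i (σ 0) hlt).1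
      rw [hp, hp', q_zero, q_zero] at this
      nlinarith [this]
    · have := (hmem (σ 0) i hlt).1
      rw [hp, hp', q_zero, q_zero] at this
      nlinarith [this]
  have hkne : σ.symm i ≠ 0 := by rw [hii]; exact hk
  have hiff : (0 < p i ↔ 0 < p' i) := by
    constructor <;> intro hpos <;> nlinarith
  rw [hp, hp'] at hiff
  rw [q_pos_iff σ ε i hkne, q_pos_iff σ ε' i hkne] at hiff
  have heq : ε ⟨σ.symm i, hkne⟩ = ε' ⟨σ.symm i, hkne⟩ := by
    cases hε1 : ε ⟨σ.symm i, hkne⟩ <;> cases hε2 : ε' ⟨σ.symm i, hkne⟩ <;>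
      simp_all
  have hkk : (⟨σ.symm i, hkne⟩ : {i : Fin n // i ≠ 0}) = ⟨kv, hk⟩ := Subtype.ext hii
  rw [hkk] at heq
  exact heq

end TypeDProof

/-- The number of regions of the type D Coxeter arrangement in ℝⁿ
(hyperplanes `x i = x j`, `x i = -x j` for `i < j`, with `n ≥ 2`) is `2^(n-1) · n!`. -/
theorem typeD_arrangement_regions (n : ℕ) (hn : 2 ≤ n) :
    Set.ncard {C : Set (Fin n → ℝ) |
      ∃ x ∈ {y : Fin n → ℝ | ∀ i j : Fin n, i < j → y i ≠ y j ∧ y i ≠ - y j},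
      C = connectedComponentIn
        {y : Fin n → ℝ | ∀ i j : Fin n, i < j → y i ≠ y j ∧ y i ≠ - y j} x} =
    2 ^ (n - 1) * n.factorial := by
  classical
  haveI : NeZero n := ⟨by omega⟩
  open TypeDProof in
  show Set.ncard {C : Set (Fin n → ℝ) |
      ∃ x ∈ S n, C = connectedComponentIn (S n) x} = 2 ^ (n - 1) * n.factorial
  have h1 : {C : Set (Fin n → ℝ) | ∃ x ∈ TypeDProof.S n,
        C = connectedComponentIn (TypeDProof.S n) x}
      = Set.range (fun d : Equiv.Perm (Fin n) × ({i : Fin n // i ≠ 0} → Bool) =>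
          TypeDProof.Cell (TypeDProof.q d.1 d.2)) := by
    ext C
    simp only [Set.mem_setOf_eq, Set.mem_range]
    constructor
    · rintro ⟨x, hx, rfl⟩
      obtain ⟨σ, ε, hc⟩ := TypeDProof.exists_canonical hx
      exact ⟨(σ, ε), by rw [TypeDProof.component_eq_cell hx, hc]⟩
    · rintro ⟨⟨σ, ε⟩, rfl⟩
      exact ⟨TypeDProof.q σ ε, TypeDProof.q_mem_S σ ε,
        (TypeDProof.component_eq_cell (TypeDProof.q_mem_S σ ε)).symm⟩
  rw [h1]
  have hinj : Function.Injective
      (fun d : Equiv.Perm (Fin n) × ({i : Fin n // i ≠ 0} → Bool) =>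
        TypeDProof.Cell (TypeDProof.q d.1 d.2)) := by
    rintro ⟨σ, ε⟩ ⟨σ', ε'⟩ hc
    obtain ⟨e1, e2⟩ := TypeDProof.canonical_inj hc
    simp only [Prod.mk.injEq]
    exact ⟨e1, e2⟩
  rw [← Set.image_univ, Set.ncard_image_of_injective _ hinj, Set.ncard_univ,
    Nat.card_eq_fintype_card, Fintype.card_prod, Fintype.card_perm, Fintype.card_fin]
  have hcard : Fintype.card ({i : Fin n // i ≠ 0} → Bool) = 2 ^ (n - 1) := by
    rw [Fintype.card_fun, Fintype.card_bool]
    congr 1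
    rw [Fintype.card_subtype_compl, Fintype.card_subtype_eq, Fintype.card_fin]
  rw [hcard, Nat.mul_comm]
end

section
/- The number of regions of the arrangement in R^n consisting of the braid hyperplanes x_i = x_j (1 ≤ i < j ≤ n) together with the coordinate hyperplanes x_i = 0 (i ∈ [n]) is (n+1)!. -/
open Function Set

namespace BraidBoolAux

variable {n : ℕ}

/-- Extend `x : Fin n → ℝ` to `Fin (n+1) → ℝ` by prepending `0`. -/
def g (x : Fin n → ℝ) : Fin (n + 1) → ℝ := Fin.cons 0 x

/-- The candidate region attached to a permutation `σ`. -/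
def P (σ : Equiv.Perm (Fin (n + 1))) : Set (Fin n → ℝ) :=
  {x | StrictMono (g x ∘ σ)}

/-- The complement of the arrangement. -/
def S (n : ℕ) : Set (Fin n → ℝ) :=
  {y | (∀ i, y i ≠ 0) ∧ ∀ i j : Fin n, i < j → y i ≠ y j}

lemma mem_S_iff {x : Fin n → ℝ} : x ∈ S n ↔ Injective (g x) := by
  rw [g, Fin.cons_injective_iff]
  constructor
  · rintro ⟨h0, hd⟩
    refine ⟨?_, ?_⟩
    · rintro ⟨i, hi⟩
      exact h0 i hi
    · intro i j hij
      by_contra hne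
      rcases lt_trichotomy i j with h | h | h
      · exact hd i j h hij
      · exact hne h
      · exact hd j i h hij.symm
  · rintro ⟨h0, hinj⟩
    refine ⟨fun i hi => h0 ⟨i, hi⟩, fun i j hij h => hij.ne (hinj h)⟩

lemma continuous_g (j : Fin (n + 1)) : Continuous fun x : Fin n → ℝ => g x j := by
  induction j using Fin.cases with
  | zero => simpa only [g, Fin.cons_zero] using continuous_const
  | succ i => simpa only [g, Fin.cons_succ] using continuous_apply i

lemma isOpen_P (σ : Equiv.Perm (Fin (n + 1))) : IsOpen (P σ) := by
  have h : P σ = ⋂ i : Fin n, {x : Fin n → ℝ | g x (σ i.castSucc) < g x (σ i.succ)} := by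
    ext x
    simp only [P, mem_setOf_eq, Fin.strictMono_iff_lt_succ, Function.comp_apply, mem_iInter]
  rw [h]
  exact isOpen_iInter_of_finite fun i =>
    isOpen_lt (continuous_g (σ i.castSucc)) (continuous_g (σ i.succ))

lemma convex_P (σ : Equiv.Perm (Fin (n + 1))) : Convex ℝ (P σ) := by
  intro x hx y hy a b ha hb hab
  have hg : ∀ j, g (a • x + b • y) j = a * g x j + b * g y j := by
    intro j
    induction j using Fin.cases with
    | zero => simp [g]
    | succ i => simp [g]
  intro i j hij
  have hxij := hx hij
  have hyij := hy hij
  simp only [Function.comp_apply, hg] at *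
  have hapos : 0 < a ∨ 0 < b := by
    by_contra hc
    push_neg at hc
    nlinarith [hc.1, hc.2]
  rcases hapos with ha' | hb'
  · have h1 : a * g x (σ i) < a * g x (σ j) := mul_lt_mul_of_pos_left hxij ha'
    have h2 : b * g y (σ i) ≤ b * g y (σ j) := mul_le_mul_of_nonneg_left hyij.le hb
    linarith
  · have h1 : a * g x (σ i) ≤ a * g x (σ j) := mul_le_mul_of_nonneg_left hxij.le ha
    have h2 : b * g y (σ i) < b * g y (σ j) := mul_lt_mul_of_pos_left hyij hb'
    linarith

lemma nonempty_P (σ : Equiv.Perm (Fin (n + 1))) : (P σ).Nonempty := by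
  refine ⟨fun i => ((σ.symm i.succ : ℕ) : ℝ) - ((σ.symm 0 : ℕ) : ℝ), ?_⟩
  have hg : ∀ j, g (fun i => ((σ.symm i.succ : ℕ) : ℝ) - ((σ.symm 0 : ℕ) : ℝ)) j =
      ((σ.symm j : ℕ) : ℝ) - ((σ.symm 0 : ℕ) : ℝ) := by
    intro j
    induction j using Fin.cases with
    | zero => simp [g]
    | succ i => simp [g]
  intro i j hij
  simp only [Function.comp_apply, hg, Equiv.symm_apply_apply]
  have h : (i : ℕ) < (j : ℕ) := hij
  have : ((i : ℕ) : ℝ) < ((j : ℕ) : ℝ) := by exact_mod_cast h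
  linarith

lemma P_subset_S (σ : Equiv.Perm (Fin (n + 1))) : P σ ⊆ S n := by
  intro x hx
  rw [mem_S_iff]
  have hinj : Injective (g x ∘ σ) := (hx : StrictMono _).injective
  have : g x = (g x ∘ σ) ∘ σ.symm := by
    funext j; simp
  rw [this]
  exact hinj.comp σ.symm.injective

lemma eq_of_mem_P {σ τ : Equiv.Perm (Fin (n + 1))} {x : Fin n → ℝ}
    (hσ : x ∈ P σ) (hτ : x ∈ P τ) : σ = τ := by
  have hinj : Injective (g x) := mem_S_iff.mp (P_subset_S σ hσ)
  have hrange : range (g x ∘ σ) = range (g x ∘ τ) := by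
    rw [range_comp, range_comp, Equiv.range_eq_univ, Equiv.range_eq_univ]
  have hsσ : StrictMono (g x ∘ σ) := hσ
  have hsτ : StrictMono (g x ∘ τ) := hτ
  have W : WellFoundedLT (Fin (n + 1)) := inferInstance
  have heq : g x ∘ σ = g x ∘ τ :=
    @Set.range_injOn_strictMono (Fin (n+1)) ℝ _ _ W _ hsσ _ hsτ hrange
  ext i
  exact Fin.val_eq_of_eq (hinj (congrFun heq i))

lemma exists_P {x : Fin n → ℝ} (hx : x ∈ S n) : ∃ σ, x ∈ P σ := by
  have hinj := mem_S_iff.mp hx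
  exact ⟨Tuple.sort (g x),
    (Tuple.monotone_sort (g x)).strictMono_of_injective
      (hinj.comp (Tuple.sort (g x)).injective)⟩

lemma comp_eq {σ : Equiv.Perm (Fin (n + 1))} {x : Fin n → ℝ} (hx : x ∈ P σ) :
    connectedComponentIn (S n) x = P σ := by
  refine Subset.antisymm ?_
    (((convex_P σ).isPreconnected).subset_connectedComponentIn hx (P_subset_S σ))
  intro y hy
  by_contra hyP
  obtain ⟨τ, hτ⟩ := exists_P (connectedComponentIn_subset _ _ hy)
  have hne : τ ≠ σ := fun h => hyP (h ▸ hτ)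
  have hU : IsOpen (P σ) := isOpen_P σ
  have hV : IsOpen (⋃ τ' ∈ {τ' : Equiv.Perm (Fin (n+1)) | τ' ≠ σ}, P τ') :=
    isOpen_biUnion fun _ _ => isOpen_P _
  have hC := isPreconnected_connectedComponentIn (x := x) (F := S n)
  have hsub : connectedComponentIn (S n) x ⊆
      P σ ∪ ⋃ τ' ∈ {τ' : Equiv.Perm (Fin (n+1)) | τ' ≠ σ}, P τ' := by
    intro z hz
    obtain ⟨ρ, hρ⟩ := exists_P (connectedComponentIn_subset _ _ hz)
    by_cases h : ρ = σ
    · exact Or.inl (h ▸ hρ)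
    · exact Or.inr (mem_biUnion h hρ)
  have h1 : (connectedComponentIn (S n) x ∩ P σ).Nonempty :=
    ⟨x, mem_connectedComponentIn (P_subset_S σ hx), hx⟩
  have h2 : (connectedComponentIn (S n) x ∩
      ⋃ τ' ∈ {τ' : Equiv.Perm (Fin (n+1)) | τ' ≠ σ}, P τ').Nonempty :=
    ⟨y, hy, mem_biUnion hne hτ⟩
  obtain ⟨z, _, hzU, hzV⟩ := hC _ _ hU hV hsub h1 h2
  simp only [mem_iUnion, mem_setOf_eq] at hzV
  obtain ⟨τ', hτ'ne, hzτ'⟩ := hzV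
  exact hτ'ne (eq_of_mem_P hzτ' hzU)

end BraidBoolAux

open BraidBoolAux in
/-- The number of regions of the arrangement in ℝⁿ consisting of the braid
hyperplanes `x i = x j` (`i < j`) together with the coordinate hyperplanes
`x i = 0` is `(n+1)!`. -/
theorem braid_boolean_arrangement_regions (n : ℕ) :
    Set.ncard {C : Set (Fin n → ℝ) |
      ∃ x ∈ {y : Fin n → ℝ | (∀ i, y i ≠ 0) ∧ ∀ i j : Fin n, i < j → y i ≠ y j},
      C = connectedComponentIn
        {y : Fin n → ℝ | (∀ i, y i ≠ 0) ∧ ∀ i j : Fin n, i < j → y i ≠ y j} x} =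
    (n + 1).factorial := by
  classical
  show Set.ncard {C : Set (Fin n → ℝ) | ∃ x ∈ S n, C = connectedComponentIn (S n) x} =
    (n + 1).factorial
  have hset : {C : Set (Fin n → ℝ) | ∃ x ∈ S n, C = connectedComponentIn (S n) x} =
      Set.range (P (n := n)) := by
    ext C
    constructor
    · rintro ⟨x, hx, rfl⟩
      obtain ⟨σ, hσ⟩ := exists_P hx
      exact ⟨σ, (comp_eq hσ).symm⟩
    · rintro ⟨σ, rfl⟩
      obtain ⟨x, hx⟩ := nonempty_P σ
      exact ⟨x, P_subset_S σ hx, (comp_eq hx).symm⟩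
  have hinjP : Injective (P (n := n)) := by
    intro σ τ h
    obtain ⟨x, hx⟩ := nonempty_P σ
    exact eq_of_mem_P hx (h ▸ hx)
  rw [hset, ← Set.image_univ, Set.ncard_image_of_injective _ hinjP, Set.ncard_univ,
    Nat.card_eq_fintype_card, Fintype.card_perm, Fintype.card_fin]
end

section
/- The number of lattice paths with steps U = (1,1) and D = (1,-1), starting at the origin, of length 2n, that never fall below the x-axis, is binom(2n, n). -/
/-!
Encode a path by the word `b : Fin m → Bool` of its steps (`true` for an up-step) and let
`G m j = #(ballotPathsAtLeast m j)` count the ballot paths of length `m` with at least `j`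
up-steps. If `m ≤ 2j + 1`, the last step of a path counted by `G (m + 1) (j + 1)` is unconstrained
once its prefix has enough up-steps, because the prefix then ends at height at least
`2j + 1 - m ≥ 0`; splitting off that step gives Pascal's rule
`G (m + 1) (j + 1) = G m j + G m (j + 1)`. Together with `G (2j + 1) j = G (2j + 1) (j + 1)`
(no path of odd length ends at height `0`) this yields `G m j = C(m, j)` for `m ≤ 2j`. A ballot
path of length `2n` has at least `n` up-steps, so there are `G (2n) n = C(2n, n)` of them.
-/

open Finset

theorem Finset.card_filter_snoc {α : Type*} [Fintype α] {m : ℕ}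
    (P : (Fin (m + 1) → α) → Prop) [DecidablePred P] :
    #{b | P b} = ∑ x, #{c : Fin m → α | P (Fin.snoc c x)} := by
  simp only [card_filter]
  rw [← Fintype.sum_equiv (Fin.snocEquiv fun _ => α) _ _ (fun _ => rfl), Fintype.sum_prod_type]
  rfl

namespace LatticePath

variable {m : ℕ}

def partialSum (f : Fin m → ℤ) (k : ℕ) : ℤ :=
  ∑ i ∈ univ.filter (fun i : Fin m => (i : ℕ) < k), f i

def IsBallot (f : Fin m → ℤ) : Prop := ∀ k, 0 ≤ partialSum f k

theorem partialSum_of_le (f : Fin m → ℤ) {k : ℕ} (hk : m ≤ k) : partialSum f k = ∑ i, f i := by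
  rw [partialSum, filter_true_of_mem fun i _ => i.isLt.trans_le hk]

theorem partialSum_snoc (f : Fin m → ℤ) (a : ℤ) (k : ℕ) :
    partialSum (Fin.snoc f a) k = partialSum f k + if m < k then a else 0 := by
  simp only [partialSum, sum_filter, Fin.sum_univ_castSucc, Fin.snoc_castSucc, Fin.val_castSucc,
    Fin.snoc_last, Fin.val_last]

theorem isBallot_snoc_iff (f : Fin m → ℤ) (a : ℤ) :
    IsBallot (Fin.snoc f a) ↔ IsBallot f ∧ 0 ≤ ∑ i, f i + a := by
  simp only [IsBallot, partialSum_snoc]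
  constructor
  · intro h
    refine ⟨fun k => ?_, ?_⟩
    · rcases le_or_gt k m with hk | hk
      · simpa [hk.not_gt] using h k
      · simpa [partialSum_of_le f hk.le, partialSum_of_le f le_rfl] using h m
    · simpa [partialSum_of_le f m.le_succ] using h (m + 1)
  · rintro ⟨hf, ha⟩ k
    split_ifs with hk
    · rwa [partialSum_of_le f hk.le]
    · simpa using hf k

def step (x : Bool) : ℤ := if x then 1 else -1

def ups (b : Fin m → Bool) : ℕ := ∑ i, (b i).toNat

theorem ups_snoc (b : Fin m → Bool) (x : Bool) : ups (Fin.snoc b x) = ups b + x.toNat := by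
  simp [ups, Fin.sum_univ_castSucc]

theorem sum_step (b : Fin m → Bool) : ∑ i, step (b i) = 2 * (ups b : ℤ) - m := by
  have h : ∀ x, step x = 2 * (x.toNat : ℤ) - 1 := by decide
  simp [h, ups, mul_sum]

theorem step_injective : Function.Injective step := by decide

theorem isBallot_step_snoc_iff (b : Fin m → Bool) (x : Bool) :
    IsBallot (step ∘ Fin.snoc b x) ↔ IsBallot (step ∘ b) ∧ 0 ≤ 2 * (ups b : ℤ) - m + step x := by
  rw [Fin.comp_snoc, isBallot_snoc_iff, Function.comp_def, sum_step]

theorem le_two_mul_ups_of_isBallot {b : Fin m → Bool} (hb : IsBallot (step ∘ b)) :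
    m ≤ 2 * ups b := by
  have := hb m
  rw [partialSum_of_le _ le_rfl, Function.comp_def, sum_step] at this
  omega

open scoped Classical in
noncomputable def ballotPathsAtLeast (m j : ℕ) : Finset (Fin m → Bool) :=
  {b | IsBallot (step ∘ b) ∧ j ≤ ups b}

theorem card_ballotPathsAtLeast_succ {j : ℕ} (hm : m ≤ 2 * j + 1) :
    #(ballotPathsAtLeast (m + 1) (j + 1)) =
      #(ballotPathsAtLeast m j) + #(ballotPathsAtLeast m (j + 1)) := by
  rw [ballotPathsAtLeast, card_filter_snoc, Fintype.sum_bool]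
  congr 1 <;> congr 1 <;> ext b <;>
    simp only [ballotPathsAtLeast, mem_filter, mem_univ, true_and, isBallot_step_snoc_iff,
      ups_snoc, step, Bool.toNat_true, Bool.toNat_false, if_true, Bool.false_eq_true, if_false,
      and_assoc] <;>
    exact and_congr_right' (by omega)

theorem ballotPathsAtLeast_odd (j : ℕ) :
    ballotPathsAtLeast (2 * j + 1) j = ballotPathsAtLeast (2 * j + 1) (j + 1) := by
  ext b
  simp only [ballotPathsAtLeast, mem_filter, mem_univ, true_and]
  refine and_congr_right fun hb => ?_
  have := le_two_mul_ups_of_isBallot hb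
  omega

theorem card_ballotPathsAtLeast {j : ℕ} (hj : m ≤ 2 * j) :
    #(ballotPathsAtLeast m j) = m.choose j := by
  induction m generalizing j with
  | zero => cases j <;> simp [ballotPathsAtLeast, IsBallot, partialSum, ups]
  | succ m ih =>
    obtain ⟨j, rfl⟩ : ∃ i, j = i + 1 := Nat.exists_eq_succ_of_ne_zero (by omega)
    rw [card_ballotPathsAtLeast_succ (by omega), ih (j := j + 1) (by omega), Nat.choose_succ_succ]
    rcases (by omega : m ≤ 2 * j ∨ m = 2 * j + 1) with hm | rfl
    · rw [ih hm]
    · rw [ballotPathsAtLeast_odd, ih (by omega), Nat.choose_symm_half]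

theorem natCard_isBallot_step (m : ℕ) :
    Nat.card {b : Fin m → Bool // IsBallot (step ∘ b)} = m.choose ((m + 1) / 2) := by
  classical
  rw [Nat.card_eq_fintype_card, Fintype.card_subtype, ← card_ballotPathsAtLeast (by omega)]
  congr 1
  ext b
  simp only [ballotPathsAtLeast, mem_filter, mem_univ, true_and, iff_self_and]
  intro hb
  have := le_two_mul_ups_of_isBallot hb
  omega

theorem natCard_isBallot_pmOne :
    Nat.card {f : Fin m → ℤ // (∀ i, f i = 1 ∨ f i = -1) ∧ IsBallot f} =
      Nat.card {b : Fin m → Bool // IsBallot (step ∘ b)} := by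
  refine (Nat.card_congr (Equiv.ofBijective
    (fun b => ⟨step ∘ b.1, fun i => by cases b.1 i <;> simp [step], b.2⟩) ⟨?_, ?_⟩)).symm
  · exact fun b c h => Subtype.ext (step_injective.comp_left (congrArg Subtype.val h))
  · rintro ⟨f, hf, hball⟩
    have hb : step ∘ (fun i => decide (f i = 1)) = f := by
      funext i
      rcases hf i with h | h <;> simp [step, h]
    exact ⟨⟨fun i => decide (f i = 1), by rwa [hb]⟩, Subtype.ext hb⟩

end LatticePath

open LatticePath in
/-- The number of lattice paths with steps `+1` and `-1`, of length `2n`,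
starting at the origin, that never fall below the x-axis, is `C(2n, n)`. -/
theorem ballot_paths_count (n : ℕ) :
    Nat.card {f : Fin (2 * n) → ℤ //
      (∀ i, f i = 1 ∨ f i = -1) ∧
      ∀ k : ℕ, 0 ≤ ∑ i ∈ Finset.univ.filter (fun i : Fin (2 * n) => (i : ℕ) < k), f i} =
    Nat.choose (2 * n) n :=
  calc _ = Nat.card {b : Fin (2 * n) → Bool // IsBallot (step ∘ b)} := natCard_isBallot_pmOne
    _ = (2 * n).choose ((2 * n + 1) / 2) := natCard_isBallot_step _
    _ = (2 * n).choose n := by rw [show (2 * n + 1) / 2 = n by omega]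
end

section
/- The number of regions of the type C Catalan arrangement in R^n, given by the hyperplanes 2x_i ∈ {-2,-1,0}, x_i + x_j ∈ {-2,-1,0}, and x_i - x_j ∈ {-1,0,1} for 1 ≤ i < j ≤ n, is 2^n · n! · binom(2n, n). -/
open Finset

namespace TypeCRegions

/-! ## Basic setup -/

variable {n : ℕ}

/-- The 2n affine values attached to a point `y`: `y i` and `-1 - y i`. -/
def cc (y : Fin n → ℝ) (p : Fin n × Bool) : ℝ := if p.2 then -1 - y p.1 else y p.1

/-- The complement of the arrangement, in pairwise-difference form. -/
def SS (n : ℕ) : Set (Fin n → ℝ) :=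
  {y | ∀ p q : Fin n × Bool, p ≠ q → cc y p - cc y q ∉ ({-1, 0, 1} : Set ℝ)}

/-- The set in the theorem statement. -/
def SS' (n : ℕ) : Set (Fin n → ℝ) :=
  {y : Fin n → ℝ |
    (∀ i, 2 * y i ∉ ({-2, -1, 0} : Set ℝ)) ∧
    ∀ i j : Fin n, i < j →
      y i + y j ∉ ({-2, -1, 0} : Set ℝ) ∧ y i - y j ∉ ({-1, 0, 1} : Set ℝ)}


lemma notmem_triple {a : ℝ} : a ∉ ({-1, 0, 1} : Set ℝ) ↔ a ≠ -1 ∧ a ≠ 0 ∧ a ≠ 1 := by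
  simp [Set.mem_insert_iff, Set.mem_singleton_iff]

lemma notmem_triple' {a : ℝ} : a ∉ ({-2, -1, 0} : Set ℝ) ↔ a ≠ -2 ∧ a ≠ -1 ∧ a ≠ 0 := by
  simp [Set.mem_insert_iff, Set.mem_singleton_iff]

lemma pos4 {r : ℝ} (hr : r ∉ ({-1, 0, 1} : Set ℝ)) :
    r < -1 ∨ (-1 < r ∧ r < 0) ∨ (0 < r ∧ r < 1) ∨ 1 < r := by
  rw [notmem_triple] at hr
  obtain ⟨h1, h2, h3⟩ := hr
  rcases lt_trichotomy r (-1) with h | h | h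
  · exact Or.inl h
  · exact absurd h h1
  rcases lt_trichotomy r 0 with h' | h' | h'
  · exact Or.inr (Or.inl ⟨h, h'⟩)
  · exact absurd h' h2
  rcases lt_trichotomy r 1 with h'' | h'' | h''
  · exact Or.inr (Or.inr (Or.inl ⟨h', h''⟩))
  · exact absurd h'' h3
  · exact Or.inr (Or.inr (Or.inr h''))

@[simp] lemma cc_false (y : Fin n → ℝ) (i : Fin n) : cc y (i, false) = y i := rfl
@[simp] lemma cc_true (y : Fin n → ℝ) (i : Fin n) : cc y (i, true) = -1 - y i := rfl

lemma SS_eq_SS' (n : ℕ) : SS n = SS' n := by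
  ext y
  constructor
  · intro h
    refine ⟨fun i => ?_, fun i j hij => ⟨?_, ?_⟩⟩
    · have := h (i, false) (i, true) (by simp)
      rw [notmem_triple] at this
      rw [notmem_triple']
      simp only [cc_false, cc_true] at this
      refine ⟨?_, ?_, ?_⟩ <;> intro hc <;> [exact this.1 (by linarith);
        exact this.2.1 (by linarith); exact this.2.2 (by linarith)]
    · have := h (i, false) (j, true) (by simp [Fin.ne_of_lt hij])
      rw [notmem_triple] at this
      rw [notmem_triple']
      simp only [cc_false, cc_true] at this
      refine ⟨?_, ?_, ?_⟩ <;> intro hc <;> [exact this.1 (by linarith);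
        exact this.2.1 (by linarith); exact this.2.2 (by linarith)]
    · have := h (i, false) (j, false) (by simp [Fin.ne_of_lt hij])
      simpa using this
  · rintro ⟨h1, h2⟩ ⟨i, bi⟩ ⟨j, bj⟩ hpq
    have key : ∀ i j : Fin n, i ≠ j → y i + y j ∉ ({-2, -1, 0} : Set ℝ) := by
      intro i j hij
      rcases lt_or_gt_of_ne hij with h | h
      · exact (h2 i j h).1
      · have := (h2 j i h).1
        rw [notmem_triple'] at this ⊢
        refine ⟨?_, ?_, ?_⟩ <;> intro hc <;> [exact this.1 (by linarith);
          exact this.2.1 (by linarith); exact this.2.2 (by linarith)]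
    have keyd : ∀ i j : Fin n, i ≠ j → y i - y j ∉ ({-1, 0, 1} : Set ℝ) := by
      intro i j hij
      rcases lt_or_gt_of_ne hij with h | h
      · exact (h2 i j h).2
      · have := (h2 j i h).2
        rw [notmem_triple] at this ⊢
        refine ⟨?_, ?_, ?_⟩ <;> intro hc <;> [exact this.2.2 (by linarith);
          exact this.2.1 (by linarith); exact this.1 (by linarith)]
    match bi, bj with
    | false, false =>
      have hij : i ≠ j := by simpa using hpq
      simpa using keyd i j hij
    | false, true =>
      by_cases hij : i = j
      · subst hij
        have := h1 i
        rw [notmem_triple'] at this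
        rw [notmem_triple]
        simp only [cc_false, cc_true]
        refine ⟨?_, ?_, ?_⟩ <;> intro hc <;> [exact this.1 (by linarith);
          exact this.2.1 (by linarith); exact this.2.2 (by linarith)]
      · have := key i j hij
        rw [notmem_triple'] at this
        rw [notmem_triple]
        simp only [cc_false, cc_true]
        refine ⟨?_, ?_, ?_⟩ <;> intro hc <;> [exact this.1 (by linarith);
          exact this.2.1 (by linarith); exact this.2.2 (by linarith)]
    | true, false =>
      by_cases hij : i = j
      · subst hij
        have := h1 i
        rw [notmem_triple'] at this
        rw [notmem_triple]
        simp only [cc_false, cc_true]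
        refine ⟨?_, ?_, ?_⟩ <;> intro hc <;> [exact this.2.2 (by linarith);
          exact this.2.1 (by linarith); exact this.1 (by linarith)]
      · have := key i j hij
        rw [notmem_triple'] at this
        rw [notmem_triple]
        simp only [cc_false, cc_true]
        refine ⟨?_, ?_, ?_⟩ <;> intro hc <;> [exact this.2.2 (by linarith);
          exact this.2.1 (by linarith); exact this.1 (by linarith)]
    | true, true =>
      have hij : i ≠ j := by simpa using hpq
      have := keyd j i (Ne.symm hij)
      rw [notmem_triple] at this
      rw [notmem_triple]
      simp only [cc_false, cc_true]
      refine ⟨?_, ?_, ?_⟩ <;> intro hc <;> [exact this.1 (by linarith);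
        exact this.2.1 (by linarith); exact this.2.2 (by linarith)]

/-- Combinatorial data of a point. -/
noncomputable def dd (y : Fin n → ℝ) : (Fin n × Bool) → (Fin n × Bool) → Bool × Bool :=
  fun p q => (decide (cc y p < cc y q), decide (cc y p + 1 < cc y q))

/-! ## Topology: components are the fibers of `dd` -/

/-- The open interval of `ℝ \ {-1,0,1}` containing `r`. -/
def JJ (r : ℝ) : Set ℝ :=
  if r < -1 then Set.Iio (-1) else if r < 0 then Set.Ioo (-1) 0
  else if r < 1 then Set.Ioo 0 1 else Set.Ioi 1

lemma JJ_self {r : ℝ} (hr : r ∉ ({-1, 0, 1} : Set ℝ)) : r ∈ JJ r := by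
  rcases pos4 hr with h | ⟨h, h'⟩ | ⟨h, h'⟩ | h <;> unfold JJ <;> split_ifs <;>
    first
      | exact Set.mem_Iio.mpr (by linarith)
      | exact Set.mem_Ioo.mpr ⟨by linarith, by linarith⟩
      | exact Set.mem_Ioi.mpr (by linarith)
      | linarith

lemma JJ_sub {r s : ℝ} (hs : s ∈ JJ r) : s ∉ ({-1, 0, 1} : Set ℝ) := by
  rw [notmem_triple]
  unfold JJ at hs
  split_ifs at hs <;>
    simp only [Set.mem_Iio, Set.mem_Ioo, Set.mem_Ioi] at hs <;>
    refine ⟨?_, ?_, ?_⟩ <;> intro hc <;> first | linarith | linarith [hs.1, hs.2]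

lemma JJ_convex (r : ℝ) : Convex ℝ (JJ r) := by
  unfold JJ
  split_ifs <;> first | exact convex_Iio _ | exact convex_Ioo _ _ | exact convex_Ioi _

lemma JJ_uIcc {r s : ℝ} (hr : r ∉ ({-1, 0, 1} : Set ℝ)) (hs : s ∉ ({-1, 0, 1} : Set ℝ))
    (h : s ∉ JJ r) : ∃ z ∈ ({-1, 0, 1} : Set ℝ), z ∈ Set.uIcc r s := by
  have hmem : ∀ z : ℝ, z = -1 ∨ z = 0 ∨ z = 1 → z ∈ ({-1, 0, 1} : Set ℝ) := by
    intro z hz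
    simpa [Set.mem_insert_iff, Set.mem_singleton_iff] using hz
  rcases pos4 hr with h1 | ⟨h1, h2⟩ | ⟨h1, h2⟩ | h1 <;>
    rcases pos4 hs with g1 | ⟨g1, g2⟩ | ⟨g1, g2⟩ | g1
  all_goals (
    first
    | (exfalso; apply h; unfold JJ; split_ifs <;>
        first
          | exact Set.mem_Iio.mpr (by linarith)
          | exact Set.mem_Ioo.mpr ⟨by linarith, by linarith⟩
          | exact Set.mem_Ioi.mpr (by linarith)
          | linarith)
    | exact ⟨-1, hmem _ (Or.inl rfl), by rw [Set.mem_uIcc]; first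
        | exact Or.inl ⟨by linarith, by linarith⟩
        | exact Or.inr ⟨by linarith, by linarith⟩⟩
    | exact ⟨0, hmem _ (Or.inr (Or.inl rfl)), by rw [Set.mem_uIcc]; first
        | exact Or.inl ⟨by linarith, by linarith⟩
        | exact Or.inr ⟨by linarith, by linarith⟩⟩
    | exact ⟨1, hmem _ (Or.inr (Or.inr rfl)), by rw [Set.mem_uIcc]; first
        | exact Or.inl ⟨by linarith, by linarith⟩
        | exact Or.inr ⟨by linarith, by linarith⟩⟩)

lemma JJ_iff {r s : ℝ} (hr : r ∉ ({-1, 0, 1} : Set ℝ)) (hs : s ∉ ({-1, 0, 1} : Set ℝ)) :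
    s ∈ JJ r ↔ ((s < 0 ↔ r < 0) ∧ (s < -1 ↔ r < -1) ∧ (1 < s ↔ 1 < r)) := by
  rcases pos4 hr with h1 | ⟨h1, h2⟩ | ⟨h1, h2⟩ | h1 <;>
    rcases pos4 hs with g1 | ⟨g1, g2⟩ | ⟨g1, g2⟩ | g1 <;>
    unfold JJ <;> split_ifs <;>
    simp only [Set.mem_Iio, Set.mem_Ioo, Set.mem_Ioi] <;>
    constructor <;> intro hh <;>
    first
      | (refine ⟨?_, ?_, ?_⟩ <;> constructor <;> intro <;> linarith)
      | linarith
      | (exact ⟨by linarith, by linarith⟩)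
      | (exfalso; rcases hh with ⟨u, v, w⟩; first
          | linarith [u.mp (by linarith)]
          | linarith [u.mpr (by linarith)]
          | linarith [v.mp (by linarith)]
          | linarith [v.mpr (by linarith)]
          | linarith [w.mp (by linarith)]
          | linarith [w.mpr (by linarith)])

/-- The fiber of a point. -/
def FF (y₀ : Fin n → ℝ) : Set (Fin n → ℝ) :=
  {y | ∀ p q : Fin n × Bool, p ≠ q → cc y p - cc y q ∈ JJ (cc y₀ p - cc y₀ q)}

lemma cc_cont (p : Fin n × Bool) : Continuous (fun y : Fin n → ℝ => cc y p) := by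
  obtain ⟨i, b⟩ := p
  cases b
  · simpa [cc] using continuous_apply i
  · simpa [cc] using (show Continuous (fun y : Fin n → ℝ => (-1:ℝ) - y i) from
      continuous_const.sub (continuous_apply i))

lemma cc_combo {a b : ℝ} (hab : a + b = 1) (y₁ y₂ : Fin n → ℝ) (p : Fin n × Bool) :
    cc (a • y₁ + b • y₂) p = a * cc y₁ p + b * cc y₂ p := by
  obtain ⟨i, bb⟩ := p
  have ha : a = 1 - b := by linarith
  cases bb <;> simp [cc, ha] <;> ring

lemma fiber_eq {y₀ : Fin n → ℝ} (hy₀ : y₀ ∈ SS n) :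
    connectedComponentIn (SS n) y₀ = FF y₀ := by
  have hFsub : FF y₀ ⊆ SS n := fun y hy p q hpq => JJ_sub (hy p q hpq)
  have hy₀F : y₀ ∈ FF y₀ := fun p q hpq => JJ_self (hy₀ p q hpq)
  have hconv : Convex ℝ (FF y₀) := by
    intro y₁ h₁ y₂ h₂ a b ha hb hab p q hpq
    have e : cc (a • y₁ + b • y₂) p - cc (a • y₁ + b • y₂) q
        = a * (cc y₁ p - cc y₁ q) + b * (cc y₂ p - cc y₂ q) := by
      rw [cc_combo hab, cc_combo hab]; ring
    rw [e]
    exact JJ_convex _ (h₁ p q hpq) (h₂ p q hpq) ha hb hab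
  apply subset_antisymm
  · intro y hyK p q hpq
    have hgc : Continuous (fun z : Fin n → ℝ => cc z p - cc z q) := (cc_cont p).sub (cc_cont q)
    have hK : IsPreconnected (connectedComponentIn (SS n) y₀) :=
      isPreconnected_connectedComponentIn
    have himg := hK.image _ hgc.continuousOn
    have hKS := connectedComponentIn_subset (SS n) y₀
    have hy₀K : y₀ ∈ connectedComponentIn (SS n) y₀ := mem_connectedComponentIn hy₀
    by_contra hcon
    obtain ⟨z, hz, hzu⟩ := JJ_uIcc (hy₀ p q hpq) (hKS hyK p q hpq) hcon
    have hzi : z ∈ (fun z : Fin n → ℝ => cc z p - cc z q) '' connectedComponentIn (SS n) y₀ :=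
      himg.ordConnected.uIcc_subset ⟨y₀, hy₀K, rfl⟩ ⟨y, hyK, rfl⟩ hzu
    obtain ⟨y', hy', hy'z⟩ := hzi
    apply hKS hy' p q hpq
    show cc y' p - cc y' q ∈ ({-1, 0, 1} : Set ℝ)
    rw [show cc y' p - cc y' q = z from hy'z]
    exact hz
  · exact hconv.isPreconnected.subset_connectedComponentIn hy₀F hFsub

lemma mem_FF_iff_dd {y₀ y₁ : Fin n → ℝ} (hy₀ : y₀ ∈ SS n) (hy₁ : y₁ ∈ SS n) :
    y₁ ∈ FF y₀ ↔ dd y₁ = dd y₀ := by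
  constructor
  · intro h
    funext p q
    by_cases hpq : p = q
    · subst hpq
      have e : ∀ y : Fin n → ℝ, dd y p p = (false, false) := by
        intro y
        refine Prod.ext ?_ ?_ <;> simp only [dd] <;>
          rw [decide_eq_false_iff_not] <;> intro hc <;> linarith
      rw [e, e]
    · have h1 := h p q hpq
      have hr := hy₀ p q hpq
      have hs := JJ_sub h1
      rw [JJ_iff hr hs] at h1
      obtain ⟨u1, u2, u3⟩ := h1
      refine Prod.ext ?_ ?_ <;> simp only [dd] <;> rw [decide_eq_decide] <;>
        constructor <;> intro hlt <;>
        first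
          | linarith [u1.mp (by linarith)]
          | linarith [u1.mpr (by linarith)]
          | linarith [u2.mp (by linarith)]
          | linarith [u2.mpr (by linarith)]
  · intro h p q hpq
    have hr := hy₀ p q hpq
    have hs := hy₁ p q hpq
    have e1 := congrFun (congrFun h p) q
    have e2 := congrFun (congrFun h q) p
    obtain ⟨a1, a2⟩ := Prod.ext_iff.mp e1
    obtain ⟨b1, b2⟩ := Prod.ext_iff.mp e2
    simp only [dd] at a1 a2 b1 b2
    rw [decide_eq_decide] at a1 a2 b1 b2
    rw [JJ_iff hr hs]
    refine ⟨?_, ?_, ?_⟩ <;> constructor <;> intro <;>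
      first
        | linarith [a1.mp (by linarith)]
        | linarith [a1.mpr (by linarith)]
        | linarith [a2.mp (by linarith)]
        | linarith [a2.mpr (by linarith)]
        | linarith [b2.mp (by linarith)]
        | linarith [b2.mpr (by linarith)]

lemma comp_eq_iff {y₀ y₁ : Fin n → ℝ} (hy₀ : y₀ ∈ SS n) (hy₁ : y₁ ∈ SS n) :
    connectedComponentIn (SS n) y₀ = connectedComponentIn (SS n) y₁ ↔ dd y₀ = dd y₁ := by
  constructor
  · intro h
    have h1 : y₁ ∈ connectedComponentIn (SS n) y₀ := h ▸ mem_connectedComponentIn hy₁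
    rw [fiber_eq hy₀] at h1
    exact ((mem_FF_iff_dd hy₀ hy₁).mp h1).symm
  · intro h
    have h1 : y₁ ∈ FF y₀ := (mem_FF_iff_dd hy₀ hy₁).mpr h.symm
    have h2 : y₁ ∈ connectedComponentIn (SS n) y₀ := (fiber_eq hy₀) ▸ h1
    exact connectedComponentIn_eq h2

lemma ncard_image_eq_of_ker {α β γ : Type*} (s : Set α) (f : α → β) (g : α → γ)
    (h : ∀ x ∈ s, ∀ y ∈ s, f x = f y ↔ g x = g y) :
    (f '' s).ncard = (g '' s).ncard := by
  classical
  have e : ↥(f '' s) ≃ ↥(g '' s) := by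
    refine
      { toFun := fun b => ⟨g b.2.choose, ⟨b.2.choose, b.2.choose_spec.1, rfl⟩⟩
        invFun := fun c => ⟨f c.2.choose, ⟨c.2.choose, c.2.choose_spec.1, rfl⟩⟩
        left_inv := ?_, right_inv := ?_ }
    · rintro ⟨b, hb⟩
      apply Subtype.ext
      simp only
      set x₁ := hb.choose with hx₁
      have hx₁s : x₁ ∈ s ∧ f x₁ = b := ⟨hb.choose_spec.1, hb.choose_spec.2⟩
      set c : ↥(g '' s) := ⟨g x₁, ⟨x₁, hx₁s.1, rfl⟩⟩ with hc
      set x₂ := c.2.choose with hx₂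
      have hx₂s : x₂ ∈ s ∧ g x₂ = g x₁ := ⟨c.2.choose_spec.1, c.2.choose_spec.2⟩
      have : f x₂ = f x₁ := (h x₂ hx₂s.1 x₁ hx₁s.1).mpr hx₂s.2
      rw [this, hx₁s.2]
    · rintro ⟨b, hb⟩
      apply Subtype.ext
      simp only
      set x₁ := hb.choose with hx₁
      have hx₁s : x₁ ∈ s ∧ g x₁ = b := ⟨hb.choose_spec.1, hb.choose_spec.2⟩
      set c : ↥(f '' s) := ⟨f x₁, ⟨x₁, hx₁s.1, rfl⟩⟩ with hc
      set x₂ := c.2.choose with hx₂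
      have hx₂s : x₂ ∈ s ∧ f x₂ = f x₁ := ⟨c.2.choose_spec.1, c.2.choose_spec.2⟩
      have : g x₂ = g x₁ := (h x₂ hx₂s.1 x₁ hx₁s.1).mp hx₂s.2
      rw [this, hx₁s.2]
  rw [← Nat.card_coe_set_eq, ← Nat.card_coe_set_eq]
  exact Nat.card_congr e

lemma regions_eq_image (n : ℕ) :
    Set.ncard {C : Set (Fin n → ℝ) | ∃ x ∈ SS n, C = connectedComponentIn (SS n) x}
      = Set.ncard (dd '' SS n) := by
  have hset : {C : Set (Fin n → ℝ) | ∃ x ∈ SS n, C = connectedComponentIn (SS n) x}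
      = (fun x => connectedComponentIn (SS n) x) '' SS n := by
    ext C
    simp only [Set.mem_setOf_eq, Set.mem_image]
    constructor
    · rintro ⟨x, hx, rfl⟩; exact ⟨x, hx, rfl⟩
    · rintro ⟨x, hx, rfl⟩; exact ⟨x, hx, rfl⟩
  rw [hset]
  exact ncard_image_eq_of_ker (SS n) _ _ (fun x hx y hy => comp_eq_iff hx hy)

/-! ## Ballot counting -/

/-- number of `true`s among the first `j` letters. -/
def bcnt {M : ℕ} (w : Fin M → Bool) (j : ℕ) : ℕ :=
  ((Finset.range j).filter (fun i => ∃ h : i < M, w ⟨i, h⟩ = true)).card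

/-- ballot condition: every prefix contains at least as many `false`s as `true`s. -/
def IsBallot {M : ℕ} (w : Fin M → Bool) : Prop := ∀ j ≤ M, 2 * bcnt w j ≤ j

lemma bcnt_zero {M : ℕ} (w : Fin M → Bool) : bcnt w 0 = 0 := by simp [bcnt]

lemma bcnt_succ {M : ℕ} (w : Fin M → Bool) (j : ℕ) (hj : j < M) :
    bcnt w (j + 1) = bcnt w j + (if w ⟨j, hj⟩ = true then 1 else 0) := by
  classical
  unfold bcnt
  rw [Finset.range_add_one, Finset.filter_insert]
  by_cases hw : w ⟨j, hj⟩ = true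
  · rw [if_pos ⟨hj, hw⟩, if_pos hw, Finset.card_insert_of_notMem (by simp)]
  · have hne : ¬ ∃ h : j < M, w ⟨j, h⟩ = true := by rintro ⟨h, hww⟩; exact hw hww
    rw [if_neg hne, if_neg hw, add_zero]

lemma bcnt_le {M : ℕ} (w : Fin M → Bool) (j : ℕ) : bcnt w j ≤ j := by
  calc bcnt w j ≤ (Finset.range j).card := Finset.card_filter_le _ _
  _ = j := Finset.card_range j

lemma bcnt_agree {M₁ M₂ : ℕ} (w₁ : Fin M₁ → Bool) (w₂ : Fin M₂ → Bool) (j : ℕ)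
    (hag : ∀ i (h₁ : i < M₁) (h₂ : i < M₂), i < j → w₁ ⟨i, h₁⟩ = w₂ ⟨i, h₂⟩)
    (hj₁ : j ≤ M₁) (hj₂ : j ≤ M₂) : bcnt w₁ j = bcnt w₂ j := by
  unfold bcnt
  congr 1
  apply Finset.filter_congr
  intro i hi
  have hij : i < j := Finset.mem_range.mp hi
  constructor
  · rintro ⟨h₁, hw⟩
    exact ⟨lt_of_lt_of_le hij hj₂, by rw [← hag i h₁ (lt_of_lt_of_le hij hj₂) hij]; exact hw⟩
  · rintro ⟨h₂, hw⟩
    exact ⟨lt_of_lt_of_le hij hj₁, by rw [hag i (lt_of_lt_of_le hij hj₁) h₂ hij]; exact hw⟩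

lemma bcnt_snoc_lt {M : ℕ} (v : Fin M → Bool) (x : Bool) (j : ℕ) (hj : j ≤ M) :
    bcnt (Fin.snoc v x : Fin (M + 1) → Bool) j = bcnt v j := by
  apply bcnt_agree _ _ j ?_ (by omega) hj
  intro i h₁ h₂ hij
  have e : (⟨i, h₁⟩ : Fin (M + 1)) = Fin.castSucc ⟨i, h₂⟩ := by apply Fin.ext; rfl
  rw [e, Fin.snoc_castSucc]

lemma snoc_at_M {M : ℕ} (v : Fin M → Bool) (x : Bool) (h : M < M + 1) :
    (Fin.snoc v x : Fin (M + 1) → Bool) ⟨M, h⟩ = x := by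
  have e : (⟨M, h⟩ : Fin (M + 1)) = Fin.last M := by apply Fin.ext; rfl
  rw [e, Fin.snoc_last]

lemma w_at_M {M : ℕ} (w : Fin (M + 1) → Bool) (h : M < M + 1) :
    w ⟨M, h⟩ = w (Fin.last M) := congrArg w (by apply Fin.ext; rfl)

lemma bcnt_snoc_full {M : ℕ} (v : Fin M → Bool) (x : Bool) :
    bcnt (Fin.snoc v x : Fin (M + 1) → Bool) (M + 1)
      = bcnt v M + (if x = true then 1 else 0) := by
  rw [bcnt_succ _ M (by omega), bcnt_snoc_lt v x M le_rfl, snoc_at_M]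

lemma bcnt_init {M : ℕ} (w : Fin (M + 1) → Bool) (j : ℕ) (hj : j ≤ M) :
    bcnt (Fin.init w) j = bcnt w j := by
  apply bcnt_agree _ _ j ?_ hj (by omega)
  intro i h₁ h₂ hij
  show w (Fin.castSucc ⟨i, h₁⟩) = w ⟨i, h₂⟩
  exact congrArg w (by apply Fin.ext; rfl)

lemma bcnt_last {M : ℕ} (w : Fin (M + 1) → Bool) :
    bcnt w (M + 1) = bcnt (Fin.init w) M + (if w (Fin.last M) = true then 1 else 0) := by
  rw [bcnt_succ w M (by omega), bcnt_init w M le_rfl, w_at_M w]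

lemma bcnt_eq_zero_iff {M : ℕ} (w : Fin M → Bool) :
    bcnt w M = 0 ↔ ∀ i, w i = false := by
  constructor
  · intro h i
    by_contra hi
    have hi' : w i = true := by simpa using hi
    have hmem : (i : ℕ) ∈ (Finset.range M).filter (fun j => ∃ h : j < M, w ⟨j, h⟩ = true) :=
      Finset.mem_filter.mpr ⟨Finset.mem_range.mpr i.2, i.2, by rw [Fin.eta]; exact hi'⟩
    unfold bcnt at h
    rw [Finset.card_eq_zero] at h
    rw [h] at hmem
    exact absurd hmem (Finset.notMem_empty _)
  · intro h
    unfold bcnt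
    convert Finset.card_empty
    rw [Finset.filter_eq_empty_iff]
    rintro i hi ⟨hlt, hw⟩
    rw [h ⟨i, hlt⟩] at hw
    exact Bool.false_ne_true hw

lemma card_BC_zero (M : ℕ) :
    Nat.card {w : Fin M → Bool // IsBallot w ∧ bcnt w M = 0} = 1 := by
  rw [Nat.card_eq_one_iff_unique]
  constructor
  · constructor
    rintro ⟨w₁, hw₁, hz₁⟩ ⟨w₂, hw₂, hz₂⟩
    apply Subtype.ext
    funext i
    show w₁ i = w₂ i
    rw [(bcnt_eq_zero_iff w₁).mp hz₁ i, (bcnt_eq_zero_iff w₂).mp hz₂ i]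
  · have hff : bcnt (fun _ : Fin M => false) M = 0 :=
      (bcnt_eq_zero_iff _).mpr (fun _ => rfl)
    refine ⟨⟨fun _ => false, ?_, hff⟩⟩
    intro j hj
    have h0 : bcnt (fun _ : Fin M => false) j = 0 := by
      unfold bcnt
      convert Finset.card_empty
      rw [Finset.filter_eq_empty_iff]
      rintro i hi ⟨hlt, hw⟩
      exact Bool.false_ne_true hw
    omega

lemma card_BC_big {M d : ℕ} (h : M < 2 * d) :
    Nat.card {w : Fin M → Bool // IsBallot w ∧ bcnt w M = d} = 0 := by
  rw [Nat.card_eq_zero]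
  left
  constructor
  rintro ⟨w, hw, hd⟩
  have := hw M le_rfl
  omega

lemma card_BC_rec {M d : ℕ} (h : 2 * (d + 1) ≤ M + 1) :
    Nat.card {w : Fin (M + 1) → Bool // IsBallot w ∧ bcnt w (M + 1) = d + 1}
      = Nat.card {w : Fin M → Bool // IsBallot w ∧ bcnt w M = d + 1}
        + Nat.card {w : Fin M → Bool // IsBallot w ∧ bcnt w M = d} := by
  classical
  rw [← Nat.card_sum]
  have snoc_ballot : ∀ (v : Fin M → Bool) (x : Bool), IsBallot v →
      2 * (bcnt v M + (if x = true then 1 else 0)) ≤ M + 1 →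
      IsBallot (Fin.snoc v x : Fin (M + 1) → Bool) := by
    intro v x hv htot j hj
    rcases Nat.lt_or_ge j (M + 1) with hj' | hj'
    · rw [bcnt_snoc_lt v x j (by omega)]
      exact hv j (by omega)
    · have hje : j = M + 1 := by omega
      subst hje
      rw [bcnt_snoc_full]
      exact htot
  refine (Nat.card_congr (Equiv.ofBijective (Sum.elim
      (fun v : {w : Fin M → Bool // IsBallot w ∧ bcnt w M = d + 1} =>
        (⟨Fin.snoc v.1 false,
          snoc_ballot v.1 false v.2.1 (by rw [v.2.2]; simp; omega),
          by rw [bcnt_snoc_full, v.2.2]; simp⟩ :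
          {w : Fin (M + 1) → Bool // IsBallot w ∧ bcnt w (M + 1) = d + 1}))
      (fun v : {w : Fin M → Bool // IsBallot w ∧ bcnt w M = d} =>
        (⟨Fin.snoc v.1 true,
          snoc_ballot v.1 true v.2.1 (by rw [v.2.2]; simp; omega),
          by rw [bcnt_snoc_full, v.2.2]; simp⟩ :
          {w : Fin (M + 1) → Bool // IsBallot w ∧ bcnt w (M + 1) = d + 1})))
      ⟨?_, ?_⟩)).symm
  · rintro (v₁ | v₁) (v₂ | v₂) hz <;>
      have hz' := congrArg Subtype.val hz
    · have hzz : (Fin.snoc v₁.1 false : Fin (M + 1) → Bool) = Fin.snoc v₂.1 false := hz'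
      congr 1
      apply Subtype.ext
      funext i
      have := congrFun hzz (Fin.castSucc i)
      simpa [Fin.snoc_castSucc] using this
    · exfalso
      have hzz : (Fin.snoc v₁.1 false : Fin (M + 1) → Bool) = Fin.snoc v₂.1 true := hz'
      have := congrFun hzz (Fin.last M)
      simp [Fin.snoc_last] at this
    · exfalso
      have hzz : (Fin.snoc v₁.1 true : Fin (M + 1) → Bool) = Fin.snoc v₂.1 false := hz'
      have := congrFun hzz (Fin.last M)
      simp [Fin.snoc_last] at this
    · have hzz : (Fin.snoc v₁.1 true : Fin (M + 1) → Bool) = Fin.snoc v₂.1 true := hz'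
      congr 1
      apply Subtype.ext
      funext i
      have := congrFun hzz (Fin.castSucc i)
      simpa [Fin.snoc_castSucc] using this
  · rintro ⟨w, hw, hd⟩
    have hib : IsBallot (Fin.init w) := by
      intro j hj
      rw [bcnt_init w j hj]
      exact hw j (by omega)
    have hcnt := bcnt_last w
    by_cases hx : w (Fin.last M) = true
    · refine ⟨Sum.inr ⟨Fin.init w, hib, ?_⟩, ?_⟩
      · rw [hx] at hcnt; simp at hcnt; omega
      · apply Subtype.ext
        show Fin.snoc (Fin.init w) true = w
        rw [← hx]
        exact Fin.snoc_init_self w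
    · have hx' : w (Fin.last M) = false := by simpa using hx
      refine ⟨Sum.inl ⟨Fin.init w, hib, ?_⟩, ?_⟩
      · rw [hx'] at hcnt; simp at hcnt; omega
      · apply Subtype.ext
        show Fin.snoc (Fin.init w) false = w
        rw [← hx']
        exact Fin.snoc_init_self w

lemma card_BC_closed : ∀ M d : ℕ, 2 * (d + 1) ≤ M →
    Nat.card {w : Fin M → Bool // IsBallot w ∧ bcnt w M = d + 1} + M.choose d
      = M.choose (d + 1) := by
  intro M
  induction M with
  | zero => intro d h; omega
  | succ M ihM =>
    intro d h
    rw [card_BC_rec (by omega)]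
    rcases Nat.lt_or_ge (2 * (d + 1)) (M + 1) with hlt | hge
    · rcases d with _ | e
      · rw [card_BC_zero]
        have h1 := ihM 0 (by omega)
        have p1 : (M + 1).choose 1 = M.choose 0 + M.choose 1 := Nat.choose_succ_succ M 0
        have c0 : (M + 1).choose 0 = 1 := Nat.choose_zero_right _
        have c0' : M.choose 0 = 1 := Nat.choose_zero_right _
        norm_num at h1 p1 ⊢
        omega
      · have h1 := ihM (e + 1) (by omega)
        have h2 := ihM e (by omega)
        have p1 : (M + 1).choose (e + 1 + 1) = M.choose (e + 1) + M.choose (e + 1 + 1) :=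
          Nat.choose_succ_succ M (e + 1)
        have p2 : (M + 1).choose (e + 1) = M.choose e + M.choose (e + 1) :=
          Nat.choose_succ_succ M e
        omega
    · have hM : M = 2 * d + 1 := by omega
      have hz : Nat.card {w : Fin M → Bool // IsBallot w ∧ bcnt w M = d + 1} = 0 :=
        card_BC_big (by omega)
      rw [hz]
      rcases d with _ | e
      · have hM1 : M = 1 := by omega
        subst hM1
        rw [card_BC_zero]
        decide
      · have h2 := ihM e (by omega)
        have p1 : (M + 1).choose (e + 1 + 1) = M.choose (e + 1) + M.choose (e + 1 + 1) :=
          Nat.choose_succ_succ M (e + 1)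
        have p2 : (M + 1).choose (e + 1) = M.choose e + M.choose (e + 1) :=
          Nat.choose_succ_succ M e
        have hsym : M.choose (e + 1 + 1) = M.choose (e + 1) := by
          have hMe : M = 2 * (e + 1) + 1 := by omega
          rw [hMe]
          exact Nat.choose_symm_half (e + 1)
        omega

lemma card_ballot (m : ℕ) :
    Nat.card {w : Fin (2 * m) → Bool // IsBallot w} = (2 * m).choose m := by
  classical
  have key : ∀ j, j ≤ m →
      Nat.card {w : Fin (2 * m) → Bool // IsBallot w ∧ bcnt w (2 * m) ≤ j}
        = (2 * m).choose j := by
    intro j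
    induction j with
    | zero =>
      intro _
      have e : {w : Fin (2 * m) → Bool // IsBallot w ∧ bcnt w (2 * m) ≤ 0}
          ≃ {w : Fin (2 * m) → Bool // IsBallot w ∧ bcnt w (2 * m) = 0} :=
        Equiv.subtypeEquivRight (by intro w; rw [Nat.le_zero])
      rw [Nat.card_congr e, card_BC_zero, Nat.choose_zero_right]
    | succ j ih =>
      intro hj
      have e : {w : Fin (2 * m) → Bool // IsBallot w ∧ bcnt w (2 * m) ≤ j + 1}
          ≃ ({w : Fin (2 * m) → Bool // IsBallot w ∧ bcnt w (2 * m) ≤ j}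
            ⊕ {w : Fin (2 * m) → Bool // IsBallot w ∧ bcnt w (2 * m) = j + 1}) := by
        refine
          { toFun := fun w => if hle : bcnt w.1 (2 * m) ≤ j then Sum.inl ⟨w.1, w.2.1, hle⟩
              else Sum.inr ⟨w.1, w.2.1, by have := w.2.2; omega⟩
            invFun := fun z => match z with
              | Sum.inl v => ⟨v.1, v.2.1, by have := v.2.2; omega⟩
              | Sum.inr v => ⟨v.1, v.2.1, by have := v.2.2; omega⟩
            left_inv := ?_
            right_inv := ?_ }
        · rintro ⟨w, hw, hle⟩
          by_cases hc : bcnt w (2 * m) ≤ j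
          · simp [hc]
          · simp [hc]
        · rintro (v | v)
          · simp [v.2.2]
          · rcases v with ⟨w, hw, hv⟩
            have : ¬ (bcnt w (2 * m) ≤ j) := by omega
            simp [this]
      rw [Nat.card_congr e, Nat.card_sum, ih (by omega)]
      have := card_BC_closed (2 * m) j (by omega)
      omega
  have e : {w : Fin (2 * m) → Bool // IsBallot w}
      ≃ {w : Fin (2 * m) → Bool // IsBallot w ∧ bcnt w (2 * m) ≤ m} :=
    Equiv.subtypeEquivRight (fun w =>
      ⟨fun h => ⟨h, by have := h (2 * m) le_rfl; omega⟩, fun h => h.1⟩)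
  rw [Nat.card_congr e, key m le_rfl]

/-! ## Words and window functions -/

/-- Extension of a word of length `2n` to an antisymmetric word of length `4n`,
followed by alternating letters. -/
def wext (n : ℕ) (w : Fin (2 * n) → Bool) (i : ℕ) : Bool :=
  if h : i < 2 * n then w ⟨i, h⟩
  else if h2 : i < 4 * n then !(w ⟨4 * n - 1 - i, by omega⟩)
  else decide ((i - 4 * n) % 2 = 0)

def Tpred (n : ℕ) (w : Fin (2 * n) → Bool) : ℕ → Prop := fun i => wext n w i = true
def Fpred (n : ℕ) (w : Fin (2 * n) → Bool) : ℕ → Prop := fun i => wext n w i = false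

noncomputable def beta (n : ℕ) (w : Fin (2 * n) → Bool) (k : ℕ) : ℕ := Nat.nth (Tpred n w) k
noncomputable def alphaa (n : ℕ) (w : Fin (2 * n) → Bool) (l : ℕ) : ℕ := Nat.nth (Fpred n w) l

/-- The window function extracted from a ballot word, extended by the identity. -/
noncomputable def MOf (n : ℕ) (w : Fin (2 * n) → Bool) : ℕ → ℕ :=
  fun k => if k < 2 * n then beta n w k - k - 1 else k

/-- Validity of a window function. -/
def ValidM (n : ℕ) (m : ℕ → ℕ) : Prop :=
  (∀ k, k < 2 * n → k ≤ m k ∧ m k < 2 * n) ∧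
  (∀ k l, k ≤ l → l < 2 * n → m k ≤ m l) ∧
  (∀ k l, k < 2 * n → l < 2 * n → (l ≤ m k ↔ 2 * n - 1 - k ≤ m (2 * n - 1 - l)))

/-- The ballot word associated to a window function. -/
def wOf (n : ℕ) (m : ℕ → ℕ) : Fin (2 * n) → Bool :=
  fun j => decide (∃ k < 2 * n, m k + k + 1 = (j : ℕ))

instance (n : ℕ) (w : Fin (2 * n) → Bool) : DecidablePred (Tpred n w) := fun i =>
  inferInstanceAs (Decidable (wext n w i = true))

instance (n : ℕ) (w : Fin (2 * n) → Bool) : DecidablePred (Fpred n w) := fun i =>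
  inferInstanceAs (Decidable (wext n w i = false))

lemma Tpred_infinite (n : ℕ) (w : Fin (2 * n) → Bool) : {i | Tpred n w i}.Infinite := by
  apply Set.infinite_of_injective_forall_mem (f := fun k : ℕ => 4 * n + 2 * k)
  · intro a b h
    simp only at h
    omega
  · intro k
    show Tpred n w (4 * n + 2 * k)
    unfold Tpred wext
    rw [dif_neg (by omega), dif_neg (by omega)]
    simp only [decide_eq_true_eq]
    omega

lemma Fpred_infinite (n : ℕ) (w : Fin (2 * n) → Bool) : {i | Fpred n w i}.Infinite := by
  apply Set.infinite_of_injective_forall_mem (f := fun k : ℕ => 4 * n + 2 * k + 1)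
  · intro a b h
    simp only at h
    omega
  · intro k
    show Fpred n w (4 * n + 2 * k + 1)
    unfold Fpred wext
    rw [dif_neg (by omega), dif_neg (by omega)]
    rw [decide_eq_false_iff_not]
    omega

lemma count_TF (n : ℕ) (w : Fin (2 * n) → Bool) (j : ℕ) :
    Nat.count (Tpred n w) j + Nat.count (Fpred n w) j = j := by
  classical
  rw [Nat.count_eq_card_filter_range, Nat.count_eq_card_filter_range]
  have he : (Finset.range j).filter (Fpred n w)
      = (Finset.range j).filter (fun i => ¬ Tpred n w i) := by
    apply Finset.filter_congr
    intro i _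
    unfold Tpred Fpred
    cases h : wext n w i <;> simp
  rw [he, Finset.card_filter_add_card_filter_not, Finset.card_range]

lemma count_split (p : ℕ → Prop) [DecidablePred p] {a b : ℕ} (h : a ≤ b) :
    Nat.count p b = Nat.count p a + ((Finset.Ico a b).filter p).card := by
  rw [Nat.count_eq_card_filter_range, Nat.count_eq_card_filter_range, Finset.range_eq_Ico,
    ← Finset.Ico_union_Ico_eq_Ico (Nat.zero_le a) h, Finset.filter_union,
    Finset.card_union_of_disjoint
      (Finset.disjoint_filter_filter (Finset.Ico_disjoint_Ico_consecutive 0 a b))]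
  rw [Finset.range_eq_Ico]

lemma count_le' (p : ℕ → Prop) [DecidablePred p] (j : ℕ) : Nat.count p j ≤ j := by
  rw [Nat.count_eq_card_filter_range]
  calc ((Finset.range j).filter p).card ≤ (Finset.range j).card := Finset.card_filter_le _ _
  _ = j := Finset.card_range j

lemma wext_reflect (n : ℕ) (w : Fin (2 * n) → Bool) (i : ℕ) (h : i < 4 * n) :
    wext n w (4 * n - 1 - i) = !wext n w i := by
  by_cases h1 : i < 2 * n
  · have e1 : ¬ (4 * n - 1 - i < 2 * n) := by omega
    have e2 : 4 * n - 1 - i < 4 * n := by omega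
    unfold wext
    rw [dif_neg e1, dif_pos e2, dif_pos h1]
    apply congrArg
    apply congrArg w
    apply Fin.ext
    show 4 * n - 1 - (4 * n - 1 - i) = i
    omega
  · have e1 : 4 * n - 1 - i < 2 * n := by omega
    unfold wext
    rw [dif_pos e1, dif_neg h1, dif_pos h, Bool.not_not]

lemma count_refl (n : ℕ) (w : Fin (2 * n) → Bool) (j : ℕ) (hj : j ≤ 4 * n) :
    Nat.count (Fpred n w) j + Nat.count (Tpred n w) (4 * n - j)
      = Nat.count (Tpred n w) (4 * n) := by
  classical
  rw [count_split (Tpred n w) (show 4 * n - j ≤ 4 * n by omega)]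
  suffices hc : Nat.count (Fpred n w) j
      = ((Finset.Ico (4 * n - j) (4 * n)).filter (Tpred n w)).card by omega
  rw [Nat.count_eq_card_filter_range]
  apply Finset.card_bij (fun i _ => 4 * n - 1 - i)
  · intro i hi
    obtain ⟨hir, hiF⟩ := Finset.mem_filter.mp hi
    have hij : i < j := Finset.mem_range.mp hir
    refine Finset.mem_filter.mpr ⟨Finset.mem_Ico.mpr ⟨by omega, by omega⟩, ?_⟩
    show Tpred n w (4 * n - 1 - i)
    unfold Tpred
    rw [wext_reflect n w i (by omega)]
    unfold Fpred at hiF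
    rw [hiF]
    rfl
  · intro a ha b hb hab
    have ha' : a < j := Finset.mem_range.mp (Finset.mem_filter.mp ha).1
    have hb' : b < j := Finset.mem_range.mp (Finset.mem_filter.mp hb).1
    omega
  · intro x hx
    obtain ⟨hxI, hxT⟩ := Finset.mem_filter.mp hx
    obtain ⟨hx1, hx2⟩ := Finset.mem_Ico.mp hxI
    refine ⟨4 * n - 1 - x, Finset.mem_filter.mpr ⟨Finset.mem_range.mpr (by omega), ?_⟩, by omega⟩
    show Fpred n w (4 * n - 1 - x)
    unfold Fpred
    rw [wext_reflect n w x (by omega)]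
    unfold Tpred at hxT
    rw [hxT]
    rfl

lemma count_T4n (n : ℕ) (w : Fin (2 * n) → Bool) :
    Nat.count (Tpred n w) (4 * n) = 2 * n := by
  have h1 := count_refl n w (4 * n) le_rfl
  have h2 := count_TF n w (4 * n)
  rw [Nat.sub_self, Nat.count_zero] at h1
  omega

lemma count_eq_bcnt (n : ℕ) (w : Fin (2 * n) → Bool) (j : ℕ) (hj : j ≤ 2 * n) :
    Nat.count (Tpred n w) j = bcnt w j := by
  classical
  rw [Nat.count_eq_card_filter_range]
  unfold bcnt
  congr 1
  apply Finset.filter_congr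
  intro i hi
  have hi' : i < 2 * n := lt_of_lt_of_le (Finset.mem_range.mp hi) hj
  unfold Tpred wext
  rw [dif_pos hi']
  exact ⟨fun h => ⟨hi', h⟩, fun ⟨h, hh⟩ => hh⟩

lemma ext_ballot {n : ℕ} {w : Fin (2 * n) → Bool} (hw : IsBallot w) :
    ∀ j ≤ 4 * n, 2 * Nat.count (Tpred n w) j ≤ j := by
  intro j hj
  rcases le_or_gt j (2 * n) with h | h
  · rw [count_eq_bcnt n w j h]
    exact hw j h
  · have h1 := count_refl n w j hj
    have h2 := count_TF n w j
    have h3 : 2 * Nat.count (Tpred n w) (4 * n - j) ≤ 4 * n - j := by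
      rw [count_eq_bcnt n w _ (by omega)]
      exact hw _ (by omega)
    have h4 := count_T4n n w
    omega

lemma beta_T (n : ℕ) (w : Fin (2 * n) → Bool) (k : ℕ) : Tpred n w (beta n w k) :=
  Nat.nth_mem_of_infinite (Tpred_infinite n w) k

lemma count_beta (n : ℕ) (w : Fin (2 * n) → Bool) (k : ℕ) :
    Nat.count (Tpred n w) (beta n w k) = k :=
  Nat.count_nth_of_infinite (Tpred_infinite n w) k

lemma beta_lt (n : ℕ) (w : Fin (2 * n) → Bool) (k : ℕ) (hk : k < 2 * n) :
    beta n w k < 4 * n := by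
  by_contra hc
  have h1 : Nat.count (Tpred n w) (4 * n) ≤ Nat.count (Tpred n w) (beta n w k) :=
    Nat.count_monotone _ (by omega)
  rw [count_beta, count_T4n] at h1
  omega

lemma beta_ge {n : ℕ} {w : Fin (2 * n) → Bool} (hw : IsBallot w) (k : ℕ) (hk : k < 2 * n) :
    2 * k + 1 ≤ beta n w k := by
  have h1 : Nat.count (Tpred n w) (beta n w k + 1) = k + 1 := by
    rw [Nat.count_succ, count_beta, if_pos (beta_T n w k)]
  have h2 := ext_ballot hw (beta n w k + 1) (by have := beta_lt n w k hk; omega)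
  omega

lemma beta_le (n : ℕ) (w : Fin (2 * n) → Bool) (k : ℕ) (hk : k < 2 * n) :
    beta n w k ≤ 2 * n + k := by
  have h1 := count_TF n w (beta n w k)
  have h2 : Nat.count (Fpred n w) (beta n w k) ≤ Nat.count (Fpred n w) (4 * n) :=
    Nat.count_monotone _ (le_of_lt (beta_lt n w k hk))
  have h3 := count_TF n w (4 * n)
  have h4 := count_T4n n w
  rw [count_beta] at h1
  omega

lemma alpha_reflect (n : ℕ) (w : Fin (2 * n) → Bool) (l : ℕ) (hl : l < 2 * n) :
    alphaa n w l = 4 * n - 1 - beta n w (2 * n - 1 - l) := by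
  classical
  set i := beta n w (2 * n - 1 - l) with hi
  have hilt : i < 4 * n := beta_lt n w _ (by omega)
  have hF : Fpred n w (4 * n - 1 - i) := by
    unfold Fpred
    rw [wext_reflect n w i hilt]
    have hT := beta_T n w (2 * n - 1 - l)
    unfold Tpred at hT
    rw [← hi] at hT
    rw [hT]
    rfl
  have hcnt : Nat.count (Fpred n w) (4 * n - 1 - i) = l := by
    have h1 := count_refl n w (4 * n - 1 - i) (by omega)
    have h2 : 4 * n - (4 * n - 1 - i) = i + 1 := by omega
    rw [h2] at h1
    have h3 : Nat.count (Tpred n w) (i + 1) = (2 * n - 1 - l) + 1 := by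
      rw [Nat.count_succ, hi, count_beta, if_pos (beta_T n w (2 * n - 1 - l))]
    rw [count_T4n n w, h3] at h1
    omega
  calc alphaa n w l = Nat.nth (Fpred n w) l := rfl
  _ = 4 * n - 1 - i := by rw [← hcnt]; exact Nat.nth_count hF

lemma key1 {n : ℕ} {w : Fin (2 * n) → Bool} (hw : IsBallot w) (k l : ℕ)
    (hk : k < 2 * n) (hl : l < 2 * n) :
    alphaa n w l < beta n w k ↔ l ≤ MOf n w k := by
  classical
  have h1 : l < Nat.count (Fpred n w) (beta n w k) ↔ alphaa n w l < beta n w k :=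
    Nat.lt_nth_iff_count_lt (Fpred_infinite n w)
  have h2 := count_TF n w (beta n w k)
  rw [count_beta] at h2
  have h3 := beta_ge hw k hk
  unfold MOf
  rw [if_pos hk]
  rw [← h1]
  omega

lemma MOf_selfconj {n : ℕ} {w : Fin (2 * n) → Bool} (hw : IsBallot w) (k l : ℕ)
    (hk : k < 2 * n) (hl : l < 2 * n) :
    l ≤ MOf n w k ↔ 2 * n - 1 - k ≤ MOf n w (2 * n - 1 - l) := by
  rw [← key1 hw k l hk hl, ← key1 hw (2 * n - 1 - l) (2 * n - 1 - k) (by omega) (by omega)]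
  rw [alpha_reflect n w l hl, alpha_reflect n w (2 * n - 1 - k) (by omega)]
  have e : 2 * n - 1 - (2 * n - 1 - k) = k := by omega
  rw [e]
  have b1 := beta_lt n w k hk
  have b2 := beta_lt n w (2 * n - 1 - l) (by omega)
  omega

lemma smono_gap {g : ℕ → ℕ} (hg : StrictMono g) : ∀ a b, a ≤ b → g a + (b - a) ≤ g b := by
  intro a b h
  induction b, h using Nat.le_induction with
  | base => simp
  | succ b hb ih =>
    have := hg (show b < b + 1 by omega)
    omega

lemma MOf_valid {w : Fin (2 * n) → Bool} (hw : IsBallot w) : ValidM n (MOf n w) := by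
  have hbsm : StrictMono (beta n w) := Nat.nth_strictMono (Tpred_infinite n w)
  refine ⟨?_, ?_, ?_⟩
  · intro k hk
    have h1 := beta_ge hw k hk
    have h2 := beta_le n w k hk
    unfold MOf
    rw [if_pos hk]
    omega
  · intro k l hkl hl
    have hk : k < 2 * n := by omega
    have h1 := smono_gap hbsm k l hkl
    have h2 := beta_ge hw k hk
    unfold MOf
    rw [if_pos hk, if_pos hl]
    omega
  · exact fun k l hk hl => MOf_selfconj hw k l hk hl

lemma wOf_ballot {m : ℕ → ℕ} (hm : ValidM n m) : IsBallot (wOf n m) := by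
  intro j hj
  classical
  have hset : ((Finset.range j).filter (fun i => ∃ h : i < 2 * n, wOf n m ⟨i, h⟩ = true))
      ⊆ Finset.image (fun k => m k + k + 1)
        ((Finset.range (2 * n)).filter (fun k => 2 * k + 1 < j)) := by
    intro i hi
    obtain ⟨hir, hlt, hdec⟩ := Finset.mem_filter.mp hi
    unfold wOf at hdec
    rw [decide_eq_true_eq] at hdec
    obtain ⟨k, hk, hki⟩ := hdec
    refine Finset.mem_image.mpr ⟨k, Finset.mem_filter.mpr ⟨Finset.mem_range.mpr hk, ?_⟩, hki⟩
    have h1 := (hm.1 k hk).1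
    have hij : i < j := Finset.mem_range.mp hir
    simp only [Fin.val_mk] at hki
    omega
  have h1 : bcnt (wOf n m) j
      ≤ ((Finset.range (2 * n)).filter (fun k => 2 * k + 1 < j)).card := by
    unfold bcnt
    exact le_trans (Finset.card_le_card hset) Finset.card_image_le
  have h2 : ((Finset.range (2 * n)).filter (fun k => 2 * k + 1 < j)).card ≤ j / 2 := by
    apply le_trans (Finset.card_le_card ?_) (le_of_eq (Finset.card_range (j / 2)))
    intro k hk
    obtain ⟨_, hk2⟩ := Finset.mem_filter.mp hk
    exact Finset.mem_range.mpr (by omega)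
  omega

lemma wOf_MOf {w : Fin (2 * n) → Bool} (hw : IsBallot w) : wOf n (MOf n w) = w := by
  classical
  funext j
  have hj2 : (j : ℕ) < 2 * n := j.2
  have hiff : (∃ k < 2 * n, MOf n w k + k + 1 = (j : ℕ)) ↔ w j = true := by
    constructor
    · rintro ⟨k, hk, he⟩
      have hbk : MOf n w k + k + 1 = beta n w k := by
        unfold MOf
        rw [if_pos hk]
        have := beta_ge hw k hk
        omega
      have hbj : beta n w k = (j : ℕ) := by omega
      have hT := beta_T n w k
      rw [hbj] at hT
      unfold Tpred wext at hT
      rw [dif_pos hj2] at hT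
      rwa [Fin.eta] at hT
    · intro hwj
      have hT : Tpred n w (j : ℕ) := by
        unfold Tpred wext
        rw [dif_pos hj2, Fin.eta]
        exact hwj
      have hk2 : Nat.count (Tpred n w) (j : ℕ) < 2 * n :=
        lt_of_le_of_lt (count_le' _ _) hj2
      refine ⟨Nat.count (Tpred n w) (j : ℕ), hk2, ?_⟩
      have hb : beta n w (Nat.count (Tpred n w) (j : ℕ)) = (j : ℕ) := Nat.nth_count hT
      unfold MOf
      rw [if_pos hk2]
      have := beta_ge hw _ hk2
      omega
  show decide (∃ k < 2 * n, MOf n w k + k + 1 = (j : ℕ)) = w j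
  cases hwj : w j
  · rw [decide_eq_false_iff_not]
    intro hex
    have := hiff.mp hex
    rw [hwj] at this
    exact Bool.false_ne_true this
  · rw [decide_eq_true_eq]
    exact hiff.mpr hwj

lemma MOf_wOf {m : ℕ → ℕ} (hm : ValidM n m) : ∀ k < 2 * n, MOf n (wOf n m) k = m k := by
  classical
  have hnc : ∀ k k', k < 2 * n → k' < 2 * n →
      (m k + k + 1) + (m k' + k' + 1) ≠ 4 * n - 1 := by
    intro k k' hk hk' heq
    have hsc := hm.2.2 k (2 * n - 1 - k') hk (by omega)
    have e : 2 * n - 1 - (2 * n - 1 - k') = k' := by omega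
    rw [e] at hsc
    omega
  have hinj : ∀ a b, a < 2 * n → b < 2 * n → m a + a + 1 = m b + b + 1 → a = b := by
    intro a b ha hb hab
    rcases lt_trichotomy a b with h | h | h
    · have := hm.2.1 a b (le_of_lt h) hb
      omega
    · exact h
    · have := hm.2.1 b a (le_of_lt h) ha
      omega
  have hchar : ∀ i, i < 4 * n → (Tpred n (wOf n m) i ↔ ∃ k < 2 * n, m k + k + 1 = i) := by
    intro i hi
    by_cases h1 : i < 2 * n
    · unfold Tpred wext
      rw [dif_pos h1]
      unfold wOf
      simp only [decide_eq_true_eq, Fin.val_mk]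
    · unfold Tpred wext
      rw [dif_neg h1, dif_pos hi]
      unfold wOf
      simp only [Bool.not_eq_true', decide_eq_false_iff_not, Fin.val_mk]
      set P := (Finset.range (2 * n)).image (fun k => m k + k + 1) with hP
      have hPmem : ∀ x, x ∈ P ↔ ∃ k < 2 * n, m k + k + 1 = x := by
        intro x
        rw [hP]
        constructor
        · intro hx
          obtain ⟨k, hk, he⟩ := Finset.mem_image.mp hx
          exact ⟨k, Finset.mem_range.mp hk, he⟩
        · rintro ⟨k, hk, he⟩
          exact Finset.mem_image.mpr ⟨k, Finset.mem_range.mpr hk, he⟩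
      have hPbound : ∀ x ∈ P, x < 4 * n := by
        intro x hx
        obtain ⟨k, hk, rfl⟩ := (hPmem x).mp hx
        have := (hm.1 k hk).2
        omega
      have hPcard : P.card = 2 * n := by
        rw [hP, Finset.card_image_of_injOn, Finset.card_range]
        intro a ha b hb hab
        simp only [Finset.coe_range, Set.mem_Iio] at ha hb
        exact hinj a b ha hb hab
      set Q := P.image (fun x => 4 * n - 1 - x) with hQ
      have hQcard : Q.card = 2 * n := by
        rw [hQ, Finset.card_image_of_injOn, hPcard]
        intro a ha b hb hab
        have ha' := hPbound a (by simpa using ha)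
        have hb' := hPbound b (by simpa using hb)
        have hab' : 4 * n - 1 - a = 4 * n - 1 - b := hab
        omega
      have hdisj : Disjoint P Q := by
        rw [Finset.disjoint_left]
        intro x hxP hxQ
        obtain ⟨y, hyP, hyx⟩ := Finset.mem_image.mp hxQ
        obtain ⟨k, hk, hkx⟩ := (hPmem x).mp hxP
        obtain ⟨k', hk', hk'y⟩ := (hPmem y).mp hyP
        have hy4 := hPbound y hyP
        exact hnc k k' hk hk' (by omega)
      have hmuni : P ∪ Q = Finset.range (4 * n) := by
        apply Finset.eq_of_subset_of_card_le
        · intro x hx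
          rcases Finset.mem_union.mp hx with h | h
          · exact Finset.mem_range.mpr (hPbound x h)
          · obtain ⟨y, hyP, hyx⟩ := Finset.mem_image.mp h
            exact Finset.mem_range.mpr (by omega)
        · rw [Finset.card_union_of_disjoint hdisj, hPcard, hQcard, Finset.card_range]
          omega
      have hi_mem : i ∈ P ∪ Q := by rw [hmuni]; exact Finset.mem_range.mpr hi
      constructor
      · intro hne
        rcases Finset.mem_union.mp hi_mem with h | h
        · exact (hPmem i).mp h
        · exfalso
          obtain ⟨y, hyP, hyx⟩ := Finset.mem_image.mp h
          have hy4 := hPbound y hyP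
          have : y = 4 * n - 1 - i := by omega
          rw [this] at hyP
          exact hne ((hPmem _).mp hyP)
      · rintro ⟨k, hk, hki⟩ ⟨k', hk', hk'i⟩
        exact hnc k k' hk hk' (by omega)
  intro k hk
  have hpk4 : m k + k + 1 < 4 * n := by
    have h1 := (hm.1 k hk).1
    have h2 := (hm.1 k hk).2
    omega
  have hcount : Nat.count (Tpred n (wOf n m)) (m k + k + 1) = k := by
    rw [Nat.count_eq_card_filter_range]
    have hfe : (Finset.range (m k + k + 1)).filter (Tpred n (wOf n m))
        = (Finset.range k).image (fun k' => m k' + k' + 1) := by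
      ext i
      simp only [Finset.mem_filter, Finset.mem_range, Finset.mem_image]
      constructor
      · rintro ⟨hi, hT⟩
        obtain ⟨k', hk', he⟩ := (hchar i (by omega)).mp hT
        refine ⟨k', ?_, he⟩
        by_contra hge
        have hkk : k ≤ k' := by omega
        have := hm.2.1 k k' hkk hk'
        omega
      · rintro ⟨k', hk', he⟩
        have hk'2 : k' < 2 * n := by omega
        have hmono := hm.2.1 k' k (by omega) hk
        exact ⟨by omega, (hchar i (by omega)).mpr ⟨k', hk'2, he⟩⟩
    rw [hfe, Finset.card_image_of_injOn, Finset.card_range]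
    intro a ha b hb hab
    simp only [Finset.coe_range, Set.mem_Iio] at ha hb
    exact hinj a b (by omega) (by omega) hab
  have hT : Tpred n (wOf n m) (m k + k + 1) := (hchar _ hpk4).mpr ⟨k, hk, rfl⟩
  have hbeta : beta n (wOf n m) k = m k + k + 1 := by
    have h1 := Nat.nth_count hT
    rw [hcount] at h1
    exact h1
  unfold MOf
  rw [if_pos hk, hbeta]
  omega



/-! ## Greedy construction -/

/-- Greedy construction of a sequence of reals with prescribed "windows". -/
noncomputable def gseq (M : ℕ → ℕ) : ℕ → ℝ
  | k =>
    let t : ℕ → ℝ := fun j => if _ : j < k then gseq M j else 0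
    let L : ℝ := (Finset.range k).fold max 0 (fun j => if M j < k then t j + 1 else t j)
    let R : ℝ := ((Finset.range k).filter (fun j => k ≤ M j)).fold min (L + 2)
      (fun j => t j + 1)
    (L + R) / 2
  termination_by k => k
  decreasing_by exact ‹_ < k›

noncomputable def gL (M : ℕ → ℕ) (k : ℕ) : ℝ :=
  (Finset.range k).fold max 0 (fun j => if M j < k then gseq M j + 1 else gseq M j)

noncomputable def gR (M : ℕ → ℕ) (k : ℕ) : ℝ :=
  ((Finset.range k).filter (fun j => k ≤ M j)).fold min (gL M k + 2) (fun j => gseq M j + 1)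

lemma gseq_def (M : ℕ → ℕ) (k : ℕ) : gseq M k = (gL M k + gR M k) / 2 := by
  conv_lhs => rw [gseq]
  have h1 : (Finset.range k).fold max 0
      (fun j => if M j < k then (if _ : j < k then gseq M j else 0) + 1
        else (if _ : j < k then gseq M j else 0)) = gL M k := by
    apply Finset.fold_congr
    intro j hj
    rw [dif_pos (Finset.mem_range.mp hj)]
  have h2 : ∀ b : ℝ, ((Finset.range k).filter (fun j => k ≤ M j)).fold min b
      (fun j => (if _ : j < k then gseq M j else 0) + 1)
      = ((Finset.range k).filter (fun j => k ≤ M j)).fold min b (fun j => gseq M j + 1) := by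
    intro b
    apply Finset.fold_congr
    intro j hj
    rw [dif_pos (Finset.mem_range.mp (Finset.mem_filter.mp hj).1)]
  simp only []
  rw [h1, h2]
  rfl

lemma gL_nonneg (M : ℕ → ℕ) (k : ℕ) : 0 ≤ gL M k :=
  (Finset.le_fold_max _).mpr (Or.inl le_rfl)

lemma gseq_main (M : ℕ → ℕ) (hge : ∀ k, k ≤ M k) (hmono : Monotone M) :
    ∀ k, 0 < gseq M k ∧ ∀ j, j < k →
      (gseq M j < gseq M k ∧ (k ≤ M j → gseq M k < gseq M j + 1) ∧
        (M j < k → gseq M j + 1 < gseq M k)) := by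
  intro k
  induction k using Nat.strong_induction_on with
  | _ k IH =>
  have hLR : gL M k < gR M k := by
    unfold gR
    rw [Finset.lt_fold_min]
    refine ⟨by linarith, ?_⟩
    intro x hx
    obtain ⟨hxr, hxM⟩ := Finset.mem_filter.mp hx
    have hxk : x < k := Finset.mem_range.mp hxr
    unfold gL
    rw [Finset.fold_max_lt]
    constructor
    · have := (IH x hxk).1
      linarith
    · intro j' hj'
      have hj'k : j' < k := Finset.mem_range.mp hj'
      by_cases hc : M j' < k
      · rw [if_pos hc]
        have hne : j' ≠ x := fun h => by rw [h] at hc; omega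
        rcases lt_or_gt_of_ne hne with hlt | hgt
        · have := ((IH x hxk).2 j' hlt).1
          linarith
        · exfalso
          have := hmono (le_of_lt hgt)
          omega
      · rw [if_neg hc]
        rcases lt_trichotomy j' x with hlt | heq | hgt
        · have := ((IH x hxk).2 j' hlt).1
          linarith
        · rw [heq]; linarith
        · exact ((IH j' hj'k).2 x hgt).2.1 (by omega)
  have hk_def := gseq_def M k
  have hkL : gL M k < gseq M k := by rw [hk_def]; linarith
  have hkR : gseq M k < gR M k := by rw [hk_def]; linarith
  constructor
  · have := gL_nonneg M k
    linarith
  intro j hj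
  have hjr : j ∈ Finset.range k := Finset.mem_range.mpr hj
  refine ⟨?_, ?_, ?_⟩
  · have h1 : gseq M j ≤ gL M k := by
      apply (Finset.le_fold_max _).mpr
      right
      exact ⟨j, hjr, by split_ifs <;> linarith⟩
    linarith
  · intro hkM
    have h1 : gR M k ≤ gseq M j + 1 := by
      apply (Finset.fold_min_le _).mpr
      right
      exact ⟨j, Finset.mem_filter.mpr ⟨hjr, hkM⟩, le_rfl⟩
    linarith
  · intro hMj
    have h1 : gseq M j + 1 ≤ gL M k := by
      apply (Finset.le_fold_max _).mpr
      right
      exact ⟨j, hjr, by rw [if_pos hMj]⟩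
    linarith

lemma gseq_spec (M : ℕ → ℕ) (hge : ∀ k, k ≤ M k) (hmono : Monotone M) :
    StrictMono (gseq M) ∧
    (∀ k l, l ≤ M k → gseq M l < gseq M k + 1) ∧
    (∀ k l, M k < l → gseq M k + 1 < gseq M l) := by
  have main := gseq_main M hge hmono
  refine ⟨?_, ?_, ?_⟩
  · intro j k hjk
    exact ((main k).2 j hjk).1
  · intro k l hl
    rcases lt_trichotomy l k with hlt | heq | hgt
    · have := ((main k).2 l hlt).1
      linarith
    · rw [heq]; linarith
    · exact ((main l).2 k hgt).2.1 hl
  · intro k l hl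
    have hkl : k < l := by have := hge k; omega
    exact ((main l).2 k hkl).2.2 hl

/-- extension of a valid window function to a monotone function on ℕ. -/
def Mex (n : ℕ) (m : ℕ → ℕ) : ℕ → ℕ := fun k => if k < 2 * n then m k else k

/-- symmetrized greedy sequence. -/
noncomputable def tsym (n : ℕ) (m : ℕ → ℕ) (k : ℕ) : ℝ :=
  (gseq (Mex n m) k - gseq (Mex n m) (2 * n - 1 - k) - 1) / 2

lemma Mex_ge {m : ℕ → ℕ} (hm : ValidM n m) : ∀ k, k ≤ Mex n m k := by
  intro k
  unfold Mex
  split_ifs with h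
  · exact (hm.1 k h).1
  · exact le_rfl

lemma Mex_mono {m : ℕ → ℕ} (hm : ValidM n m) : Monotone (Mex n m) := by
  intro k l hkl
  unfold Mex
  split_ifs with h1 h2 h2
  · exact hm.2.1 k l hkl h2
  · have := (hm.1 k h1).2
    omega
  · omega
  · omega

lemma tsym_spec {m : ℕ → ℕ} (hm : ValidM n m) :
    (∀ k l, k < 2 * n → l < 2 * n → k < l → tsym n m k < tsym n m l) ∧
    (∀ k l, k < 2 * n → l < 2 * n → l ≤ m k → tsym n m l < tsym n m k + 1) ∧
    (∀ k l, k < 2 * n → l < 2 * n → m k < l → tsym n m k + 1 < tsym n m l) ∧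
    (∀ k, k < 2 * n → tsym n m (2 * n - 1 - k) = -1 - tsym n m k) := by
  obtain ⟨hsm, hwin1, hwin2⟩ := gseq_spec (Mex n m) (Mex_ge hm) (Mex_mono hm)
  have hMev : ∀ k, k < 2 * n → Mex n m k = m k := by
    intro k hk; unfold Mex; rw [if_pos hk]
  have hrev : ∀ k, k < 2 * n → 2 * n - 1 - (2 * n - 1 - k) = k := by intro k hk; omega
  refine ⟨?_, ?_, ?_, ?_⟩
  · intro k l hk hl hkl
    have h1 : gseq (Mex n m) k < gseq (Mex n m) l := hsm hkl
    have h2 : gseq (Mex n m) (2 * n - 1 - l) < gseq (Mex n m) (2 * n - 1 - k) :=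
      hsm (by omega)
    unfold tsym
    linarith
  · intro k l hk hl hlm
    have h1 : gseq (Mex n m) l < gseq (Mex n m) k + 1 := by
      apply hwin1
      rw [hMev k hk]
      exact hlm
    have h2 : gseq (Mex n m) (2 * n - 1 - k) < gseq (Mex n m) (2 * n - 1 - l) + 1 := by
      apply hwin1
      rw [hMev _ (by omega)]
      exact (hm.2.2 k l hk hl).mp hlm
    unfold tsym
    linarith
  · intro k l hk hl hlm
    have h1 : gseq (Mex n m) k + 1 < gseq (Mex n m) l := by
      apply hwin2
      rw [hMev k hk]
      exact hlm
    have h2 : gseq (Mex n m) (2 * n - 1 - l) + 1 < gseq (Mex n m) (2 * n - 1 - k) := by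
      apply hwin2
      rw [hMev _ (by omega)]
      have := (hm.2.2 k l hk hl)
      have hnot : ¬ (2 * n - 1 - k ≤ m (2 * n - 1 - l)) := fun hc => by
        have := this.mpr hc; omega
      omega
    unfold tsym
    linarith
  · intro k hk
    unfold tsym
    rw [hrev k hk]
    ring

/-! ## Extraction from a point of the complement -/

/-- position of `p` among the sorted values. -/
noncomputable def rho (y : Fin n → ℝ) (p : Fin n × Bool) : ℕ :=
  (Finset.univ.filter (fun q => cc y q < cc y p)).card

lemma cc_swap (y : Fin n → ℝ) (p : Fin n × Bool) : cc y (p.1, !p.2) = -1 - cc y p := by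
  obtain ⟨i, b⟩ := p
  cases b <;> simp [cc] <;> ring

lemma downclosed_eq_range (T : Finset ℕ) (hdc : ∀ a b : ℕ, a < b → b ∈ T → a ∈ T) :
    T = Finset.range T.card := by
  apply Finset.eq_of_subset_of_card_le
  · intro x hx
    have hsub : Finset.range (x + 1) ⊆ T := by
      intro a ha
      have ha' : a < x + 1 := Finset.mem_range.mp ha
      rcases eq_or_lt_of_le (Nat.lt_succ_iff.mp ha') with rfl | hlt
      · exact hx
      · exact hdc a x hlt hx
    have := Finset.card_le_card hsub
    rw [Finset.card_range] at this
    exact Finset.mem_range.mpr (by omega)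
  · rw [Finset.card_range]

lemma extraction {y : Fin n → ℝ} (hy : y ∈ SS n) :
    ∃ mm : ℕ → ℕ, ValidM n mm ∧
      (∀ p, rho y p < 2 * n) ∧
      (∀ p q, cc y p < cc y q ↔ rho y p < rho y q) ∧
      (∀ i : Fin n, rho y (i, true) = 2 * n - 1 - rho y (i, false)) ∧
      (∀ p q, p ≠ q → (cc y p + 1 < cc y q ↔ mm (rho y p) < rho y q)) := by
  classical
  have hcard : Fintype.card (Fin n × Bool) = 2 * n := by
    rw [Fintype.card_prod, Fintype.card_fin, Fintype.card_bool]
    omega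
  have hne : ∀ p q : Fin n × Bool, p ≠ q → cc y p ≠ cc y q := by
    intro p q hpq heq
    apply hy p q hpq
    rw [heq, sub_self]
    simp
  have hne1 : ∀ p q : Fin n × Bool, p ≠ q → cc y p + 1 ≠ cc y q := by
    intro p q hpq heq
    apply hy q p (Ne.symm hpq)
    have he : cc y q - cc y p = 1 := by linarith
    rw [he]
    simp
  have hmono : ∀ p q, cc y p < cc y q → rho y p < rho y q := by
    intro p q hlt
    unfold rho
    apply Finset.card_lt_card
    have hsub : Finset.univ.filter (fun r => cc y r < cc y p)
        ⊆ Finset.univ.filter (fun r => cc y r < cc y q) := by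
      intro r hr
      obtain ⟨_, hr2⟩ := Finset.mem_filter.mp hr
      exact Finset.mem_filter.mpr ⟨Finset.mem_univ r, lt_trans hr2 hlt⟩
    rw [Finset.ssubset_iff_of_subset hsub]
    refine ⟨p, Finset.mem_filter.mpr ⟨Finset.mem_univ p, hlt⟩, ?_⟩
    intro hc
    exact absurd (Finset.mem_filter.mp hc).2 (lt_irrefl _)
  have hiff : ∀ p q, cc y p < cc y q ↔ rho y p < rho y q := by
    intro p q
    refine ⟨hmono p q, ?_⟩
    intro h
    by_contra hc
    push_neg at hc
    rcases eq_or_lt_of_le hc with heq | hlt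
    · by_cases hpq : p = q
      · subst hpq; exact lt_irrefl _ h
      · exact hne q p (fun he => hpq he.symm) heq
    · have := hmono q p hlt
      omega
  have hinj : Function.Injective (rho y) := by
    intro p q hpq
    by_contra hne'
    rcases lt_trichotomy (cc y p) (cc y q) with h | h | h
    · have := hmono p q h; omega
    · exact hne p q hne' h
    · have := hmono q p h; omega
  have hlt2n : ∀ p, rho y p < 2 * n := by
    intro p
    have hsub : Finset.univ.filter (fun q => cc y q < cc y p) ⊆ Finset.univ.erase p := by
      intro r hr
      obtain ⟨_, hr2⟩ := Finset.mem_filter.mp hr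
      refine Finset.mem_erase.mpr ⟨?_, Finset.mem_univ r⟩
      intro he
      rw [he] at hr2
      exact lt_irrefl _ hr2
    have h1 := Finset.card_le_card hsub
    rw [Finset.card_erase_of_mem (Finset.mem_univ p), Finset.card_univ, hcard] at h1
    have hn := p.1.2
    unfold rho
    omega
  have hrev : ∀ p : Fin n × Bool, rho y (p.1, !p.2) = 2 * n - 1 - rho y p := by
    intro p
    have hAB : (Finset.univ.filter (fun q => cc y q < cc y (p.1, !p.2))).card
        = (Finset.univ.filter (fun q => cc y p < cc y q)).card := by
      apply Finset.card_bij (fun q _ => (q.1, !q.2))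
      · intro q hq
        obtain ⟨_, hq2⟩ := Finset.mem_filter.mp hq
        refine Finset.mem_filter.mpr ⟨Finset.mem_univ _, ?_⟩
        rw [cc_swap y p] at hq2
        rw [cc_swap y q]
        linarith
      · intro a _ b _ hab
        obtain ⟨ha1, ha2⟩ := Prod.ext_iff.mp hab
        exact Prod.ext ha1 (Bool.not_inj ha2)
      · intro r hr
        obtain ⟨_, hr2⟩ := Finset.mem_filter.mp hr
        refine ⟨(r.1, !r.2), Finset.mem_filter.mpr ⟨Finset.mem_univ _, ?_⟩, by simp⟩
        rw [cc_swap y p, cc_swap y r]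
        linarith
    have hpart : rho y p + 1 + (Finset.univ.filter (fun q => cc y p < cc y q)).card
        = 2 * n := by
      have hsplit1 : (Finset.univ.filter (fun q => cc y q < cc y p)).card
          + (Finset.univ.filter (fun q => ¬ cc y q < cc y p)).card = 2 * n := by
        rw [Finset.card_filter_add_card_filter_not, Finset.card_univ, hcard]
      have hsplit2 : Finset.univ.filter (fun q => ¬ cc y q < cc y p)
          = insert p (Finset.univ.filter (fun q => cc y p < cc y q)) := by
        ext r
        simp only [Finset.mem_filter, Finset.mem_univ, true_and, Finset.mem_insert]
        constructor
        · intro hr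
          by_cases hrp : r = p
          · exact Or.inl hrp
          · exact Or.inr (lt_of_le_of_ne (not_lt.mp hr)
              (fun he => hne r p hrp he.symm))
        · rintro (rfl | hr)
          · exact lt_irrefl _
          · exact not_lt.mpr (le_of_lt hr)
      have hpnot : p ∉ Finset.univ.filter (fun q => cc y p < cc y q) := by
        intro hc
        exact absurd (Finset.mem_filter.mp hc).2 (lt_irrefl _)
      rw [hsplit2, Finset.card_insert_of_notMem hpnot] at hsplit1
      unfold rho
      omega
    unfold rho at hAB hpart ⊢
    omega
  have hsurj : ∀ k, k < 2 * n → ∃ p, rho y p = k := by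
    intro k hk
    have himg : Finset.image (rho y) Finset.univ = Finset.range (2 * n) := by
      apply Finset.eq_of_subset_of_card_le
      · intro x hx
        obtain ⟨p, _, rfl⟩ := Finset.mem_image.mp hx
        exact Finset.mem_range.mpr (hlt2n p)
      · rw [Finset.card_range, Finset.card_image_of_injective _ hinj,
          Finset.card_univ, hcard]
    have hk' : k ∈ Finset.image (rho y) Finset.univ := by
      rw [himg]; exact Finset.mem_range.mpr hk
    obtain ⟨p, _, hp⟩ := Finset.mem_image.mp hk'
    exact ⟨p, hp⟩
  choose pick hpick using hsurj
  have hwin : ∀ p q : Fin n × Bool, (cc y q < cc y p + 1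
      ↔ rho y q < (Finset.univ.filter (fun r => cc y r < cc y p + 1)).card) := by
    intro p q
    set T := Finset.image (rho y) (Finset.univ.filter (fun r => cc y r < cc y p + 1)) with hT
    have hdc : ∀ a b, a < b → b ∈ T → a ∈ T := by
      intro a b hab hbT
      obtain ⟨r, hrmem, hrr⟩ := Finset.mem_image.mp hbT
      obtain ⟨_, hr2⟩ := Finset.mem_filter.mp hrmem
      have ha2n : a < 2 * n := by have := hlt2n r; omega
      refine Finset.mem_image.mpr ⟨pick a ha2n,
        Finset.mem_filter.mpr ⟨Finset.mem_univ _, ?_⟩, hpick a ha2n⟩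
      have hcc : cc y (pick a ha2n) < cc y r := by
        rw [hiff, hpick]
        omega
      linarith
    have hcardT : T.card = (Finset.univ.filter (fun r => cc y r < cc y p + 1)).card :=
      Finset.card_image_of_injective _ hinj
    constructor
    · intro hq
      have hmem : rho y q ∈ T :=
        Finset.mem_image.mpr ⟨q, Finset.mem_filter.mpr ⟨Finset.mem_univ _, hq⟩, rfl⟩
      rw [downclosed_eq_range T hdc] at hmem
      rw [← hcardT]
      exact Finset.mem_range.mp hmem
    · intro hlt'
      have hmem : rho y q ∈ T := by
        rw [downclosed_eq_range T hdc]
        exact Finset.mem_range.mpr (by rw [hcardT]; exact hlt')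
      obtain ⟨r, hrmem, hrr⟩ := Finset.mem_image.mp hmem
      have hrq : r = q := hinj hrr
      rw [← hrq]
      exact (Finset.mem_filter.mp hrmem).2
  have hcard_ge : ∀ p : Fin n × Bool,
      rho y p < (Finset.univ.filter (fun r => cc y r < cc y p + 1)).card := by
    intro p
    rw [← hwin p p]
    linarith
  have hcard_le : ∀ p : Fin n × Bool,
      (Finset.univ.filter (fun r => cc y r < cc y p + 1)).card ≤ 2 * n := by
    intro p
    calc (Finset.univ.filter (fun r => cc y r < cc y p + 1)).card
        ≤ Finset.univ.card := Finset.card_filter_le _ _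
    _ = 2 * n := by rw [Finset.card_univ, hcard]
  have hpickrho : ∀ p, pick (rho y p) (hlt2n p) = p := fun p => hinj (hpick (rho y p) (hlt2n p))
  set mm : ℕ → ℕ := fun k => if h : k < 2 * n then
      (Finset.univ.filter (fun q => cc y q < cc y (pick k h) + 1)).card - 1 else k with hmmdef
  have hmmval : ∀ p : Fin n × Bool,
      mm (rho y p) = (Finset.univ.filter (fun q => cc y q < cc y p + 1)).card - 1 := by
    intro p
    simp only [hmmdef]
    rw [dif_pos (hlt2n p), hpickrho p]
  have hccpick : ∀ k l (hk : k < 2 * n) (hl : l < 2 * n), k ≤ l →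
      cc y (pick k hk) ≤ cc y (pick l hl) := by
    intro k l hk hl hkl
    rcases eq_or_lt_of_le hkl with rfl | hlt
    · exact le_refl _
    · apply le_of_lt
      rw [hiff, hpick, hpick]
      exact hlt
  have hswap_pick : ∀ k (hk : k < 2 * n),
      pick (2 * n - 1 - k) (by omega) = ((pick k hk).1, !(pick k hk).2) := by
    intro k hk
    apply hinj
    rw [hpick, hrev, hpick]
  have hwin' : ∀ (p : Fin n × Bool) (l : ℕ) (hl : l < 2 * n),
      (l ≤ mm (rho y p) ↔ cc y (pick l hl) < cc y p + 1) := by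
    intro p l hl
    rw [hmmval p]
    have h1 := hwin p (pick l hl)
    have h2 := hcard_ge p
    rw [hpick] at h1
    constructor
    · intro hle
      exact h1.mpr (by omega)
    · intro hcc
      have := h1.mp hcc
      omega
  refine ⟨mm, ⟨?_, ?_, ?_⟩, hlt2n, hiff, fun i => hrev (i, false), ?_⟩
  · intro k hk
    have h1 := hcard_ge (pick k hk)
    have h2 := hcard_le (pick k hk)
    rw [hpick] at h1
    simp only [hmmdef]
    rw [dif_pos hk]
    omega
  · intro k l hkl hl
    have hk : k < 2 * n := by omega
    have hsub : Finset.univ.filter (fun q => cc y q < cc y (pick k hk) + 1)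
        ⊆ Finset.univ.filter (fun q => cc y q < cc y (pick l hl) + 1) := by
      intro r hr
      obtain ⟨_, hr2⟩ := Finset.mem_filter.mp hr
      refine Finset.mem_filter.mpr ⟨Finset.mem_univ _, ?_⟩
      have := hccpick k l hk hl hkl
      linarith
    have h3 := Finset.card_le_card hsub
    have h1 := hcard_ge (pick k hk)
    rw [hpick] at h1
    simp only [hmmdef]
    rw [dif_pos hk, dif_pos hl]
    omega
  · intro k l hk hl
    have hl' : 2 * n - 1 - l < 2 * n := by omega
    have hk' : 2 * n - 1 - k < 2 * n := by omega
    have e1 : mm k = mm (rho y (pick k hk)) := by rw [hpick]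
    have e2 : mm (2 * n - 1 - l) = mm (rho y (pick (2 * n - 1 - l) hl')) := by rw [hpick]
    rw [e1, e2, hwin' (pick k hk) l hl, hwin' (pick (2 * n - 1 - l) hl') (2 * n - 1 - k) hk']
    have hc1 : cc y (pick (2 * n - 1 - k) hk') = -1 - cc y (pick k hk) := by
      rw [show pick (2 * n - 1 - k) hk' = ((pick k hk).1, !(pick k hk).2) from hswap_pick k hk]
      exact cc_swap y _
    have hc2 : cc y (pick (2 * n - 1 - l) hl') = -1 - cc y (pick l hl) := by
      rw [show pick (2 * n - 1 - l) hl' = ((pick l hl).1, !(pick l hl).2) from hswap_pick l hl]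
      exact cc_swap y _
    rw [hc1, hc2]
    constructor <;> intro h <;> linarith
  · intro p q hpq
    have h2 := hwin p q
    have h3 := hne1 p q hpq
    have h4 := hcard_ge p
    have h1 := hmmval p
    constructor
    · intro hlt'
      have h5 : ¬ (cc y q < cc y p + 1) := by linarith
      have h6 : ¬ (rho y q < (Finset.univ.filter (fun r => cc y r < cc y p + 1)).card) :=
        fun hc => h5 (h2.mpr hc)
      omega
    · intro hmmlt
      have h5 : ¬ (rho y q < (Finset.univ.filter (fun r => cc y r < cc y p + 1)).card) := by
        omega
      have h6 : ¬ (cc y q < cc y p + 1) := fun hc => h5 (h2.mp hc)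
      exact lt_of_le_of_ne (not_lt.mp h6) h3

/-! ## Realization -/

def sigRho (τ : Fin n ≃ Fin n) (s : Fin n → Bool) (i : Fin n) : ℕ :=
  if s i then 2 * n - 1 - (τ i : ℕ) else (τ i : ℕ)

noncomputable def realize (τ : Fin n ≃ Fin n) (s : Fin n → Bool) (w : Fin (2 * n) → Bool) :
    Fin n → ℝ :=
  fun i => tsym n (MOf n w) (sigRho τ s i)

noncomputable def Phi (n : ℕ) :
    ((Fin n ≃ Fin n) × (Fin n → Bool) × {w : Fin (2 * n) → Bool // IsBallot w}) →
      ((Fin n × Bool) → (Fin n × Bool) → Bool × Bool) :=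
  fun x => dd (realize x.1 x.2.1 x.2.2.1)

def posR (τ : Fin n ≃ Fin n) (s : Fin n → Bool) (p : Fin n × Bool) : ℕ :=
  if p.2 then 2 * n - 1 - sigRho τ s p.1 else sigRho τ s p.1

lemma sigRho_lt (τ : Fin n ≃ Fin n) (s : Fin n → Bool) (i : Fin n) : sigRho τ s i < 2 * n := by
  unfold sigRho
  have := (τ i).2
  split_ifs <;> omega

lemma posR_lt (τ : Fin n ≃ Fin n) (s : Fin n → Bool) (p : Fin n × Bool) :
    posR τ s p < 2 * n := by
  unfold posR
  have := sigRho_lt τ s p.1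
  split_ifs <;> omega

lemma posR_inj (τ : Fin n ≃ Fin n) (s : Fin n → Bool) : Function.Injective (posR τ s) := by
  rintro ⟨i, b⟩ ⟨j, c⟩ h
  unfold posR sigRho at h
  have hti := (τ i).2
  have htj := (τ j).2
  simp only at h
  cases b <;> cases c <;> split_ifs at h <;>
    first
      | (exfalso; omega)
      | (have hv : (τ i : ℕ) = (τ j : ℕ) := by omega
         have hij' : i = j := τ.injective (Fin.ext hv)
         subst hij'
         first | rfl | contradiction)

lemma cc_realize (τ : Fin n ≃ Fin n) (s : Fin n → Bool) {w : Fin (2 * n) → Bool}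
    (hw : IsBallot w) (p : Fin n × Bool) :
    cc (realize τ s w) p = tsym n (MOf n w) (posR τ s p) := by
  obtain ⟨i, b⟩ := p
  cases b
  · rfl
  · show -1 - realize τ s w i = tsym n (MOf n w) (2 * n - 1 - sigRho τ s i)
    rw [(tsym_spec (MOf_valid hw)).2.2.2 (sigRho τ s i) (sigRho_lt τ s i)]
    rfl

lemma realize_spec (τ : Fin n ≃ Fin n) (s : Fin n → Bool) {w : Fin (2 * n) → Bool}
    (hw : IsBallot w) :
    realize τ s w ∈ SS n ∧
    ∀ p q, dd (realize τ s w) p q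
      = (decide (posR τ s p < posR τ s q),
         decide (MOf n w (posR τ s p) < posR τ s q)) := by
  have hm := MOf_valid hw
  obtain ⟨ts1, ts2, ts3, ts4⟩ := tsym_spec hm
  have hps : ∀ p, posR τ s p < 2 * n := posR_lt τ s
  have hcc : ∀ p, cc (realize τ s w) p = tsym n (MOf n w) (posR τ s p) := cc_realize τ s hw
  have hkey : ∀ a b, a < 2 * n → b < 2 * n →
      (tsym n (MOf n w) a < tsym n (MOf n w) b ↔ a < b) := by
    intro a b ha hb
    constructor
    · intro h
      by_contra hc
      push_neg at hc
      rcases eq_or_lt_of_le hc with rfl | hlt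
      · exact lt_irrefl _ h
      · have := ts1 b a hb ha hlt
        linarith
    · exact ts1 a b ha hb
  have hkey2 : ∀ a b, a < 2 * n → b < 2 * n →
      (tsym n (MOf n w) a + 1 < tsym n (MOf n w) b ↔ MOf n w a < b) := by
    intro a b ha hb
    constructor
    · intro h
      by_contra hc
      push_neg at hc
      have := ts2 a b ha hb hc
      linarith
    · exact ts3 a b ha hb
  constructor
  · intro p q hpq
    rw [notmem_triple]
    have hab : posR τ s p ≠ posR τ s q := fun he => hpq (posR_inj τ s he)
    have ha := hps p
    have hb := hps q
    rw [hcc p, hcc q]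
    refine ⟨?_, ?_, ?_⟩ <;> intro hc
    · rcases le_or_gt (posR τ s q) (MOf n w (posR τ s p)) with h1 | h1
      · have := ts2 _ _ ha hb h1
        linarith
      · have := ts3 _ _ ha hb h1
        linarith
    · rcases lt_trichotomy (posR τ s p) (posR τ s q) with h1 | h1 | h1
      · have := ts1 _ _ ha hb h1
        linarith
      · exact hab h1
      · have := ts1 _ _ hb ha h1
        linarith
    · rcases le_or_gt (posR τ s p) (MOf n w (posR τ s q)) with h1 | h1
      · have := ts2 _ _ hb ha h1
        linarith
      · have := ts3 _ _ hb ha h1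
        linarith
  · intro p q
    refine Prod.ext ?_ ?_ <;> simp only [dd] <;> rw [decide_eq_decide]
    · rw [hcc p, hcc q]
      exact hkey _ _ (hps p) (hps q)
    · rw [hcc p, hcc q]
      exact hkey2 _ _ (hps p) (hps q)

lemma pos_count {F : (Fin n × Bool) → ℕ} (hinj : Function.Injective F)
    (hlt : ∀ p, F p < 2 * n) :
    (∀ p, (Finset.univ.filter (fun q => F q < F p)).card = F p) ∧
    (∀ k, k < 2 * n → ∃ p, F p = k) := by
  classical
  have hcard2 : Fintype.card (Fin n × Bool) = 2 * n := by
    rw [Fintype.card_prod, Fintype.card_fin, Fintype.card_bool]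
    omega
  have himg : Finset.image F Finset.univ = Finset.range (2 * n) := by
    apply Finset.eq_of_subset_of_card_le
    · intro x hx
      obtain ⟨q, _, rfl⟩ := Finset.mem_image.mp hx
      exact Finset.mem_range.mpr (hlt q)
    · rw [Finset.card_range, Finset.card_image_of_injective _ hinj, Finset.card_univ, hcard2]
  constructor
  · intro p
    have he : Finset.image F (Finset.univ.filter (fun q => F q < F p))
        = Finset.range (F p) := by
      ext x
      constructor
      · intro hx
        obtain ⟨q, hq, rfl⟩ := Finset.mem_image.mp hx
        exact Finset.mem_range.mpr (Finset.mem_filter.mp hq).2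
      · intro hx
        have hx' : x ∈ Finset.image F Finset.univ := by
          rw [himg]
          exact Finset.mem_range.mpr (lt_trans (Finset.mem_range.mp hx) (hlt p))
        obtain ⟨q, _, rfl⟩ := Finset.mem_image.mp hx'
        exact Finset.mem_image.mpr ⟨q,
          Finset.mem_filter.mpr ⟨Finset.mem_univ _, Finset.mem_range.mp hx⟩, rfl⟩
    have hc := congrArg Finset.card he
    rw [Finset.card_image_of_injective _ hinj, Finset.card_range] at hc
    exact hc
  · intro k hk
    have hk' : k ∈ Finset.image F Finset.univ := by
      rw [himg]
      exact Finset.mem_range.mpr hk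
    obtain ⟨p, _, hp⟩ := Finset.mem_image.mp hk'
    exact ⟨p, hp⟩

lemma Phi_inj (n : ℕ) : Function.Injective (Phi n) := by
  rintro ⟨τ, s, w⟩ ⟨τ', s', w'⟩ h
  simp only [Phi] at h
  obtain ⟨_, hdd⟩ := realize_spec τ s w.2
  obtain ⟨_, hdd'⟩ := realize_spec τ' s' w'.2
  have hcomp : ∀ p q, (decide (posR τ s p < posR τ s q),
      decide (MOf n w.1 (posR τ s p) < posR τ s q))
      = (decide (posR τ' s' p < posR τ' s' q),
         decide (MOf n w'.1 (posR τ' s' p) < posR τ' s' q)) := by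
    intro p q
    rw [← hdd p q, ← hdd' p q, h]
  have hposR : ∀ p, posR τ s p = posR τ' s' p := by
    intro p
    have hc := (pos_count (posR_inj τ s) (posR_lt τ s)).1
    have hc' := (pos_count (posR_inj τ' s') (posR_lt τ' s')).1
    rw [← hc p, ← hc' p]
    congr 1
    apply Finset.filter_congr
    intro q _
    have := (Prod.ext_iff.mp (hcomp q p)).1
    rw [decide_eq_decide] at this
    simp only [this]
  have hsig : ∀ i, sigRho τ s i = sigRho τ' s' i := fun i => hposR (i, false)
  have hs : s = s' := by
    funext i
    have h1 := hsig i
    unfold sigRho at h1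
    have hti := (τ i).2
    have hti' := (τ' i).2
    cases hsi : s i <;> cases hsi' : s' i
    · rfl
    · exfalso
      rw [hsi, hsi', if_neg (by simp), if_pos rfl] at h1
      omega
    · exfalso
      rw [hsi, hsi', if_pos rfl, if_neg (by simp)] at h1
      omega
    · rfl
  subst hs
  have hτ : τ = τ' := by
    apply Equiv.ext
    intro i
    have h1 := hsig i
    unfold sigRho at h1
    have hti := (τ i).2
    have hti' := (τ' i).2
    apply Fin.ext
    split_ifs at h1 <;> omega
  subst hτ
  have hMeq : ∀ k, k < 2 * n → MOf n w.1 k = MOf n w'.1 k := by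
    intro k hk
    obtain ⟨p, hp⟩ := (pos_count (posR_inj τ s) (posR_lt τ s)).2 k hk
    have hm := MOf_valid w.2
    have hm' := MOf_valid w'.2
    have hMk := (hm.1 k hk).2
    have hMk' := (hm'.1 k hk).2
    by_contra hne
    rcases lt_trichotomy (MOf n w.1 k) (MOf n w'.1 k) with h1 | h1 | h1
    · obtain ⟨q, hq⟩ := (pos_count (posR_inj τ s) (posR_lt τ s)).2 (MOf n w'.1 k) hMk'
      have h2 := (Prod.ext_iff.mp (hcomp p q)).2
      rw [decide_eq_decide] at h2
      rw [← hposR q] at h2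
      rw [hp, hq] at h2
      omega
    · exact hne h1
    · obtain ⟨q, hq⟩ := (pos_count (posR_inj τ s) (posR_lt τ s)).2 (MOf n w.1 k) hMk
      have h2 := (Prod.ext_iff.mp (hcomp p q)).2
      rw [decide_eq_decide] at h2
      rw [← hposR q] at h2
      rw [hp, hq] at h2
      omega
  have hww : w.1 = w'.1 := by
    calc w.1 = wOf n (MOf n w.1) := (wOf_MOf w.2).symm
    _ = wOf n (MOf n w'.1) := by
        funext j
        unfold wOf
        rw [decide_eq_decide]
        constructor
        · rintro ⟨k, hk, he⟩
          exact ⟨k, hk, by rw [← hMeq k hk]; exact he⟩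
        · rintro ⟨k, hk, he⟩
          exact ⟨k, hk, by rw [hMeq k hk]; exact he⟩
    _ = w'.1 := wOf_MOf w'.2
  have hw2 : w = w' := Subtype.ext hww
  rw [hw2]

lemma image_dd_eq_range (n : ℕ) : dd '' SS n = Set.range (Phi n) := by
  classical
  ext v
  constructor
  · rintro ⟨y, hy, rfl⟩
    obtain ⟨mm, hvalid, hlt2n, hiff, hrevi, hwin⟩ := extraction hy
    have hrinj : ∀ p q, rho y p = rho y q → p = q := by
      intro p q hpq
      by_contra hne'
      have h1 : ¬ cc y p < cc y q := fun hc => by rw [hiff] at hc; omega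
      have h2 : ¬ cc y q < cc y p := fun hc => by rw [hiff] at hc; omega
      have h3 : cc y p = cc y q := le_antisymm (not_lt.mp h2) (not_lt.mp h1)
      apply hy p q hne'
      rw [h3, sub_self]
      simp
    have hbound : ∀ i : Fin n, (if n ≤ rho y (i, false) then 2 * n - 1 - rho y (i, false)
        else rho y (i, false)) < n := by
      intro i
      have := hlt2n (i, false)
      have hn := i.2
      split_ifs <;> omega
    have hfinj : Function.Injective (fun i : Fin n =>
        (⟨if n ≤ rho y (i, false) then 2 * n - 1 - rho y (i, false) else rho y (i, false),
          hbound i⟩ : Fin n)) := by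
      intro i j hij
      have hval : (if n ≤ rho y (i, false) then 2 * n - 1 - rho y (i, false)
          else rho y (i, false))
          = (if n ≤ rho y (j, false) then 2 * n - 1 - rho y (j, false)
            else rho y (j, false)) := congrArg Fin.val hij
      have hi2 := hlt2n (i, false)
      have hj2 := hlt2n (j, false)
      split_ifs at hval with h1 h2 h2
      · have he : rho y (i, true) = rho y (j, true) := by
          rw [hrevi i, hrevi j]; omega
        have := hrinj _ _ he
        exact (Prod.ext_iff.mp this).1
      · exfalso
        have he : rho y (i, true) = rho y (j, false) := by rw [hrevi i]; omega
        have := hrinj _ _ he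
        simpa using (Prod.ext_iff.mp this).2
      · exfalso
        have he : rho y (i, false) = rho y (j, true) := by rw [hrevi j]; omega
        have := hrinj _ _ he
        simpa using (Prod.ext_iff.mp this).2
      · have he : rho y (i, false) = rho y (j, false) := by omega
        have := hrinj _ _ he
        exact (Prod.ext_iff.mp this).1
    have hwb : IsBallot (wOf n mm) := wOf_ballot hvalid
    refine ⟨⟨Equiv.ofBijective _ (Finite.injective_iff_bijective.mp hfinj),
      fun i => decide (n ≤ rho y (i, false)), ⟨wOf n mm, hwb⟩⟩, ?_⟩
    obtain ⟨hmem, hdd⟩ := realize_spec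
      (Equiv.ofBijective _ (Finite.injective_iff_bijective.mp hfinj))
      (fun i => decide (n ≤ rho y (i, false))) hwb
    have hbase : ∀ i : Fin n, sigRho
        (Equiv.ofBijective _ (Finite.injective_iff_bijective.mp hfinj))
        (fun i => decide (n ≤ rho y (i, false))) i = rho y (i, false) := by
      intro i
      have h2n := hlt2n (i, false)
      unfold sigRho
      by_cases hni : n ≤ rho y (i, false)
      · rw [show (fun i => decide (n ≤ rho y (i, false))) i = true from decide_eq_true hni,
          if_pos rfl]
        have hτi : ((Equiv.ofBijective _ (Finite.injective_iff_bijective.mp hfinj)) i : ℕ)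
            = if n ≤ rho y (i, false) then 2 * n - 1 - rho y (i, false)
              else rho y (i, false) := rfl
        rw [hτi, if_pos hni]
        omega
      · rw [show (fun i => decide (n ≤ rho y (i, false))) i = false from decide_eq_false hni,
          if_neg (by simp)]
        have hτi : ((Equiv.ofBijective _ (Finite.injective_iff_bijective.mp hfinj)) i : ℕ)
            = if n ≤ rho y (i, false) then 2 * n - 1 - rho y (i, false)
              else rho y (i, false) := rfl
        rw [hτi, if_neg hni]
    have hposR : ∀ p, posR (Equiv.ofBijective _ (Finite.injective_iff_bijective.mp hfinj))
        (fun i => decide (n ≤ rho y (i, false))) p = rho y p := by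
      rintro ⟨i, b⟩
      cases b
      · exact hbase i
      · show 2 * n - 1 - sigRho _ _ i = rho y (i, true)
        rw [hbase i, hrevi i]
    have hMeq : ∀ k, k < 2 * n → MOf n (wOf n mm) k = mm k := MOf_wOf hvalid
    show Phi n _ = dd y
    simp only [Phi]
    funext p q
    rw [hdd p q]
    have e1 : dd y p q = (decide (cc y p < cc y q), decide (cc y p + 1 < cc y q)) := rfl
    rw [e1]
    refine Prod.ext ?_ ?_
    · simp only
      rw [decide_eq_decide, hposR p, hposR q]
      exact (hiff p q).symm
    · simp only
      rw [decide_eq_decide, hposR p, hposR q, hMeq (rho y p) (hlt2n p)]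
      by_cases hpq : p = q
      · subst hpq
        constructor
        · intro hc
          exact absurd hc (by have := (hvalid.1 (rho y p) (hlt2n p)).1; omega)
        · intro hc
          linarith
      · exact (hwin p q hpq).symm
  · rintro ⟨x, rfl⟩
    obtain ⟨τ, s, w⟩ := x
    obtain ⟨hmem, _⟩ := realize_spec τ s w.2
    exact ⟨realize τ s w.1, hmem, rfl⟩

/-! ## Final assembly -/

end TypeCRegions

/-- The number of regions of the (translated) type C Catalan arrangement `𝒞ₙ` in ℝⁿ,
with hyperplanes `2xᵢ ∈ {-2,-1,0}`, `xᵢ+xⱼ ∈ {-2,-1,0}`, `xᵢ-xⱼ ∈ {-1,0,1}`,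
is `2^n · n! · C(2n, n)`. -/
theorem typeC_catalan_regions (n : ℕ) :
    Set.ncard {C : Set (Fin n → ℝ) |
      ∃ x ∈ {y : Fin n → ℝ |
        (∀ i, 2 * y i ∉ ({-2, -1, 0} : Set ℝ)) ∧
        ∀ i j : Fin n, i < j →
          y i + y j ∉ ({-2, -1, 0} : Set ℝ) ∧ y i - y j ∉ ({-1, 0, 1} : Set ℝ)},
      C = connectedComponentIn
        {y : Fin n → ℝ |
          (∀ i, 2 * y i ∉ ({-2, -1, 0} : Set ℝ)) ∧
          ∀ i j : Fin n, i < j →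
            y i + y j ∉ ({-2, -1, 0} : Set ℝ) ∧ y i - y j ∉ ({-1, 0, 1} : Set ℝ)} x} =
    2 ^ n * n.factorial * Nat.choose (2 * n) n := by
  classical
  have e : {y : Fin n → ℝ |
      (∀ i, 2 * y i ∉ ({-2, -1, 0} : Set ℝ)) ∧
      ∀ i j : Fin n, i < j →
        y i + y j ∉ ({-2, -1, 0} : Set ℝ) ∧ y i - y j ∉ ({-1, 0, 1} : Set ℝ)}
      = TypeCRegions.SS n := by
    rw [TypeCRegions.SS_eq_SS']
    rfl
  rw [e]
  rw [TypeCRegions.regions_eq_image n, TypeCRegions.image_dd_eq_range n]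
  rw [← Nat.card_coe_set_eq, Nat.card_range_of_injective (TypeCRegions.Phi_inj n)]
  rw [Nat.card_prod, Nat.card_prod, TypeCRegions.card_ballot n]
  have h1 : Nat.card (Fin n ≃ Fin n) = n.factorial := by
    rw [Nat.card_eq_fintype_card]
    rw [show Fintype.card (Fin n ≃ Fin n) = Fintype.card (Equiv.Perm (Fin n)) from rfl]
    rw [Fintype.card_perm, Fintype.card_fin]
  have h2 : Nat.card (Fin n → Bool) = 2 ^ n := by
    rw [Nat.card_eq_fintype_card, Fintype.card_fun, Fintype.card_bool, Fintype.card_fin]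
  rw [h1, h2]
  ring
end

section
/- The number of symmetric non-nesting partitions of [-2n, 2n] \ {0} (all blocks of size 2, closed under negation of blocks, with no two nested blocks) is binom(2n, n). -/
/-!
A non-nesting perfect matching of a finite chain `U` is determined by its set `S` of openers
(the smaller elements of the blocks): the partner map is increasing from `S` onto `U \ S`, so
the `i`-th opener is matched with the `i`-th closer. Conversely, matching the `i`-th element of
`S` with the `i`-th element of `U \ S` gives a non-nesting matching with opener set `S` exactly
when `S` is a ballot set, i.e. every initial segment of `U` contains at least as many elements
of `S` as of `U \ S`.

If the matching is closed under negation, `a` is an opener iff `-a` is a closer, so `S` is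
determined by `A = S ∩ [-2n, -1]`, and `S` is a ballot set of `[-2n, 2n] \ {0}` iff `A` is a
ballot set of `[-2n, -1]`: the condition at `x > 0` mirrors the condition just below `-x`.
Ballot subsets of size `t ≥ m / 2` of an `m`-element chain number `C(m, t) - C(m, t + 1)`
(remove the largest element), and these telescope to `C(m, m / 2)`.
-/

open Finset

lemma sum_Ico_eq_choose_of_add_choose (c : ℕ → ℕ) {m j : ℕ} (hj : j ≤ m + 1)
    (hc : ∀ t, j ≤ t → c t + m.choose (t + 1) = m.choose t) :
    ∑ t ∈ Ico j (m + 1), c t = m.choose j := by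
  have key : ∀ k, ∑ t ∈ Ico j (j + k), c t + m.choose (j + k) = m.choose j := by
    intro k
    induction k with
    | zero => simp
    | succ k ih =>
      rw [← add_assoc, sum_Ico_succ_top (by omega), add_assoc, hc (j + k) (by omega), ih]
  have := key (m + 1 - j)
  rwa [Nat.add_sub_cancel' hj, Nat.choose_succ_self, add_zero] at this

section Ballot

variable {α : Type*} [LinearOrder α]

def IsBallot (U A : Finset α) : Prop :=
  ∀ x ∈ U, #{u ∈ U \ A | u ≤ x} ≤ #{a ∈ A | a ≤ x}

instance (U A : Finset α) : Decidable (IsBallot U A) := by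
  unfold IsBallot; infer_instance

lemma IsBallot.card_sdiff_le {U A : Finset α} (hb : IsBallot U A) (hA : A ⊆ U) :
    #(U \ A) ≤ #A := by
  rcases U.eq_empty_or_nonempty with rfl | hU
  · simp
  · have := hb _ (U.max'_mem hU)
    rwa [filter_true_of_mem fun u hu => U.le_max' u (sdiff_subset hu),
      filter_true_of_mem fun a ha => U.le_max' a (hA ha)] at this

lemma IsBallot.card_filter_lt_le {U A : Finset α} (hb : IsBallot U A) (y : α) :
    #{u ∈ U \ A | u < y} ≤ #{a ∈ A | a < y} := by
  rcases ({u ∈ U | u < y} : Finset α).eq_empty_or_nonempty with hempty | hne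
  · rw [card_eq_zero.2 (filter_eq_empty_iff.2 fun u hu huy =>
      (filter_eq_empty_iff.1 hempty) (mem_sdiff.1 hu).1 huy)]
    exact Nat.zero_le _
  · obtain ⟨hxU, hxy⟩ := mem_filter.1 (max'_mem _ hne)
    calc #{u ∈ U \ A | u < y} = #{u ∈ U \ A | u ≤ max' _ hne} :=
          congrArg card <| filter_congr fun u hu =>
            ⟨fun h => le_max' _ u (mem_filter.2 ⟨(mem_sdiff.1 hu).1, h⟩),
              fun h => h.trans_lt hxy⟩
      _ ≤ #{a ∈ A | a ≤ max' _ hne} := hb _ hxU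
      _ ≤ #{a ∈ A | a < y} := card_le_card fun a ha =>
            mem_filter.2 ⟨(mem_filter.1 ha).1, (mem_filter.1 ha).2.trans_lt hxy⟩

lemma card_filter_isBallot_eq_zero {U : Finset α} {t : ℕ} (ht : 2 * t < #U) :
    #{A ∈ powersetCard t U | IsBallot U A} = 0 := by
  rw [card_eq_zero, filter_eq_empty_iff]
  intro A hA hb
  rw [mem_powersetCard] at hA
  have := hb.card_sdiff_le hA.1
  rw [card_sdiff_of_subset hA.1] at this
  omega

lemma isBallot_insert_iff {U A : Finset α} {m : α} (hm : ∀ u ∈ U, u < m)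
    (hA : A ⊆ insert m U) (hcard : #(insert m U) ≤ 2 * #A) :
    IsBallot (insert m U) A ↔ IsBallot U (A.erase m) := by
  have hle : ∀ u ∈ insert m U, u ≤ m := by
    simpa using fun u hu => (hm u hu).le
  have htotal : #{u ∈ insert m U \ A | u ≤ m} ≤ #{a ∈ A | a ≤ m} := by
    rw [filter_true_of_mem fun u hu => hle u (sdiff_subset hu),
      filter_true_of_mem fun a ha => hle a (hA ha), card_sdiff_of_subset hA]
    omega
  have hprefix : ∀ x ∈ U,
      #{u ∈ insert m U \ A | u ≤ x} = #{u ∈ U \ A.erase m | u ≤ x} ∧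
        #{a ∈ A | a ≤ x} = #{a ∈ A.erase m | a ≤ x} := fun x hx => by
    have hxm := hm x hx
    constructor <;> congr 1 <;> ext u <;>
      simp only [mem_filter, mem_sdiff, mem_insert, mem_erase] <;> grind
  simp only [IsBallot, forall_mem_insert]
  constructor
  · rintro ⟨-, h⟩ x hx
    rw [← (hprefix x hx).1, ← (hprefix x hx).2]
    exact h x hx
  · intro h
    refine ⟨htotal, fun x hx => ?_⟩
    rw [(hprefix x hx).1, (hprefix x hx).2]
    exact h x hx

lemma card_filter_isBallot_insert {U : Finset α} {m : α} (hm : ∀ u ∈ U, u < m) {s : ℕ}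
    (hs : #U + 1 ≤ 2 * (s + 1)) :
    #{A ∈ powersetCard (s + 1) (insert m U) | IsBallot (insert m U) A} =
      #{A ∈ powersetCard (s + 1) U | IsBallot U A} +
        #{A ∈ powersetCard s U | IsBallot U A} := by
  have hmU : m ∉ U := fun h => (hm m h).false
  rw [powersetCard_succ_insert hmU, filter_union, card_union_of_disjoint, filter_image,
    card_image_of_injOn]
  · congr 1
    · refine congrArg card (filter_congr fun A hA => ?_)
      rw [mem_powersetCard] at hA
      rw [isBallot_insert_iff hm (hA.1.trans (subset_insert _ _))
        (by rw [card_insert_of_notMem hmU]; omega), erase_eq_of_notMem fun h => hmU (hA.1 h)]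
    · refine congrArg card (filter_congr fun A hA => ?_)
      rw [mem_powersetCard] at hA
      have hmA : m ∉ A := fun h => hmU (hA.1 h)
      rw [isBallot_insert_iff hm (insert_subset_insert _ hA.1)
        (by rw [card_insert_of_notMem hmU, card_insert_of_notMem hmA]; omega), erase_insert hmA]
  · intro A hA B hB hAB
    simp only [coe_filter, mem_powersetCard, Set.mem_ofPred_eq] at hA hB
    rw [← erase_insert fun h => hmU (hA.1.1 h), hAB, erase_insert fun h => hmU (hB.1.1 h)]
  · rw [disjoint_left]
    intro A hA hA'
    obtain ⟨B, -, rfl⟩ := mem_image.1 (mem_filter.1 hA').1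
    exact hmU ((mem_powersetCard.1 (mem_filter.1 hA).1).1 (mem_insert_self m B))

theorem card_filter_isBallot_add_choose (U : Finset α) {t : ℕ} (ht : #U ≤ 2 * t) :
    #{A ∈ powersetCard t U | IsBallot U A} + (#U).choose (t + 1) = (#U).choose t := by
  induction U using Finset.induction_on_max generalizing t with
  | empty => cases t <;> simp [IsBallot]
  | insert m U hm ih =>
    have hmU : m ∉ U := fun h => (hm m h).false
    rw [card_insert_of_notMem hmU] at ht ⊢
    obtain ⟨s, rfl⟩ : ∃ s, t = s + 1 := ⟨t - 1, by omega⟩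
    rw [card_filter_isBallot_insert hm (by omega), Nat.choose_succ_succ', Nat.choose_succ_succ']
    have h₁ := ih (t := s + 1) (by omega)
    have h₂ : #{A ∈ powersetCard s U | IsBallot U A} + (#U).choose (s + 1) = (#U).choose s := by
      rcases le_or_gt (#U) (2 * s) with hs | hs
      · exact ih hs
      · rw [card_filter_isBallot_eq_zero hs, zero_add]
        exact (Nat.choose_symm_of_eq_add (by omega)).symm
    omega

theorem card_filter_isBallot (U : Finset α) :
    #{A ∈ U.powerset | IsBallot U A} = (#U).choose (#U / 2) := by
  have hsum : #{A ∈ U.powerset | IsBallot U A} =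
      ∑ t ∈ range (#U + 1), #{A ∈ powersetCard t U | IsBallot U A} := by
    rw [card_eq_sum_card_fiberwise fun A hA => mem_range.2 (Nat.lt_succ_of_le
      (card_le_card (mem_powerset.1 (mem_filter.1 hA).1)))]
    refine sum_congr rfl fun t _ => ?_
    rw [filter_filter, powersetCard_eq_filter, filter_filter]
    simp only [and_comm]
  rw [hsum, ← sum_range_add_sum_Ico _ (by omega : #U - #U / 2 ≤ #U + 1),
    sum_eq_zero fun t ht => card_filter_isBallot_eq_zero (by simp at ht; omega), zero_add,
    sum_Ico_eq_choose_of_add_choose _ (by omega)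
      fun t ht => card_filter_isBallot_add_choose U (by omega),
    Nat.choose_symm (Nat.div_le_self _ 2)]

end Ballot

section PerfectMatching

variable {α : Type*}

structure IsPerfectMatching (X : Set α) (P : Set (Set α)) : Prop where
  iUnion_eq : ⋃ B ∈ P, B = X
  pairwiseDisjoint : P.PairwiseDisjoint id
  ncard_eq_two : ∀ B ∈ P, B.ncard = 2

/-- The partner of `a` in `P`; a junk value when `a` lies in no block. -/
noncomputable def partner (P : Set (Set α)) (a : α) : α :=
  @Classical.epsilon α ⟨a⟩ fun b => b ≠ a ∧ {a, b} ∈ P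

namespace IsPerfectMatching

variable {X : Set α} {P : Set (Set α)} {a b : α} (hP : IsPerfectMatching X P)
include hP

lemma subset {B : Set α} (hB : B ∈ P) : B ⊆ X :=
  hP.iUnion_eq ▸ Set.subset_biUnion_of_mem (u := id) hB

lemma exists_eq_pair {B : Set α} (hB : B ∈ P) : ∃ a ∈ X, ∃ b, b ≠ a ∧ B = {a, b} := by
  obtain ⟨a, b, hab, rfl⟩ := Set.ncard_eq_two.1 (hP.ncard_eq_two B hB)
  exact ⟨a, hP.subset hB (Set.mem_insert a {b}), b, hab.symm, rfl⟩

lemma exists_pair_mem (ha : a ∈ X) : ∃ b, b ≠ a ∧ {a, b} ∈ P := by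
  rw [← hP.iUnion_eq, Set.mem_iUnion₂] at ha
  obtain ⟨B, hB, haB⟩ := ha
  obtain ⟨x, -, y, hyx, rfl⟩ := hP.exists_eq_pair hB
  rcases haB with rfl | rfl
  · exact ⟨y, hyx, hB⟩
  · exact ⟨x, hyx.symm, Set.pair_comm a x ▸ hB⟩

lemma partner_ne_and_mem (ha : a ∈ X) : partner P a ≠ a ∧ {a, partner P a} ∈ P :=
  @Classical.epsilon_spec α (fun b => b ≠ a ∧ ({a, b} : Set α) ∈ P) (hP.exists_pair_mem ha)

lemma partner_eq (hab : {a, b} ∈ P) (hba : b ≠ a) : partner P a = b := by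
  obtain ⟨hne, hmem⟩ := hP.partner_ne_and_mem (hP.subset hab (Set.mem_insert a {b}))
  have heq : ({a, partner P a} : Set α) = {a, b} := hP.pairwiseDisjoint.elim hmem hab
    (Set.not_disjoint_iff.2 ⟨a, Set.mem_insert _ _, Set.mem_insert _ _⟩)
  have hb : b ∈ ({a, partner P a} : Set α) := heq ▸ Set.mem_insert_of_mem a rfl
  rcases hb with hb | hb
  · exact absurd hb hba
  · exact hb.symm

lemma partner_mem (ha : a ∈ X) : partner P a ∈ X :=
  hP.subset (hP.partner_ne_and_mem ha).2 (Set.mem_insert_of_mem a rfl)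

lemma partner_partner (ha : a ∈ X) : partner P (partner P a) = a := by
  obtain ⟨hne, hmem⟩ := hP.partner_ne_and_mem ha
  exact hP.partner_eq (Set.pair_comm a _ ▸ hmem) hne.symm

lemma partner_neg [InvolutiveNeg α] (hneg : ∀ B ∈ P, (fun a => -a) '' B ∈ P) (ha : a ∈ X) :
    partner P (-a) = -partner P a := by
  obtain ⟨hne, hmem⟩ := hP.partner_ne_and_mem ha
  have hmem' := hneg _ hmem
  rw [Set.image_pair] at hmem'
  exact hP.partner_eq hmem' (neg_injective.ne hne)

lemma neg_mem [InvolutiveNeg α] (hneg : ∀ B ∈ P, (fun a => -a) '' B ∈ P) (ha : a ∈ X) :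
    -a ∈ X := by
  have hmem := hneg _ (hP.partner_ne_and_mem ha).2
  rw [Set.image_pair] at hmem
  exact hP.subset hmem (Set.mem_insert _ _)

end IsPerfectMatching

end PerfectMatching

section Nonnesting

variable {α : Type*} [LinearOrder α]

def IsNonnesting (P : Set (Set α)) : Prop :=
  ∀ a b c d, {a, b} ∈ P → {c, d} ∈ P → a < c → c < d → d < b → False

noncomputable def openers (U : Finset α) (P : Set (Set α)) : Finset α :=
  {a ∈ U | a < partner P a}

lemma openers_subset (U : Finset α) (P : Set (Set α)) : openers U P ⊆ U := filter_subset _ _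

namespace IsPerfectMatching

variable {U : Finset α} {P : Set (Set α)} {a : α} (hP : IsPerfectMatching ↑U P)
include hP

lemma partner_lt_of_mem_sdiff_openers (ha : a ∈ U \ openers U P) : partner P a < a := by
  simp only [openers, mem_sdiff, mem_filter, not_and, not_lt] at ha
  exact lt_of_le_of_ne (ha.2 ha.1) (hP.partner_ne_and_mem ha.1).1

lemma partner_mem_sdiff_openers (ha : a ∈ openers U P) : partner P a ∈ U \ openers U P := by
  have haU := (mem_filter.1 ha).1
  simp only [openers, mem_sdiff, mem_filter, not_and, not_lt, hP.partner_partner haU]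
  exact ⟨hP.partner_mem haU, fun _ => (mem_filter.1 ha).2.le⟩

lemma partner_mem_openers (ha : a ∈ U \ openers U P) : partner P a ∈ openers U P := by
  have haU := (mem_sdiff.1 ha).1
  simp only [openers, mem_filter, hP.partner_partner haU]
  exact ⟨hP.partner_mem haU, hP.partner_lt_of_mem_sdiff_openers ha⟩

lemma strictMonoOn_partner (hN : IsNonnesting P) :
    StrictMonoOn (partner P) (openers U P : Set α) := by
  intro a ha b hb hab
  have haU := (mem_filter.1 ha).1
  have hbU := (mem_filter.1 hb).1
  rcases lt_trichotomy (partner P a) (partner P b) with h | h | h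
  · exact h
  · exact absurd (by rw [← hP.partner_partner haU, h, hP.partner_partner hbU]) hab.ne
  · exact (hN _ _ _ _ (hP.partner_ne_and_mem haU).2 (hP.partner_ne_and_mem hbU).2 hab
      (mem_filter.1 hb).2 h).elim

lemma isBallot_openers : IsBallot U (openers U P) := by
  refine fun x _ => card_le_card_of_injOn (partner P) (fun a ha => ?_) ?_
  · obtain ⟨ha, hax⟩ := mem_filter.1 ha
    exact mem_filter.2
      ⟨hP.partner_mem_openers ha, (hP.partner_lt_of_mem_sdiff_openers ha).le.trans hax⟩
  · intro a ha b hb hab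
    rw [← hP.partner_partner (mem_sdiff.1 (mem_filter.1 ha).1).1, hab,
      hP.partner_partner (mem_sdiff.1 (mem_filter.1 hb).1).1]

end IsPerfectMatching

end Nonnesting

section RankMatching

variable {α : Type*} [LinearOrder α] {U S : Finset α}

def rankMatching (U S : Finset α) (h : #(U \ S) = #S) : Set (Set α) :=
  Set.range fun i => {S.orderEmbOfFin rfl i, (U \ S).orderEmbOfFin h i}

lemma eq_and_eq_of_pair_eq_pair {a b c d : α} (h : ({a, b} : Set α) = {c, d}) (hab : a < b)
    (hcd : c < d) : a = c ∧ b = d := by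
  rcases Set.pair_eq_pair_iff.1 h with h' | ⟨rfl, rfl⟩
  · exact h'
  · exact absurd hab (not_lt.2 hcd.le)

variable (h : #(U \ S) = #S)

lemma orderEmbOfFin_ne_orderEmbOfFin_sdiff (i j : Fin #S) :
    S.orderEmbOfFin rfl i ≠ (U \ S).orderEmbOfFin h j := fun hij =>
  (mem_sdiff.1 ((U \ S).orderEmbOfFin_mem h j)).2 (hij ▸ S.orderEmbOfFin_mem rfl i)

lemma isPerfectMatching_rankMatching (hS : S ⊆ U) :
    IsPerfectMatching ↑U (rankMatching U S h) where
  iUnion_eq := by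
    ext a
    have hs : a ∈ S ↔ ∃ i, S.orderEmbOfFin rfl i = a := by
      rw [← mem_coe, ← range_orderEmbOfFin S rfl]; rfl
    have ht : a ∈ U \ S ↔ ∃ i, (U \ S).orderEmbOfFin h i = a := by
      rw [← mem_coe, ← range_orderEmbOfFin (U \ S) h]; rfl
    have hU : a ∈ U ↔ a ∈ S ∨ a ∈ U \ S := by
      rw [mem_sdiff]; constructor <;> grind
    simp only [rankMatching, Set.biUnion_range, Set.mem_iUnion, Set.mem_insert_iff,
      Set.mem_singleton_iff, mem_coe, hU, hs, ht]
    grind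
  pairwiseDisjoint := by
    rintro _ ⟨i, rfl⟩ _ ⟨j, rfl⟩ hne
    have hij : i ≠ j := fun hij => hne (hij ▸ rfl)
    simp only [Function.onFun, id, Set.disjoint_insert_left, Set.disjoint_singleton_left,
      Set.mem_insert_iff, Set.mem_singleton_iff, not_or]
    exact ⟨⟨fun h' => hij ((S.orderEmbOfFin rfl).injective h'),
      orderEmbOfFin_ne_orderEmbOfFin_sdiff h i j⟩,
      fun h' => orderEmbOfFin_ne_orderEmbOfFin_sdiff h j i h'.symm,
      fun h' => hij (((U \ S).orderEmbOfFin h).injective h')⟩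
  ncard_eq_two := by
    rintro _ ⟨i, rfl⟩
    exact Set.ncard_pair (orderEmbOfFin_ne_orderEmbOfFin_sdiff h i i)

lemma orderEmbOfFin_lt_orderEmbOfFin_sdiff (hb : IsBallot U S) (i : Fin #S) :
    S.orderEmbOfFin rfl i < (U \ S).orderEmbOfFin h i := by
  set s := S.orderEmbOfFin rfl
  set t := (U \ S).orderEmbOfFin h
  refine lt_of_le_of_ne (not_lt.1 fun hts => ?_) (orderEmbOfFin_ne_orderEmbOfFin_sdiff h i i)
  have hT : ↑i + 1 ≤ #{u ∈ U \ S | u ≤ t i} := by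
    rw [← Fin.card_Iic]
    refine card_le_card_of_injOn t (fun j hj => ?_) t.injective.injOn
    exact mem_filter.2 ⟨orderEmbOfFin_mem _ h j, t.monotone (mem_Iic.1 hj)⟩
  have hS : #{a ∈ S | a ≤ t i} ≤ i := by
    rw [← Fin.card_Iio i, ← card_map s.toEmbedding]
    refine card_le_card fun a ha => ?_
    obtain ⟨haS, hat⟩ := mem_filter.1 ha
    obtain ⟨j, rfl⟩ : ∃ j, s j = a := by
      rw [← Set.mem_range, range_orderEmbOfFin]; exact haS
    exact mem_map_of_mem _ (mem_Iio.2 (s.lt_iff_lt.1 (hat.trans_lt hts)))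
  have := hb (t i) (mem_sdiff.1 (orderEmbOfFin_mem _ h i)).1
  omega

lemma isNonnesting_rankMatching (hb : IsBallot U S) : IsNonnesting (rankMatching U S h) := by
  rintro a b c d ⟨i, hi⟩ ⟨j, hj⟩ hac hcd hdb
  have hlt := orderEmbOfFin_lt_orderEmbOfFin_sdiff h hb
  obtain ⟨rfl, rfl⟩ := eq_and_eq_of_pair_eq_pair hi (hlt i) (hac.trans (hcd.trans hdb))
  obtain ⟨rfl, rfl⟩ := eq_and_eq_of_pair_eq_pair hj (hlt j) hcd
  exact (((U \ S).orderEmbOfFin h).lt_iff_lt.2 ((S.orderEmbOfFin rfl).lt_iff_lt.1 hac)).not_gt hdb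

lemma partner_rankMatching (hS : S ⊆ U) (i : Fin #S) :
    partner (rankMatching U S h) (S.orderEmbOfFin rfl i) = (U \ S).orderEmbOfFin h i :=
  (isPerfectMatching_rankMatching h hS).partner_eq ⟨i, rfl⟩
    (orderEmbOfFin_ne_orderEmbOfFin_sdiff h i i).symm

lemma openers_rankMatching (hS : S ⊆ U) (hb : IsBallot U S) :
    openers U (rankMatching U S h) = S := by
  have hP := isPerfectMatching_rankMatching h hS
  ext a
  simp only [openers, mem_filter]
  constructor
  · rintro ⟨haU, hlt⟩
    by_contra haS
    obtain ⟨i, rfl⟩ : ∃ i, (U \ S).orderEmbOfFin h i = a := by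
      rw [← Set.mem_range, range_orderEmbOfFin]; exact mem_sdiff.2 ⟨haU, haS⟩
    rw [← partner_rankMatching h hS i, hP.partner_partner (hS (orderEmbOfFin_mem _ rfl i)),
      partner_rankMatching h hS i] at hlt
    exact (orderEmbOfFin_lt_orderEmbOfFin_sdiff h hb i).not_gt hlt
  · intro haS
    obtain ⟨i, rfl⟩ : ∃ i, S.orderEmbOfFin rfl i = a := by
      rw [← Set.mem_range, range_orderEmbOfFin]; exact haS
    rw [partner_rankMatching h hS i]
    exact ⟨hS haS, orderEmbOfFin_lt_orderEmbOfFin_sdiff h hb i⟩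

lemma IsPerfectMatching.rankMatching_openers {P : Set (Set α)} (hP : IsPerfectMatching ↑U P)
    (hN : IsNonnesting P) (hS : openers U P = S) : rankMatching U S h = P := by
  subst hS
  set s := (openers U P).orderEmbOfFin rfl
  have hpartner : partner P ∘ s = (U \ openers U P).orderEmbOfFin h :=
    orderEmbOfFin_unique h (fun i => hP.partner_mem_sdiff_openers (orderEmbOfFin_mem _ rfl i))
      fun i j hij => hP.strictMonoOn_partner hN (orderEmbOfFin_mem _ rfl i)
        (orderEmbOfFin_mem _ rfl j) (s.strictMono hij)
  have hblock : ∀ a ∈ openers U P, {a, partner P a} ∈ rankMatching U (openers U P) h := by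
    intro a ha
    obtain ⟨i, rfl⟩ : ∃ i, s i = a := by
      rw [← Set.mem_range, range_orderEmbOfFin]; exact ha
    exact ⟨i, by rw [← hpartner]; rfl⟩
  ext B
  constructor
  · rintro ⟨i, rfl⟩
    rw [← hpartner]
    exact (hP.partner_ne_and_mem (mem_filter.1 (orderEmbOfFin_mem _ rfl i)).1).2
  · intro hB
    obtain ⟨a, haU, b, hba, rfl⟩ := hP.exists_eq_pair hB
    have hab := hP.partner_eq hB hba
    rcases lt_or_gt_of_ne hba with hlt | hlt
    · have hpb : partner P b = a := hab ▸ hP.partner_partner haU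
      rw [Set.pair_comm, ← hpb]
      exact hblock b (mem_filter.2 ⟨hab ▸ hP.partner_mem haU, hpb ▸ hlt⟩)
    · rw [← hab]
      exact hblock a (mem_filter.2 ⟨haU, hab ▸ hlt⟩)

end RankMatching

section Symmetric

open Pointwise

variable {α : Type*} [AddCommGroup α] [LinearOrder α] [IsOrderedAddMonoid α]

lemma IsPerfectMatching.neg_openers {U : Finset α} {P : Set (Set α)}
    (hP : IsPerfectMatching ↑U P) (hneg : ∀ B ∈ P, (fun a => -a) '' B ∈ P) :
    -openers U P = U \ openers U P := by
  ext a
  simp only [mem_neg', openers, mem_filter, mem_sdiff, not_and, not_lt]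
  constructor
  · rintro ⟨ha, hlt⟩
    have hpa := hP.partner_neg hneg ha
    rw [neg_neg] at hpa
    refine ⟨neg_neg a ▸ hP.neg_mem hneg ha, fun _ => ?_⟩
    rw [hpa]
    exact (neg_lt.1 hlt).le
  · rintro ⟨ha, hle⟩
    refine ⟨hP.neg_mem hneg ha, ?_⟩
    rw [hP.partner_neg hneg ha, neg_lt_neg_iff]
    exact lt_of_le_of_ne (hle ha) (hP.partner_ne_and_mem ha).1

lemma neg_image_mem_rankMatching {U S : Finset α} (h : #(U \ S) = #S) (hneg : -S = U \ S)
    {B : Set α} (hB : B ∈ rankMatching U S h) : (fun a => -a) '' B ∈ rankMatching U S h := by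
  obtain ⟨i, rfl⟩ := hB
  set s := S.orderEmbOfFin rfl
  set t := (U \ S).orderEmbOfFin h
  have hst : (fun j => -t (Fin.rev j)) = s :=
    orderEmbOfFin_unique rfl (fun j => mem_neg'.1 (hneg ▸ orderEmbOfFin_mem _ h _))
      fun j k hjk => neg_lt_neg (t.strictMono (Fin.rev_lt_rev.2 hjk))
  have hs : ∀ j, s j = -t (Fin.rev j) := fun j => (congrFun hst j).symm
  refine ⟨Fin.rev i, ?_⟩
  change ({s i.rev, t i.rev} : Set α) = (fun a => -a) '' {s i, t i}
  rw [Set.image_pair, hs, hs, Fin.rev_rev, neg_neg, Set.pair_comm]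

lemma card_filter_neg_le_add_card_filter_lt (S : Finset α) (x : α) :
    #{t ∈ -S | t ≤ x} + #{s ∈ S | s < -x} = #S := by
  have : #{t ∈ -S | t ≤ x} = #{s ∈ S | ¬s < -x} := by
    rw [← card_neg {s ∈ S | ¬s < -x}, neg_filter]
    simp only [not_lt, neg_le_neg_iff]
  rw [this, add_comm, card_filter_add_card_filter_not]

lemma card_filter_neg_le_le_iff (S : Finset α) (x : α) :
    #{t ∈ -S | t ≤ x} ≤ #{s ∈ S | s ≤ x} ↔
      #{t ∈ -S | t < -x} ≤ #{s ∈ S | s < -x} := by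
  have h₁ := card_filter_neg_le_add_card_filter_lt S x
  have h₂ := card_filter_neg_le_add_card_filter_lt (-S) x
  rw [neg_neg, card_neg] at h₂
  omega

end Symmetric

section Integers

open Pointwise

noncomputable def signedInterval (n : ℕ) : Finset ℤ := (Icc (-(2 * n : ℤ)) (2 * n)).erase 0

noncomputable def negInterval (n : ℕ) : Finset ℤ := Icc (-(2 * n : ℤ)) (-1)

noncomputable def symmExtend (n : ℕ) (A : Finset ℤ) : Finset ℤ := A ∪ -(negInterval n \ A)

variable {n : ℕ} {A S : Finset ℤ}

lemma coe_signedInterval : (signedInterval n : Set ℤ) = {a : ℤ | a ≠ 0 ∧ |a| ≤ 2 * n} :=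
  Set.ext fun _ => by rw [mem_coe, signedInterval, mem_erase, mem_Icc, Set.mem_ofPred, abs_le]

lemma card_negInterval : #(negInterval n) = 2 * n := by
  simp only [negInterval, Int.card_Icc]
  omega

lemma mem_symmExtend {a : ℤ} :
    a ∈ symmExtend n A ↔ a ∈ A ∨ -a ∈ negInterval n ∧ -a ∉ A := by
  rw [symmExtend, mem_union, mem_neg', mem_sdiff]

lemma symmExtend_subset (hA : A ⊆ negInterval n) : symmExtend n A ⊆ signedInterval n := by
  intro a ha
  have := @hA a
  simp only [mem_symmExtend, negInterval, signedInterval, mem_Icc, mem_erase] at ha this ⊢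
  grind

lemma neg_symmExtend (hA : A ⊆ negInterval n) :
    -symmExtend n A = signedInterval n \ symmExtend n A := by
  ext a
  have h₁ := @hA a
  have h₂ := @hA (-a)
  simp only [mem_neg', mem_sdiff, mem_symmExtend, neg_neg, negInterval, signedInterval, mem_Icc,
    mem_erase] at h₁ h₂ ⊢
  grind

lemma card_sdiff_symmExtend (hA : A ⊆ negInterval n) :
    #(signedInterval n \ symmExtend n A) = #(symmExtend n A) := by
  rw [← neg_symmExtend hA, card_neg]

lemma symmExtend_inter_negInterval (hA : A ⊆ negInterval n) :
    symmExtend n A ∩ negInterval n = A := by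
  ext a
  have := @hA a
  simp only [mem_inter, mem_symmExtend, negInterval, mem_Icc] at this ⊢
  grind

lemma symmExtend_inter_negInterval_eq (hS : S ⊆ signedInterval n)
    (hneg : -S = signedInterval n \ S) : symmExtend n (S ∩ negInterval n) = S := by
  ext a
  have h₁ := @hS a
  have h₂ : -a ∈ S ↔ a ∈ signedInterval n ∧ a ∉ S := by
    rw [← mem_neg', hneg, mem_sdiff]
  simp only [mem_inter, mem_symmExtend, negInterval, signedInterval, mem_Icc,
    mem_erase] at h₁ h₂ ⊢
  grind

lemma filter_inter_negInterval (hS : S ⊆ signedInterval n) (p : ℤ → Prop) [DecidablePred p]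
    (hp : ∀ u, p u → u < 0) : {u ∈ S ∩ negInterval n | p u} = {u ∈ S | p u} := by
  ext u
  have h₁ := @hS u
  have h₂ := hp u
  simp only [mem_filter, mem_inter, negInterval, signedInterval, mem_Icc, mem_erase] at h₁ ⊢
  grind

lemma negInterval_sdiff_inter :
    negInterval n \ (S ∩ negInterval n) = (signedInterval n \ S) ∩ negInterval n := by
  ext u
  simp only [mem_sdiff, mem_inter, negInterval, signedInterval, mem_Icc, mem_erase]
  grind

lemma isBallot_iff_inter_negInterval (hS : S ⊆ signedInterval n)
    (hneg : -S = signedInterval n \ S) :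
    IsBallot (signedInterval n) S ↔ IsBallot (negInterval n) (S ∩ negInterval n) := by
  have hfilter : ∀ (p : ℤ → Prop) [DecidablePred p], (∀ u, p u → u < 0) →
      #{u ∈ negInterval n \ (S ∩ negInterval n) | p u} = #{u ∈ signedInterval n \ S | p u} ∧
      #{a ∈ S ∩ negInterval n | p a} = #{a ∈ S | p a} := fun p _ hp => by
    rw [negInterval_sdiff_inter, filter_inter_negInterval sdiff_subset p hp,
      filter_inter_negInterval hS p hp]
    exact ⟨rfl, rfl⟩
  have hmem : ∀ x, x < 0 → (x ∈ negInterval n ↔ x ∈ signedInterval n) := fun x hx => by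
    simp only [negInterval, signedInterval, mem_Icc, mem_erase]
    omega
  constructor
  · intro hb x hx
    have hx0 : x < 0 := Int.lt_of_le_sub_one (mem_Icc.1 hx).2
    obtain ⟨h₁, h₂⟩ := hfilter (· ≤ x) fun u hu => lt_of_le_of_lt hu hx0
    rw [h₁, h₂]
    exact hb x ((hmem x hx0).1 hx)
  · intro hb x hx
    rcases lt_or_gt_of_ne (mem_erase.1 hx).1 with hx0 | hx0
    · obtain ⟨h₁, h₂⟩ := hfilter (· ≤ x) fun u hu => lt_of_le_of_lt hu hx0
      rw [← h₁, ← h₂]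
      exact hb x ((hmem x hx0).2 hx)
    · obtain ⟨h₁, h₂⟩ := hfilter (· < -x) fun u hu => by omega
      have := hb.card_filter_lt_le (-x)
      rw [h₁, h₂, ← hneg] at this
      rwa [← hneg, card_filter_neg_le_le_iff]

lemma isBallot_symmExtend (hA : A ⊆ negInterval n) (hb : IsBallot (negInterval n) A) :
    IsBallot (signedInterval n) (symmExtend n A) := by
  rwa [isBallot_iff_inter_negInterval (symmExtend_subset hA) (neg_symmExtend hA),
    symmExtend_inter_negInterval hA]

def IsSymmNonnestingMatching (n : ℕ) (P : Set (Set ℤ)) : Prop :=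
  IsPerfectMatching ↑(signedInterval n) P ∧ (∀ B ∈ P, (fun a => -a) '' B ∈ P) ∧
    IsNonnesting P

noncomputable def symmNonnestingMatchingEquiv (n : ℕ) :
    {P // IsSymmNonnestingMatching n P} ≃
      {A // A ∈ {A ∈ (negInterval n).powerset | IsBallot (negInterval n) A}} where
  toFun P := ⟨openers (signedInterval n) P.1 ∩ negInterval n, by
    obtain ⟨hP, hneg, -⟩ := P.2
    rw [mem_filter, mem_powerset,
      ← isBallot_iff_inter_negInterval (openers_subset _ _) (hP.neg_openers hneg)]
    exact ⟨inter_subset_right, hP.isBallot_openers⟩⟩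
  invFun A := ⟨rankMatching (signedInterval n) (symmExtend n A)
      (card_sdiff_symmExtend (mem_powerset.1 (mem_filter.1 A.2).1)), by
    obtain ⟨hA, hb⟩ := mem_filter.1 A.2
    rw [mem_powerset] at hA
    exact ⟨isPerfectMatching_rankMatching _ (symmExtend_subset hA),
      fun B => neg_image_mem_rankMatching _ (neg_symmExtend hA),
      isNonnesting_rankMatching _ (isBallot_symmExtend hA hb)⟩⟩
  left_inv P := by
    obtain ⟨P, hP, hneg, hN⟩ := P
    exact Subtype.ext (hP.rankMatching_openers _ hN
      (symmExtend_inter_negInterval_eq (openers_subset _ _) (hP.neg_openers hneg)).symm)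
  right_inv A := by
    obtain ⟨A, hA⟩ := A
    obtain ⟨hA, hb⟩ := mem_filter.1 hA
    rw [mem_powerset] at hA
    refine Subtype.ext ?_
    dsimp only
    rw [openers_rankMatching _ (symmExtend_subset hA) (isBallot_symmExtend hA hb),
      symmExtend_inter_negInterval hA]

end Integers

/-- The number of symmetric non-nesting partitions of `[-2n, 2n] \ {0}`
(all blocks of size 2, closed under negation of blocks, no two nested blocks)
is `C(2n, n)`. -/
theorem symmetric_nonnesting_partitions_count (n : ℕ) :
    Nat.card {P : Set (Set ℤ) //
      (∀ B ∈ P, B ⊆ {a : ℤ | a ≠ 0 ∧ |a| ≤ 2 * n}) ∧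
      (⋃ B ∈ P, B) = {a : ℤ | a ≠ 0 ∧ |a| ≤ 2 * n} ∧
      P.PairwiseDisjoint id ∧
      (∀ B ∈ P, Set.ncard B = 2) ∧
      (∀ B ∈ P, (fun a : ℤ => -a) '' B ∈ P) ∧
      (∀ a b c d : ℤ, ({a, b} : Set ℤ) ∈ P → ({c, d} : Set ℤ) ∈ P →
        a < c → c < d → d < b → False)} =
    Nat.choose (2 * n) n := by
  refine (Nat.card_congr ((Equiv.subtypeEquivRight fun P => ?_).trans
    (symmNonnestingMatchingEquiv n))).trans ?_
  · rw [IsSymmNonnestingMatching, coe_signedInterval]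
    constructor
    · rintro ⟨-, hU, hdisj, hcard, hneg, hN⟩
      exact ⟨⟨hU, hdisj, hcard⟩, hneg, hN⟩
    · rintro ⟨hP, hneg, hN⟩
      exact ⟨fun B => hP.subset, hP.iUnion_eq, hP.pairwiseDisjoint, hP.ncard_eq_two, hneg, hN⟩
  · rw [Nat.card_eq_finsetCard, card_filter_isBallot, card_negInterval,
      Nat.mul_div_cancel_left _ two_pos]
end

section
/- The number of regions of the threshold arrangement in R^n (hyperplanes x_i + x_j = 0 for 1 ≤ i < j ≤ n, n ≥ 2) is 2·(a(n) − n·a(n−1)), where a(n) is the n-th Fubini (ordered Bell) number, the number of ordered set partitions of [n]. -/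
/-!
The regions of a central hyperplane arrangement are its sign chambers, so a region of the
threshold arrangement is determined by which of the sums `x i + x j` are positive. Group the
coordinates into levels of equal absolute value, numbered by decreasing absolute value; then
`x i + x j` has the sign of the level of whichever of `i`, `j` comes first. Merging adjacent levels
of equal sign, and merging a last level consisting of a single coordinate (whose sign is never
seen) into the one before, gives a unique normal form: an ordered set partition whose last block
has at least two elements, with alternating signs starting from a free one. An ordered partition
whose last block is a singleton is the choice of that element together with an ordered partition
of the others, which gives `2 · (a(n) - n · a(n - 1))` regions.
-/

/-- The `n`-th Fubini (ordered Bell) number: the number of ordered set partitions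
of `{1, …, n}` into nonempty blocks. -/
noncomputable def orderedBell (n : ℕ) : ℕ :=
  Nat.card {L : List (Finset (Fin n)) //
    (∀ B ∈ L, B.Nonempty) ∧ L.Pairwise Disjoint ∧ L.foldr (· ∪ ·) ∅ = Finset.univ}

namespace ThresholdArrangement

section HyperplaneArrangement

variable {ι E : Type*} [AddCommGroup E] [Module ℝ E] [TopologicalSpace E] [ContinuousAdd E]
  [ContinuousSMul ℝ E] (f : ι → E →L[ℝ] ℝ)

theorem connectedComponentIn_eq_setOf_mul_pos {x : E} (hx : ∀ a, f a x ≠ 0) :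
    connectedComponentIn {y | ∀ a, f a y ≠ 0} x = {y | ∀ a, 0 < f a x * f a y} := by
  apply subset_antisymm
  · intro y hy a
    by_contra! hya
    obtain ⟨z, hz, hz0⟩ := isPreconnected_connectedComponentIn.intermediate_value hy
      (mem_connectedComponentIn hx) (f a x • f a).continuous.continuousOn
      ⟨by simpa using hya, by simpa using (mul_self_pos.2 (hx a)).le⟩
    simp only [FunLike.coe_smul, Pi.smul_apply, smul_eq_mul, mul_eq_zero] at hz0
    exact hz0.elim (hx a) (connectedComponentIn_subset _ _ hz a)
  · have hconvex : Convex ℝ {y | ∀ a, 0 < f a x * f a y} := by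
      simp only [Set.ofPred_forall]
      exact convex_iInter fun a =>
        (convex_Ioi 0).linear_preimage (f a x • (f a : E →ₗ[ℝ] ℝ))
    refine hconvex.isPreconnected.subset_connectedComponentIn
      (fun a => mul_self_pos.2 (hx a)) fun y hy a hya => ?_
    simpa [hya] using hy a

theorem connectedComponentIn_eq_iff_mul_pos {x y : E} (hx : ∀ a, f a x ≠ 0)
    (hy : ∀ a, f a y ≠ 0) :
    connectedComponentIn {z | ∀ a, f a z ≠ 0} x =
        connectedComponentIn {z | ∀ a, f a z ≠ 0} y ↔ ∀ a, 0 < f a x * f a y := by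
  refine ⟨fun h => ?_, fun h => ?_⟩
  · have hy' : y ∈ connectedComponentIn {z | ∀ a, f a z ≠ 0} x :=
      h ▸ mem_connectedComponentIn (show y ∈ {z | ∀ a, f a z ≠ 0} from hy)
    rwa [connectedComponentIn_eq_setOf_mul_pos f hx] at hy'
  · exact connectedComponentIn_eq (by rwa [connectedComponentIn_eq_setOf_mul_pos f hx])

end HyperplaneArrangement

variable {α : Type*}

theorem add_pos_iff_of_abs_le {R : Type*} [CommRing R] [LinearOrder R] [IsStrictOrderedRing R]
    {a b : R} (hab : |b| ≤ |a|) (hne : a + b ≠ 0) : 0 < a + b ↔ 0 < a := by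
  obtain ⟨hb₁, hb₂⟩ := abs_le.1 hab
  rcases le_or_gt a 0 with ha | ha
  · rw [abs_of_nonpos ha] at hb₁ hb₂
    exact ⟨fun h => by linarith, fun h => by linarith⟩
  · rw [abs_of_pos ha] at hb₁ hb₂
    exact ⟨fun _ => ha, fun _ => lt_of_le_of_ne (by linarith) hne.symm⟩

theorem add_ne_zero_of_abs_lt {R : Type*} [AddGroup R] [LinearOrder R] [AddLeftMono R] {a b : R}
    (h : |b| < |a|) : a + b ≠ 0 := by
  intro hab
  rw [eq_neg_of_add_eq_zero_right hab, abs_neg] at h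
  exact lt_irrefl _ h

noncomputable def levelPoint (s : ℕ → Bool) (c : α → ℕ) (i : α) : ℝ :=
  (if s (c i) then 1 else -1) * 2⁻¹ ^ c i

theorem abs_levelPoint (s : ℕ → Bool) (c : α → ℕ) (i : α) :
    |levelPoint s c i| = 2⁻¹ ^ c i := by
  unfold levelPoint
  split <;> simp

theorem levelPoint_pos_iff (s : ℕ → Bool) (c : α → ℕ) (i : α) :
    0 < levelPoint s c i ↔ s (c i) = true := by
  unfold levelPoint
  split <;> simp [*]

theorem levelPoint_add_ne_zero (s : ℕ → Bool) (c : α → ℕ) (i j : α) :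
    levelPoint s c i + levelPoint s c j ≠ 0 := by
  wlog hle : c i ≤ c j generalizing i j
  · rw [add_comm]; exact this j i (le_of_not_ge hle)
  rcases hle.lt_or_eq with hlt | heq
  · refine add_ne_zero_of_abs_lt ?_
    rw [abs_levelPoint, abs_levelPoint]
    exact pow_lt_pow_right_of_lt_one₀ (by norm_num) (by norm_num) hlt
  · have hpt : levelPoint s c j = levelPoint s c i := by simp only [levelPoint, heq]
    have hne : levelPoint s c i ≠ 0 := by
      rw [← abs_ne_zero, abs_levelPoint]; positivity
    rw [hpt, ← two_mul]
    exact mul_ne_zero two_ne_zero hne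

theorem levelPoint_add_pos_iff (s : ℕ → Bool) (c : α → ℕ) (i j : α) :
    0 < levelPoint s c i + levelPoint s c j ↔ s (min (c i) (c j)) = true := by
  wlog hle : c i ≤ c j generalizing i j
  · rw [add_comm, min_comm]; exact this j i (le_of_not_ge hle)
  rw [add_pos_iff_of_abs_le _ (levelPoint_add_ne_zero s c i j), levelPoint_pos_iff,
    min_eq_left hle]
  rw [abs_levelPoint, abs_levelPoint]
  exact pow_le_pow_of_le_one (by norm_num) (by norm_num) hle

open Finset in
theorem card_filter_lt_le_card_filter_lt_iff [Fintype α] {β : Type*} [LinearOrder β]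
    (f : α → β) (i j : α) : #{k | f i < f k} ≤ #{k | f j < f k} ↔ f j ≤ f i := by
  refine ⟨fun h => ?_, fun h => card_le_card fun k => by simpa using h.trans_lt⟩
  by_contra! hlt
  refine h.not_gt (card_lt_card ⟨fun k => by simpa using hlt.trans, fun hsub => ?_⟩)
  have hj := hsub (show j ∈ ({k | f i < f k} : Finset α) by simpa using hlt)
  simp at hj

open Finset in
theorem exists_levels_of_pairwise_add_ne_zero [Fintype α] {x : α → ℝ}
    (hx : Pairwise fun i j => x i + x j ≠ 0) :
    ∃ (c : α → ℕ) (s : ℕ → Bool),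
      ∀ i j, i ≠ j → (0 < x i + x j ↔ s (min (c i) (c j)) = true) := by
  let c i := #{k | |x i| < |x k|}
  have hc : ∀ i j, c i ≤ c j ↔ |x j| ≤ |x i| :=
    card_filter_lt_le_card_filter_lt_iff fun i => |x i|
  have hsame : ∀ i j, c i = c j → x i = x j := by
    intro i j hij
    rcases eq_or_ne i j with rfl | hne
    · rfl
    rcases abs_eq_abs.1 (le_antisymm ((hc j i).1 hij.ge) ((hc i j).1 hij.le)) with h | h
    · exact h
    · exact absurd (by linarith) (hx hne)
  refine ⟨c, fun k => decide (∃ i, c i = k ∧ 0 < x i), fun i j hij => ?_⟩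
  wlog hle : c i ≤ c j generalizing i j
  · rw [add_comm, min_comm]; exact this j i hij.symm (le_of_not_ge hle)
  rw [min_eq_left hle, add_pos_iff_of_abs_le ((hc i j).1 hle) (hx hij), decide_eq_true_iff]
  exact ⟨fun h => ⟨i, rfl, h⟩, fun ⟨k, hk, hpos⟩ => hsame k i hk ▸ hpos⟩

def IsGapless (c : α → ℕ) : Prop := ∀ i k, k < c i → ∃ j, c j = k

def HasStrictMax (c : α → ℕ) : Prop := ∃ i, ∀ j, j ≠ i → c j < c i

def alternating (δ : Bool) : ℕ → Bool
  | 0 => δ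
  | k + 1 => !alternating δ k

theorem alternating_succ_ne (δ : Bool) (k : ℕ) :
    alternating δ (k + 1) ≠ alternating δ k := by
  simp [alternating]

theorem alternating_left_injective (k : ℕ) : Function.Injective (alternating · k) := by
  intro δ δ' h
  induction k with
  | zero => exact h
  | succ k ih => exact ih (by simpa [alternating] using h)

theorem IsGapless.exists_eq_of_le {c : α → ℕ} (hc : IsGapless c) {i : α} {k : ℕ}
    (hk : k ≤ c i) : ∃ j, c j = k :=
  hk.lt_or_eq.elim (hc i k) fun h => ⟨i, h.symm⟩

theorem IsGapless.of_succ {c : α → ℕ} (h : ∀ k, (∃ i, c i = k + 1) → ∃ j, c j = k) :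
    IsGapless c := by
  suffices ∀ m k, k < m → (∃ i, c i = m) → ∃ j, c j = k from
    fun i k hk => this (c i) k hk ⟨i, rfl⟩
  intro m
  induction m with
  | zero => intro k hk; omega
  | succ m ih =>
    intro k hk hm
    obtain ⟨j, hj⟩ := h m hm
    rcases (Nat.lt_succ_iff.1 hk).lt_or_eq with hlt | rfl
    · exact ih k hlt ⟨j, hj⟩
    · exact ⟨j, hj⟩

def mergeSigns (s : ℕ → Bool) (k t : ℕ) : Bool := if t < k then s t else s (t + 1)

def mergeLevel (k a : ℕ) : ℕ := if a ≤ k then a else a - 1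

theorem mergeLevel_monotone (k : ℕ) : Monotone (mergeLevel k) := by
  intro a b hab
  unfold mergeLevel
  split_ifs <;> omega

theorem mergeSigns_mergeLevel {s : ℕ → Bool} {k a : ℕ} (h : a = k → s k = s (k + 1)) :
    mergeSigns s k (mergeLevel k a) = s a := by
  unfold mergeSigns mergeLevel
  rcases lt_trichotomy a k with hlt | rfl | hgt
  · simp [hlt, hlt.le]
  · simp [h rfl]
  · simp only [show ¬a ≤ k by omega, ↓reduceIte, show ¬a - 1 < k by omega]
    congr 1
    omega

theorem mergeSigns_min_mergeLevel {s : ℕ → Bool} {c : α → ℕ} {k : ℕ}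
    (hk : (∀ j, c j ≠ k) ∨ s k = s (k + 1)) (i j : α) :
    mergeSigns s k (min (mergeLevel k (c i)) (mergeLevel k (c j))) = s (min (c i) (c j)) := by
  rw [← (mergeLevel_monotone k).map_min, mergeSigns_mergeLevel]
  intro hmin
  refine hk.resolve_left fun hempty => ?_
  rcases min_choice (c i) (c j) with h | h
  · exact hempty i (h ▸ hmin)
  · exact hempty j (h ▸ hmin)

theorem min_min_sub_one_of_lt {c : α → ℕ} {i₀ : α} (hi₀ : ∀ j, j ≠ i₀ → c j < c i₀) {i j : α}
    (hij : i ≠ j) : min (min (c i) (c i₀ - 1)) (min (c j) (c i₀ - 1)) = min (c i) (c j) := by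
  rcases eq_or_ne i i₀ with rfl | hi
  · have := hi₀ j hij.symm; omega
  · have := hi₀ i hi; omega

theorem isGapless_and_eq_alternating_of_succ {c : α → ℕ} {s : ℕ → Bool}
    (h : ∀ k, (∃ i, c i = k + 1) → (∃ j, c j = k) ∧ s k ≠ s (k + 1)) :
    IsGapless c ∧ ∀ i, ∀ a ≤ c i, s a = alternating (s 0) a := by
  have hc : IsGapless c := .of_succ fun k hk => (h k hk).1
  refine ⟨hc, fun i a ha => ?_⟩
  induction a with
  | zero => rfl
  | succ a ih =>
    rw [alternating, ← ih (by omega)]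
    exact Bool.eq_not_of_ne (h a (hc.exists_eq_of_le ha)).2.symm

theorem exists_alternating_normal_form [Finite α] [Nontrivial α] (s : ℕ → Bool) (c : α → ℕ) :
    ∃ δ c₀, IsGapless c₀ ∧ ¬HasStrictMax c₀ ∧
      ∀ i j, i ≠ j → s (min (c i) (c j)) = alternating δ (min (c₀ i) (c₀ j)) := by
  obtain ⟨N, hN⟩ := (Set.finite_range c).bddAbove
  replace hN : ∀ i, c i ≤ N := fun i => hN ⟨i, rfl⟩
  induction N using Nat.strong_induction_on generalizing c s with
  | _ N ih =>
  -- Either two adjacent levels can be merged, or a strict maximum can be lowered by one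
  -- (its own sign is never seen), or `c` is already in normal form.
  by_cases hmerge : ∃ k, (∃ i, c i = k + 1) ∧ ((∀ j, c j ≠ k) ∨ s k = s (k + 1))
  · obtain ⟨k, ⟨i₁, hi₁⟩, hk⟩ := hmerge
    have hbound : ∀ i, mergeLevel k (c i) ≤ N - 1 := fun i => by
      have := hN i; have := hN i₁; unfold mergeLevel; split_ifs <;> omega
    obtain ⟨δ, c₀, hc₀, hm₀, hs₀⟩ :=
      ih (N - 1) (by have := hN i₁; omega) (mergeSigns s k) _ hbound
    exact ⟨δ, c₀, hc₀, hm₀, fun i j hij =>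
      (mergeSigns_min_mergeLevel hk i j).symm.trans (hs₀ i j hij)⟩
  by_cases hmax : HasStrictMax c
  · obtain ⟨i₀, hi₀⟩ := hmax
    obtain ⟨j₀, hj₀⟩ := exists_ne i₀
    obtain ⟨δ, c₀, hc₀, hm₀, hs₀⟩ := ih (N - 1) (by have := hN i₀; have := hi₀ j₀ hj₀; omega) s
      (fun j => min (c j) (c i₀ - 1)) fun j => by have := hN i₀; omega
    exact ⟨δ, c₀, hc₀, hm₀, fun i j hij => min_min_sub_one_of_lt hi₀ hij ▸ hs₀ i j hij⟩
  push Not at hmerge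
  obtain ⟨hc, halt⟩ := isGapless_and_eq_alternating_of_succ hmerge
  exact ⟨s 0, c, hc, hmax, fun i j _ => halt i _ (min_le_left _ _)⟩

theorem exists_ne_min_eq {c : α → ℕ} (hc : IsGapless c) (hm : ¬HasStrictMax c) {i : α} {k : ℕ}
    (hk : k ≤ c i) : ∃ j, j ≠ i ∧ k ≤ c j ∧ min (c i) (c j) = k := by
  rcases hk.lt_or_eq with hlt | rfl
  · obtain ⟨j, rfl⟩ := hc i k hlt
    exact ⟨j, fun h => by simp [h] at hlt, le_rfl, min_eq_right hlt.le⟩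
  · obtain ⟨j, hji, hj⟩ : ∃ j, j ≠ i ∧ c i ≤ c j := by
      by_contra! h
      exact hm ⟨i, h⟩
    exact ⟨j, hji, hj, min_eq_left hj⟩

theorem le_of_alternating_min_eq {δ δ' : Bool} {c c' : α → ℕ} (hc : IsGapless c)
    (hm : ¬HasStrictMax c)
    (h : ∀ i j, i ≠ j → alternating δ (min (c i) (c j)) = alternating δ' (min (c' i) (c' j)))
    {k : ℕ} (hk : ∀ i, k ≤ c i → k ≤ c' i) {i : α} (hi : k + 1 ≤ c i) : k + 1 ≤ c' i := by
  by_contra! hlt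
  obtain ⟨j₁, hj₁, hkj₁, hmin₁⟩ := exists_ne_min_eq hc hm (i := i) (k := k) (by omega)
  obtain ⟨j₂, hj₂, hkj₂, hmin₂⟩ := exists_ne_min_eq hc hm hi
  have h₁ := h i j₁ hj₁.symm
  have h₂ := h i j₂ hj₂.symm
  have := hk i (by omega); have := hk j₁ hkj₁; have := hk j₂ (by omega)
  rw [hmin₁, show min (c' i) (c' j₁) = k by omega] at h₁
  rw [hmin₂, show min (c' i) (c' j₂) = k by omega] at h₂
  exact alternating_succ_ne δ k (h₂.trans h₁.symm)

theorem eq_of_alternating_min_eq [Nontrivial α] {δ δ' : Bool} {c c' : α → ℕ}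
    (hc : IsGapless c) (hc' : IsGapless c') (hm : ¬HasStrictMax c) (hm' : ¬HasStrictMax c')
    (h : ∀ i j, i ≠ j → alternating δ (min (c i) (c j)) = alternating δ' (min (c' i) (c' j))) :
    δ = δ' ∧ c = c' := by
  have hle : ∀ k i, k ≤ c i ↔ k ≤ c' i := by
    intro k
    induction k with
    | zero => simp
    | succ k ih =>
      exact fun i => ⟨le_of_alternating_min_eq hc hm h (fun i => (ih i).1),
        le_of_alternating_min_eq hc' hm' (fun i j hij => (h i j hij).symm) (fun i => (ih i).2)⟩
  have hcc : c = c' := funext fun i => le_antisymm ((hle _ i).1 le_rfl) ((hle _ i).2 le_rfl)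
  subst hcc
  obtain ⟨i, j, hij⟩ := exists_pair_ne α
  exact ⟨alternating_left_injective _ (h i j hij), rfl⟩

section Counting

open Finset

theorem mem_foldr_union [DecidableEq α] (L : List (Finset α)) (i : α) :
    i ∈ L.foldr (· ∪ ·) ∅ ↔ ∃ B ∈ L, i ∈ B := by
  induction L with
  | nil => simp
  | cons B L ih => simp [ih]

variable [Fintype α]

def numLevels (c : α → ℕ) : ℕ := univ.sup fun i => c i + 1

theorem lt_numLevels (c : α → ℕ) (i : α) : c i < numLevels c :=
  Nat.lt_of_succ_le (le_sup (f := fun i => c i + 1) (mem_univ i))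

theorem IsGapless.exists_eq_of_lt_numLevels {c : α → ℕ} (hc : IsGapless c) {k : ℕ}
    (hk : k < numLevels c) : ∃ i, c i = k := by
  obtain ⟨i, -, hi⟩ := (Finset.lt_sup_iff (f := fun i => c i + 1)).1 hk
  exact hc.exists_eq_of_le (Nat.le_of_lt_succ hi)

theorem IsGapless.numLevels_le_card [DecidableEq α] {c : α → ℕ} (hc : IsGapless c) :
    numLevels c ≤ Fintype.card α := by
  calc numLevels c = #(range (numLevels c)) := (card_range _).symm
    _ ≤ #(univ.image c) := card_le_card fun k hk => by
        obtain ⟨i, rfl⟩ := hc.exists_eq_of_lt_numLevels (mem_range.1 hk)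
        exact mem_image_of_mem c (mem_univ i)
    _ ≤ Fintype.card α := card_image_le

theorem finite_setOf_isGapless : {c : α → ℕ | IsGapless c}.Finite := by
  classical
  refine (Set.Finite.pi' fun _ => Set.finite_lt_nat (Fintype.card α)).subset fun c hc i => ?_
  exact (lt_numLevels c i).trans_le (IsGapless.numLevels_le_card hc)

theorem ncard_setOf_isGapless :
    {c : α → ℕ | IsGapless c}.ncard =
      {c : α → ℕ | IsGapless c ∧ ¬HasStrictMax c}.ncard +
        {c : α → ℕ | IsGapless c ∧ HasStrictMax c}.ncard := by
  rw [← Set.ncard_inter_add_ncard_sdiff_eq_ncard {c : α → ℕ | IsGapless c}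
    {c | HasStrictMax c} finite_setOf_isGapless, add_comm]
  rfl

section OrderedPartition

def levelBlocks (c : α → ℕ) : List (Finset α) :=
  (List.range (numLevels c)).map fun k => ({i | c i = k} : Finset α)

theorem length_levelBlocks (c : α → ℕ) : (levelBlocks c).length = numLevels c := by
  simp [levelBlocks]

theorem getElem_levelBlocks (c : α → ℕ) {k : ℕ} (hk : k < (levelBlocks c).length) :
    (levelBlocks c)[k] = ({i | c i = k} : Finset α) := by
  simp [levelBlocks]

variable [DecidableEq α]

def IsOrderedPartition (L : List (Finset α)) : Prop :=
  (∀ B ∈ L, B.Nonempty) ∧ L.Pairwise Disjoint ∧ L.foldr (· ∪ ·) ∅ = univ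

def blockIndex (L : List (Finset α)) (i : α) : ℕ := L.findIdx (i ∈ ·)

variable {L : List (Finset α)}

theorem IsOrderedPartition.blockIndex_lt (hL : IsOrderedPartition L) (i : α) :
    blockIndex L i < L.length := by
  obtain ⟨B, hB, hi⟩ := (mem_foldr_union L i).1 (hL.2.2 ▸ mem_univ i)
  exact List.findIdx_lt_length.2 ⟨B, hB, by simpa using hi⟩

theorem IsOrderedPartition.blockIndex_eq_iff (hL : IsOrderedPartition L) {i : α} {k : ℕ}
    (hk : k < L.length) : blockIndex L i = k ↔ i ∈ L[k] := by
  refine ⟨fun h => ?_, fun hi => ?_⟩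
  · subst h
    exact of_decide_eq_true (List.findIdx_getElem (w := hL.blockIndex_lt i))
  · rw [blockIndex, List.findIdx_eq hk]
    refine ⟨by simpa using hi, fun j hj => ?_⟩
    have := List.pairwise_iff_getElem.1 hL.2.1 j k (hj.trans hk) hk hj
    simpa using Finset.disjoint_right.1 this hi

theorem IsOrderedPartition.isGapless_blockIndex (hL : IsOrderedPartition L) :
    IsGapless (blockIndex L) := by
  intro i k hk
  have hkL : k < L.length := hk.trans (hL.blockIndex_lt i)
  obtain ⟨j, hj⟩ := hL.1 _ (List.getElem_mem hkL)
  exact ⟨j, (hL.blockIndex_eq_iff hkL).2 hj⟩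

theorem IsOrderedPartition.numLevels_blockIndex (hL : IsOrderedPartition L) :
    numLevels (blockIndex L) = L.length := by
  refine le_antisymm (Finset.sup_le fun i _ => hL.blockIndex_lt i) (le_of_forall_lt fun k hk => ?_)
  obtain ⟨j, hj⟩ := hL.1 _ (List.getElem_mem hk)
  exact (hL.blockIndex_eq_iff hk).2 hj ▸ lt_numLevels _ j

theorem IsGapless.isOrderedPartition_levelBlocks {c : α → ℕ} (hc : IsGapless c) :
    IsOrderedPartition (levelBlocks c) := by
  refine ⟨fun B hB => ?_, ?_, ?_⟩
  · obtain ⟨k, hk, rfl⟩ := List.mem_map.1 hB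
    obtain ⟨i, hi⟩ := hc.exists_eq_of_lt_numLevels (List.mem_range.1 hk)
    exact ⟨i, by simpa using hi⟩
  · refine List.pairwise_map.2 (List.pairwise_lt_range.imp fun hkl => ?_)
    exact Finset.disjoint_filter.2 fun i _ hk hl => hkl.ne (hk.symm.trans hl)
  · ext i
    simpa [mem_foldr_union, levelBlocks] using lt_numLevels c i

def orderedPartitionEquivGapless :
    {L : List (Finset α) // IsOrderedPartition L} ≃ {c : α → ℕ // IsGapless c} where
  toFun L := ⟨blockIndex L.1, L.2.isGapless_blockIndex⟩
  invFun c := ⟨levelBlocks c.1, c.2.isOrderedPartition_levelBlocks⟩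
  left_inv := fun ⟨L, hL⟩ => Subtype.ext <| List.ext_getElem
    (by rw [length_levelBlocks, hL.numLevels_blockIndex]) fun k h₁ h₂ => by
      ext i
      simp [getElem_levelBlocks, hL.blockIndex_eq_iff h₂]
  right_inv := fun ⟨c, hc⟩ => Subtype.ext <| funext fun i => by
    have hlt : c i < (levelBlocks c).length := (length_levelBlocks c).symm ▸ lt_numLevels c i
    exact (hc.isOrderedPartition_levelBlocks.blockIndex_eq_iff hlt).2 (by
      simp [getElem_levelBlocks])

end OrderedPartition

variable {m : ℕ}

def insertTopLevel (i₀ : Fin (m + 1)) (d : Fin m → ℕ) : Fin (m + 1) → ℕ :=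
  Fin.insertNth (α := fun _ => ℕ) i₀ (numLevels d) d

@[simp]
theorem insertTopLevel_apply_same (i₀ : Fin (m + 1)) (d : Fin m → ℕ) :
    insertTopLevel i₀ d i₀ = numLevels d :=
  Fin.insertNth_apply_same _ _ _

@[simp]
theorem insertTopLevel_apply_succAbove (i₀ : Fin (m + 1)) (d : Fin m → ℕ) (j : Fin m) :
    insertTopLevel i₀ d (i₀.succAbove j) = d j :=
  Fin.insertNth_apply_succAbove _ _ _ _

theorem isGapless_insertTopLevel (i₀ : Fin (m + 1)) {d : Fin m → ℕ} (hd : IsGapless d) :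
    IsGapless (insertTopLevel i₀ d) := by
  have key : ∀ k, (∃ j, d j = k) → ∃ i, insertTopLevel i₀ d i = k :=
    fun k ⟨j, hj⟩ => ⟨i₀.succAbove j, by simpa using hj⟩
  intro i k hk
  induction i using Fin.succAboveCases i₀ with
  | x => exact key k (hd.exists_eq_of_lt_numLevels (by simpa using hk))
  | p j => exact key k (hd j k (by simpa using hk))

theorem insertTopLevel_lt (i₀ : Fin (m + 1)) (d : Fin m → ℕ) {i : Fin (m + 1)}
    (hi : i ≠ i₀) :
    insertTopLevel i₀ d i < insertTopLevel i₀ d i₀ := by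
  obtain ⟨j, rfl⟩ := Fin.exists_succAbove_eq hi
  simpa using lt_numLevels d j

theorem injective_insertTopLevel :
    Function.Injective fun p : Fin (m + 1) × (Fin m → ℕ) => insertTopLevel p.1 p.2 := by
  rintro ⟨i₀, d⟩ ⟨i₁, e⟩ h
  simp only at h
  obtain rfl : i₀ = i₁ := by
    by_contra hne
    have h₀ := insertTopLevel_lt i₀ d (Ne.symm hne)
    have h₁ := insertTopLevel_lt i₁ e hne
    rw [h] at h₀
    exact lt_asymm h₀ h₁
  simpa [insertTopLevel] using congrArg (Fin.removeNth i₀) h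

theorem isGapless_removeNth {c : Fin (m + 1) → ℕ} {i₀ : Fin (m + 1)} (hc : IsGapless c)
    (hi₀ : ∀ j, j ≠ i₀ → c j < c i₀) : IsGapless (Fin.removeNth i₀ c) := by
  intro j k hk
  obtain ⟨i, hi⟩ := hc _ k hk
  have hi' : i ≠ i₀ := by
    rintro rfl
    exact (hi₀ _ (Fin.succAbove_ne _ j)).not_gt (hi ▸ hk)
  obtain ⟨j', rfl⟩ := Fin.exists_succAbove_eq hi'
  exact ⟨j', hi⟩

theorem numLevels_removeNth {c : Fin (m + 1) → ℕ} {i₀ : Fin (m + 1)} (hc : IsGapless c)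
    (hi₀ : ∀ j, j ≠ i₀ → c j < c i₀) : numLevels (Fin.removeNth i₀ c) = c i₀ := by
  refine le_antisymm (Finset.sup_le fun j _ => hi₀ _ (Fin.succAbove_ne i₀ j)) ?_
  rcases Nat.eq_zero_or_pos (c i₀) with h0 | hpos
  · exact h0 ▸ Nat.zero_le _
  obtain ⟨i, hi⟩ := hc i₀ (c i₀ - 1) (by omega)
  have hi' : i ≠ i₀ := by rintro rfl; omega
  obtain ⟨j, rfl⟩ := Fin.exists_succAbove_eq hi'
  have := lt_numLevels (Fin.removeNth i₀ c) j
  simp only [Fin.removeNth_apply] at this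
  omega

theorem image_insertTopLevel :
    (fun p : Fin (m + 1) × (Fin m → ℕ) => insertTopLevel p.1 p.2) ''
        (Set.univ ×ˢ {d | IsGapless d}) = {c | IsGapless c ∧ HasStrictMax c} := by
  ext c
  constructor
  · rintro ⟨⟨i₀, d⟩, ⟨-, hd⟩, rfl⟩
    exact ⟨isGapless_insertTopLevel i₀ hd, i₀, fun i hi => insertTopLevel_lt i₀ d hi⟩
  · rintro ⟨hc, i₀, hi₀⟩
    refine ⟨(i₀, Fin.removeNth i₀ c), ⟨trivial, isGapless_removeNth hc hi₀⟩, ?_⟩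
    simp [insertTopLevel, numLevels_removeNth hc hi₀]

theorem ncard_setOf_isGapless_hasStrictMax (m : ℕ) :
    {c : Fin (m + 1) → ℕ | IsGapless c ∧ HasStrictMax c}.ncard =
      (m + 1) * {d : Fin m → ℕ | IsGapless d}.ncard := by
  rw [← image_insertTopLevel, Set.ncard_image_of_injective _ injective_insertTopLevel,
    Set.ncard_prod, Set.ncard_univ, Nat.card_fin]

end Counting

variable {n : ℕ}

theorem orderedBell_eq_ncard (n : ℕ) : orderedBell n = {c : Fin n → ℕ | IsGapless c}.ncard :=
  (Nat.card_congr orderedPartitionEquivGapless).trans (Nat.card_coe_set_eq _)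

def thresholdComplement (n : ℕ) : Set (Fin n → ℝ) :=
  {y | ∀ i j : Fin n, i < j → y i + y j ≠ 0}

theorem mem_thresholdComplement_iff {x : Fin n → ℝ} :
    x ∈ thresholdComplement n ↔ Pairwise fun i j => x i + x j ≠ 0 := by
  refine ⟨fun hx i j hij => ?_, fun hx i j hij => hx hij.ne⟩
  rcases hij.lt_or_gt with h | h
  · exact hx i j h
  · rw [add_comm]; exact hx j i h

theorem mul_pos_iff_of_ne_zero {R : Type*} [Ring R] [LinearOrder R] [IsStrictOrderedRing R]
    {a b : R} (ha : a ≠ 0) (hb : b ≠ 0) :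
    0 < a * b ↔ (0 < a ↔ 0 < b) := by
  rcases ha.lt_or_gt with ha | ha <;> rcases hb.lt_or_gt with hb | hb <;>
    simp [mul_pos_iff, ha, hb, ha.not_gt, hb.not_gt]

theorem connectedComponentIn_thresholdComplement_eq_iff {x y : Fin n → ℝ}
    (hx : x ∈ thresholdComplement n) (hy : y ∈ thresholdComplement n) :
    connectedComponentIn (thresholdComplement n) x =
        connectedComponentIn (thresholdComplement n) y ↔
      ∀ i j, i < j → (0 < x i + x j ↔ 0 < y i + y j) := by
  let f (p : {p : Fin n × Fin n // p.1 < p.2}) : (Fin n → ℝ) →L[ℝ] ℝ :=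
    .proj p.1.1 + .proj p.1.2
  have hf : ∀ z, z ∈ thresholdComplement n ↔ ∀ p, f p z ≠ 0 := fun z => by
    simp [f, thresholdComplement]
  rw [show thresholdComplement n = {z | ∀ p, f p z ≠ 0} from Set.ext hf,
    connectedComponentIn_eq_iff_mul_pos f ((hf x).1 hx) ((hf y).1 hy)]
  simp only [Subtype.forall, Prod.forall]
  refine forall₂_congr fun i j => forall_congr' fun hij => ?_
  exact mul_pos_iff_of_ne_zero (hx i j hij) (hy i j hij)

theorem levelPoint_mem_thresholdComplement (s : ℕ → Bool) (c : Fin n → ℕ) :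
    levelPoint s c ∈ thresholdComplement n :=
  fun i j _ => levelPoint_add_ne_zero s c i j

theorem exists_normal_form_of_mem_thresholdComplement [Nontrivial (Fin n)] {x : Fin n → ℝ}
    (hx : x ∈ thresholdComplement n) :
    ∃ δ c, IsGapless c ∧ ¬HasStrictMax c ∧
      connectedComponentIn (thresholdComplement n) (levelPoint (alternating δ) c) =
        connectedComponentIn (thresholdComplement n) x := by
  obtain ⟨c, s, hcs⟩ :=
    exists_levels_of_pairwise_add_ne_zero (mem_thresholdComplement_iff.1 hx)
  obtain ⟨δ, c₀, hc₀, hm₀, hs₀⟩ := exists_alternating_normal_form s c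
  refine ⟨δ, c₀, hc₀, hm₀, (connectedComponentIn_thresholdComplement_eq_iff
    (levelPoint_mem_thresholdComplement _ _) hx).2 fun i j hij => ?_⟩
  rw [hcs i j hij.ne, hs₀ i j hij.ne, levelPoint_add_pos_iff]

theorem eq_of_connectedComponentIn_levelPoint_eq [Nontrivial (Fin n)] {δ δ' : Bool}
    {c c' : Fin n → ℕ} (hc : IsGapless c) (hc' : IsGapless c') (hm : ¬HasStrictMax c)
    (hm' : ¬HasStrictMax c')
    (h : connectedComponentIn (thresholdComplement n) (levelPoint (alternating δ) c) =
      connectedComponentIn (thresholdComplement n) (levelPoint (alternating δ') c')) :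
    δ = δ' ∧ c = c' := by
  have hpat := (connectedComponentIn_thresholdComplement_eq_iff
    (levelPoint_mem_thresholdComplement _ _) (levelPoint_mem_thresholdComplement _ _)).1 h
  simp only [levelPoint_add_pos_iff] at hpat
  refine eq_of_alternating_min_eq hc hc' hm hm' fun i j hij => ?_
  rcases hij.lt_or_gt with hlt | hgt
  · exact Bool.eq_iff_iff.2 (hpat i j hlt)
  · rw [min_comm, min_comm (c' i)]
    exact Bool.eq_iff_iff.2 (hpat j i hgt)

theorem ncard_thresholdRegions [Nontrivial (Fin n)] :
    {C | ∃ x ∈ thresholdComplement n,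
        C = connectedComponentIn (thresholdComplement n) x}.ncard =
      2 * {c : Fin n → ℕ | IsGapless c ∧ ¬HasStrictMax c}.ncard := by
  let region (p : Bool × (Fin n → ℕ)) : Set (Fin n → ℝ) :=
    connectedComponentIn (thresholdComplement n) (levelPoint (alternating p.1) p.2)
  have himage : {C | ∃ x ∈ thresholdComplement n,
      C = connectedComponentIn (thresholdComplement n) x} =
      region '' (Set.univ ×ˢ {c | IsGapless c ∧ ¬HasStrictMax c}) := by
    ext C
    constructor
    · rintro ⟨x, hx, rfl⟩
      obtain ⟨δ, c, hc, hm, hC⟩ := exists_normal_form_of_mem_thresholdComplement hx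
      exact ⟨(δ, c), ⟨trivial, hc, hm⟩, hC⟩
    · rintro ⟨p, -, rfl⟩
      exact ⟨_, levelPoint_mem_thresholdComplement _ _, rfl⟩
  have hinj : Set.InjOn region (Set.univ ×ˢ {c | IsGapless c ∧ ¬HasStrictMax c}) := by
    rintro ⟨δ, c⟩ ⟨-, hc, hm⟩ ⟨δ', c'⟩ ⟨-, hc', hm'⟩ h
    obtain ⟨rfl, rfl⟩ := eq_of_connectedComponentIn_levelPoint_eq hc hc' hm hm' h
    rfl
  rw [himage, hinj.ncard_image, Set.ncard_prod, Set.ncard_univ, Nat.card_eq_fintype_card,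
    Fintype.card_bool]

end ThresholdArrangement

/-- The number of regions of the threshold arrangement in ℝⁿ
(hyperplanes `xᵢ + xⱼ = 0` for `i < j`, `n ≥ 2`) is `2·(a(n) − n·a(n−1))`,
where `a` is the Fubini number. -/
theorem threshold_arrangement_regions (n : ℕ) (hn : 2 ≤ n) :
    Set.ncard {C : Set (Fin n → ℝ) |
      ∃ x ∈ {y : Fin n → ℝ | ∀ i j : Fin n, i < j → y i + y j ≠ 0},
      C = connectedComponentIn
        {y : Fin n → ℝ | ∀ i j : Fin n, i < j → y i + y j ≠ 0} x} =
    2 * (orderedBell n - n * orderedBell (n - 1)) := by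
  obtain ⟨m, rfl⟩ : ∃ m, n = m + 1 := ⟨n - 1, by omega⟩
  have : Nontrivial (Fin (m + 1)) := Fin.nontrivial_iff_two_le.2 hn
  rw [Nat.add_sub_cancel, ThresholdArrangement.orderedBell_eq_ncard,
    ThresholdArrangement.orderedBell_eq_ncard,
    ThresholdArrangement.ncard_setOf_isGapless (α := Fin (m + 1)),
    ThresholdArrangement.ncard_setOf_isGapless_hasStrictMax, Nat.add_sub_cancel]
  exact ThresholdArrangement.ncard_thresholdRegions
end
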